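/- arXiv:math/0606569 — 8 statements merged into one kernel-verified Lean document; each statement's English description precedes it below -/
import Mathlib

section
/- If f : X → Y is a local homeomorphism between metric spaces, then for every non-isolated point x ∈ X the lower scalar derivative D⁻_x f equals the surjection constant sur(f,x). -/
open Filter Topology Set

/-- Lower scalar derivative `D⁻ₓ f = liminf_{z→x, z≠x} d(f z, f x)/d(z,x)` in `[0,∞]`. -/
noncomputable def lowerDeriv {X Y : Type*} [MetricSpace X] [MetricSpace Y]
    (f : X → Y) (x : X) : ENNReal :=
  Filter.liminf (fun z => edist (f z) (f x) / edist z x) (𝓝[≠] x)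

/-- Upper scalar derivative `D⁺ₓ f = limsup_{z→x, z≠x} d(f z, f x)/d(z,x)` in `[0,∞]`. -/
noncomputable def upperDeriv {X Y : Type*} [MetricSpace X] [MetricSpace Y]
    (f : X → Y) (x : X) : ENNReal :=
  Filter.limsup (fun z => edist (f z) (f x) / edist z x) (𝓝[≠] x)

/-- `Sur(f,x)(t) = sup { r ≥ 0 : B_r(f x) ⊆ f(B_t(x)) }`, valued in `[0,∞]`. -/
noncomputable def surBall {X Y : Type*} [MetricSpace X] [MetricSpace Y]
    (f : X → Y) (x : X) (t : ℝ) : ENNReal :=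
  ⨆ (r : NNReal) (_ : Metric.ball (f x) r ⊆ f '' Metric.ball x t), (r : ENNReal)

/-- The surjection constant `sur(f,x) = liminf_{t→0⁺} t⁻¹ Sur(f,x)(t)`. -/
noncomputable def surConst {X Y : Type*} [MetricSpace X] [MetricSpace Y]
    (f : X → Y) (x : X) : ENNReal :=
  Filter.liminf (fun t : ℝ => surBall f x t / ENNReal.ofReal t) (𝓝[>] (0:ℝ))

/-- for a local homeomorphism `f` between metric spaces,
`D⁻ₓ f = sur(f,x)` at every non-isolated point `x`. -/
theorem stmt2 {X Y : Type*} [MetricSpace X] [MetricSpace Y]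
    (f : X → Y) (hf : IsLocalHomeomorph f)
    (x : X) (hx : (𝓝[≠] x).NeBot) :
    lowerDeriv f x = surConst f x := by
  obtain ⟨e, hxe, rfl⟩ := hf x
  apply le_antisymm
  · -- lowerDeriv ≤ surConst
    refine ENNReal.le_of_forall_nnreal_lt (fun c hc => ?_)
    rcases eq_or_ne c 0 with rfl | hc0
    · simp
    have hcpos : (0:ℝ) < c := hc0.bot_lt
    -- expansion estimate near x
    have hev := Filter.eventually_lt_of_lt_liminf hc
    rw [eventually_nhdsWithin_iff, Metric.eventually_nhds_iff] at hev
    obtain ⟨ε, hε, hexp⟩ := hev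
    -- ball inside source
    obtain ⟨δ1, hδ1, hδ1s⟩ := Metric.isOpen_iff.mp e.open_source x hxe
    set δ' := min ε δ1 with hδ'def
    have hδ' : 0 < δ' := lt_min hε hδ1
    -- ball inside target
    obtain ⟨ρ0, hρ0, hρ0t⟩ := Metric.isOpen_iff.mp e.open_target (e x) (e.map_source hxe)
    -- continuity of the inverse at e x
    have hcs : ContinuousAt e.symm (e x) := e.continuousAt_symm (e.map_source hxe)
    rw [Metric.continuousAt_iff] at hcs
    obtain ⟨ρ1, hρ1, hρ1c⟩ := hcs δ' hδ'
    set ρ := min ρ0 ρ1 with hρdef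
    have hρ : 0 < ρ := lt_min hρ0 hρ1
    set m := min δ' (ρ / c) with hmdef
    have hm : 0 < m := lt_min hδ' (div_pos hρ hcpos)
    refine Filter.le_liminf_of_le (by isBoundedDefault) ?_
    have hIoo : Set.Ioo (0:ℝ) m ∈ 𝓝[>] (0:ℝ) := Ioo_mem_nhdsGT_of_mem ⟨le_refl _, hm⟩
    filter_upwards [hIoo] with t ht
    obtain ⟨ht0, htm⟩ := ht
    have htδ' : t < δ' := lt_of_lt_of_le htm (min_le_left _ _)
    have htρ : (c:ℝ) * t < ρ := by
      have h : t < ρ / c := lt_of_lt_of_le htm (min_le_right _ _)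
      calc (c:ℝ) * t < c * (ρ / c) := mul_lt_mul_of_pos_left h hcpos
        _ = ρ := by field_simp
    -- the inclusion
    set r0 : NNReal := ⟨(c:ℝ) * t, mul_nonneg hcpos.le ht0.le⟩ with hr0def
    have hincl : Metric.ball (e x) (r0 : ℝ) ⊆ (e : X → Y) '' Metric.ball x t := by
      intro y hy
      simp only [Metric.mem_ball, hr0def, NNReal.coe_mk] at hy
      have hyρ : y ∈ Metric.ball (e x) ρ := by
        simp only [Metric.mem_ball]
        exact hy.trans htρ
      have hyt : y ∈ e.target := hρ0t (Metric.ball_subset_ball (min_le_left _ _) hyρ)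
      have hyρ1 : dist y (e x) < ρ1 := (hy.trans htρ).trans_le (min_le_right _ _)
      have hz1 : dist (e.symm y) x < δ' := by
        have h := hρ1c hyρ1
        rwa [e.left_inv hxe] at h
      have hzs : e.symm y ∈ e.source := e.map_target hyt
      have hey : e (e.symm y) = y := e.right_inv hyt
      rcases eq_or_ne (e.symm y) x with hzx | hzx
      · refine ⟨x, Metric.mem_ball_self ht0, ?_⟩
        rw [← hzx, hey]
      · -- use the expansion estimate
        have hexpz := hexp (hz1.trans_le (min_le_left _ _)) hzx
        have h1 : (c : ENNReal) * edist (e.symm y) x < edist (e (e.symm y)) (e x) :=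
          ENNReal.mul_lt_of_lt_div hexpz
        have h2 : edist (e (e.symm y)) (e x) < ENNReal.ofReal ((c:ℝ) * t) := by
          rw [hey, edist_dist]
          exact (ENNReal.ofReal_lt_ofReal_iff (by positivity)).mpr hy
        have h3 : (c : ENNReal) * edist (e.symm y) x < (c : ENNReal) * ENNReal.ofReal t := by
          refine h1.trans (h2.trans_le ?_)
          rw [ENNReal.ofReal_mul hcpos.le, ENNReal.ofReal_coe_nnreal]
        have h4 : edist (e.symm y) x < ENNReal.ofReal t :=
          (ENNReal.mul_lt_mul_iff_right (by exact_mod_cast hc0) ENNReal.coe_ne_top).mp h3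
        exact ⟨e.symm y, by simpa [Metric.mem_ball] using edist_lt_ofReal.mp h4, hey⟩
    have hval : ((r0 : ENNReal)) = (c : ENNReal) * ENNReal.ofReal t := by
      have hcoe : ((r0 : ℝ)) = (c:ℝ) * t := rfl
      rw [← ENNReal.ofReal_coe_nnreal, hcoe, ENNReal.ofReal_mul hcpos.le,
        ENNReal.ofReal_coe_nnreal]
    rw [ENNReal.le_div_iff_mul_le (Or.inl (by simp [ht0])) (Or.inl ENNReal.ofReal_ne_top),
      ← hval]
    simp only [surBall]
    exact le_iSup₂ (f := fun (r : NNReal)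
      (_ : Metric.ball (e x) (r:ℝ) ⊆ (e : X → Y) '' Metric.ball x t) => (r : ENNReal)) r0 hincl
  · -- surConst ≤ lowerDeriv
    refine ENNReal.le_of_forall_nnreal_lt (fun c hc => ?_)
    rcases eq_or_ne c 0 with rfl | hc0
    · simp
    have hcpos : (0:ℝ) < c := hc0.bot_lt
    have hev := Filter.eventually_lt_of_lt_liminf hc
    rw [eventually_nhdsWithin_iff, Metric.eventually_nhds_iff] at hev
    obtain ⟨τ, hτ, hsur⟩ := hev
    obtain ⟨δ1, hδ1, hδ1s⟩ := Metric.isOpen_iff.mp e.open_source x hxe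
    set m := min δ1 τ with hmdef
    have hm : 0 < m := lt_min hδ1 hτ
    refine Filter.le_liminf_of_le (by isBoundedDefault) ?_
    rw [eventually_nhdsWithin_iff, Metric.eventually_nhds_iff]
    refine ⟨m, hm, fun z hzm hzx => ?_⟩
    replace hzx : z ≠ x := hzx
    set s := dist z x with hsdef
    have hs : 0 < s := dist_pos.mpr hzx
    have key : ENNReal.ofReal ((c:ℝ) * s) ≤ edist (e z) (e x) := by
      by_contra hlt
      push_neg at hlt
      have hd : dist (e z) (e x) < (c:ℝ) * s := edist_lt_ofReal.mp hlt
      set d := dist (e z) (e x) with hddef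
      have hd0 : 0 ≤ d := dist_nonneg
      have hds : d / c < s := (div_lt_iff₀ hcpos).mpr (by linarith [hd])
      set t := (d / c + s) / 2 with htdef
      have hdc0 : 0 ≤ d / c := by positivity
      have ht0 : 0 < t := by positivity
      have hts : t < s := by simp only [htdef]; linarith
      have hdt : d < (c:ℝ) * t := by
        have h5 : d / c < t := by simp only [htdef]; linarith
        calc d = c * (d / c) := by field_simp
          _ < c * t := mul_lt_mul_of_pos_left h5 hcpos
      -- use the surjection estimate at this t
      have htτ : dist t 0 < τ := by
        rw [Real.dist_eq, sub_zero, abs_of_pos ht0]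
        exact hts.trans (hzm.trans_le (min_le_right _ _))
      have hsurt := hsur htτ (Set.mem_Ioi.mpr ht0)
      have hmul : (c : ENNReal) * ENNReal.ofReal t < surBall (⇑e) x t :=
        ENNReal.mul_lt_of_lt_div hsurt
      rw [surBall, lt_iSup_iff] at hmul
      obtain ⟨r, hmul⟩ := hmul
      rw [lt_iSup_iff] at hmul
      obtain ⟨hrincl, hr⟩ := hmul
      -- c * t < r as reals
      have hctr : (c:ℝ) * t < (r : ℝ) := by
        have h6 : ENNReal.ofReal ((c:ℝ) * t) < ENNReal.ofReal (r : ℝ) := by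
          rwa [ENNReal.ofReal_mul hcpos.le, ENNReal.ofReal_coe_nnreal,
            ENNReal.ofReal_coe_nnreal]
        exact (ENNReal.ofReal_lt_ofReal_iff_of_nonneg (by positivity)).mp h6
      -- e z lies in the covered ball
      have hez : e z ∈ (e : X → Y) '' Metric.ball x t := by
        apply hrincl
        simp only [Metric.mem_ball]
        exact hdt.trans hctr
      obtain ⟨z', hz't, hz'⟩ := hez
      have htδ1 : t ≤ δ1 := le_of_lt (hts.trans (hzm.trans_le (min_le_left _ _)))
      have hz's : z' ∈ e.source := hδ1s (Metric.ball_subset_ball htδ1 hz't)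
      have hzsrc : z ∈ e.source := hδ1s (by
        simp only [Metric.mem_ball]
        exact hzm.trans_le (min_le_left _ _))
      have hzz : z' = z := e.injOn hz's hzsrc hz'
      rw [hzz] at hz't
      simp only [Metric.mem_ball, ← hsdef] at hz't
      exact lt_irrefl s (hz't.trans hts)
    -- convert to the ratio bound
    rw [ENNReal.le_div_iff_mul_le (Or.inl (by simpa [edist_eq_zero] using hzx))
      (Or.inl (edist_ne_top _ _))]
    calc (c : ENNReal) * edist z x = ENNReal.ofReal ((c:ℝ) * s) := by
          rw [edist_dist, ← hsdef, ENNReal.ofReal_mul hcpos.le, ENNReal.ofReal_coe_nnreal]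
      _ ≤ edist (e z) (e x) := key
end

section
/- Let f : X → Y be a continuous map between metric spaces and q : [a,b] → X a rectifiable path; set p = f ∘ q. Then there exists τ ∈ [a,b] such that d(p(a),p(b)) ≤ D⁺_{q(τ)} f · ℓ(q). -/
open Filter Topology Set

private lemma var_add {X : Type*} [MetricSpace X] (q : ℝ → X) {u m v : ℝ}
    (h1 : u ≤ m) (h2 : m ≤ v) :
    eVariationOn q (Set.Icc u m) + eVariationOn q (Set.Icc m v)
      = eVariationOn q (Set.Icc u v) := by
  have := eVariationOn.Icc_add_Icc q (s := Set.univ) h1 h2 (Set.mem_univ m)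
  simpa using this

private lemma choose_half {K A1 A2 B1 B2 : ENNReal}
    (hKA1 : K * A1 ≠ ⊤) (hKA2 : K * A2 ≠ ⊤)
    (h : K * (A1 + A2) ≤ B1 + B2)
    (h1 : A1 = 0 → B1 = 0) (h2 : A2 = 0 → B2 = 0)
    (hpos : A1 + A2 ≠ 0) :
    (A1 ≠ 0 ∧ K * A1 ≤ B1) ∨ (A2 ≠ 0 ∧ K * A2 ≤ B2) := by
  rw [mul_add] at h
  rcases eq_or_ne A1 0 with hA1 | hA1
  · right
    have hA2 : A2 ≠ 0 := by simpa [hA1] using hpos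
    refine ⟨hA2, ?_⟩
    have : K * A1 = 0 := by simp [hA1]
    simpa [this, h1 hA1] using h
  rcases eq_or_ne A2 0 with hA2 | hA2
  · left
    refine ⟨hA1, ?_⟩
    have : K * A2 = 0 := by simp [hA2]
    simpa [this, h2 hA2] using h
  by_contra hcon
  push_neg at hcon
  obtain ⟨hc1, hc2⟩ := hcon
  have hb1 : B1 < K * A1 := hc1 hA1
  have hb2 : B2 < K * A2 := hc2 hA2
  exact absurd (h.trans_lt (ENNReal.add_lt_add hb1 hb2)) (lt_irrefl _)

/-- mean value inequality. For continuous `f : X → Y` and a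
rectifiable path `q : [a,b] → X`, with `p = f ∘ q`, there exists `τ ∈ [a,b]`
with `d(p a, p b) ≤ D⁺_{q τ} f · ℓ(q)`. -/
theorem stmt5 {X Y : Type*} [MetricSpace X] [MetricSpace Y]
    (f : X → Y) (hf : Continuous f) (a b : ℝ) (hab : a ≤ b)
    (q : ℝ → X) (hq : ContinuousOn q (Set.Icc a b))
    (hrect : eVariationOn q (Set.Icc a b) ≠ ⊤) :
    ∃ τ ∈ Set.Icc a b,
      edist (f (q a)) (f (q b)) ≤ upperDeriv f (q τ) * eVariationOn q (Set.Icc a b) := by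
  set L := eVariationOn q (Set.Icc a b) with hL
  set E := edist (f (q a)) (f (q b)) with hE
  rcases eq_or_ne E 0 with hE0 | hE0
  · exact ⟨a, ⟨le_refl a, hab⟩, by simp [← hE, hE0]⟩
  have hEtop : E ≠ ⊤ := edist_ne_top _ _
  have hL0 : L ≠ 0 := by
    intro h0
    have := (eVariationOn.eq_zero_iff q).1 h0 a ⟨le_refl a, hab⟩ b ⟨hab, le_refl b⟩
    have hqq : q a = q b := by simpa [edist_eq_zero] using this
    exact hE0 (by simp [hE, hqq])
  set K := E / L with hK
  have hK0 : K ≠ 0 := (ENNReal.div_pos hE0 hrect).ne'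
  have hKtop : K ≠ ⊤ := (ENNReal.div_lt_top hEtop hL0).ne
  have hKL : K * L = E := ENNReal.div_mul_cancel hL0 hrect
  -- Invariant for the bisection
  set P : ℝ × ℝ → Prop := fun w =>
    a ≤ w.1 ∧ w.1 ≤ w.2 ∧ w.2 ≤ b ∧ eVariationOn q (Set.Icc w.1 w.2) ≠ 0 ∧
      K * eVariationOn q (Set.Icc w.1 w.2) ≤ edist (f (q w.1)) (f (q w.2)) with hP
  have hPab : P (a, b) := ⟨le_refl a, hab, le_refl b, hL0, hKL.le⟩
  have hvar_fin : ∀ w : ℝ × ℝ, a ≤ w.1 → w.2 ≤ b →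
      eVariationOn q (Set.Icc w.1 w.2) ≠ ⊤ := by
    intro w h1 h2
    exact fun ht => hrect (top_le_iff.1 (ht ▸ eVariationOn.mono q (Set.Icc_subset_Icc h1 h2)))
  have step : ∀ w : ℝ × ℝ, P w → ∃ w' : ℝ × ℝ, P w' ∧ w.1 ≤ w'.1 ∧ w'.2 ≤ w.2 ∧
      w'.2 - w'.1 = (w.2 - w.1) / 2 := by
    rintro ⟨u, v⟩ ⟨hau, huv, hvb, hvar0, hvarle⟩
    set m := (u + v) / 2 with hm
    have hum : u ≤ m := by simp only [hm]; linarith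
    have hmv : m ≤ v := by simp only [hm]; linarith
    have ham : a ≤ m := hau.trans hum
    have hmb : m ≤ b := hmv.trans hvb
    have hfin1 : K * eVariationOn q (Set.Icc u m) ≠ ⊤ :=
      ENNReal.mul_ne_top hKtop (hvar_fin (u, m) hau hmb)
    have hfin2 : K * eVariationOn q (Set.Icc m v) ≠ ⊤ :=
      ENNReal.mul_ne_top hKtop (hvar_fin (m, v) ham hvb)
    have hadd := var_add q hum hmv
    have hsum : K * (eVariationOn q (Set.Icc u m) + eVariationOn q (Set.Icc m v))
        ≤ edist (f (q u)) (f (q m)) + edist (f (q m)) (f (q v)) := by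
      rw [hadd]
      exact hvarle.trans (edist_triangle _ _ _)
    have hz1 : eVariationOn q (Set.Icc u m) = 0 → edist (f (q u)) (f (q m)) = 0 := by
      intro h0
      have := (eVariationOn.eq_zero_iff q).1 h0 u ⟨le_refl u, hum⟩ m ⟨hum, le_refl m⟩
      simp [edist_eq_zero] at this ⊢
      simp [this]
    have hz2 : eVariationOn q (Set.Icc m v) = 0 → edist (f (q m)) (f (q v)) = 0 := by
      intro h0
      have := (eVariationOn.eq_zero_iff q).1 h0 m ⟨le_refl m, hmv⟩ v ⟨hmv, le_refl v⟩
      simp [edist_eq_zero] at this ⊢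
      simp [this]
    have hpos : eVariationOn q (Set.Icc u m) + eVariationOn q (Set.Icc m v) ≠ 0 := by
      rw [hadd]; exact hvar0
    rcases choose_half hfin1 hfin2 hsum hz1 hz2 hpos with ⟨h0, hle⟩ | ⟨h0, hle⟩
    · exact ⟨(u, m), ⟨hau, hum, hmb, h0, hle⟩, le_refl u, hmv, by simp [hm]; ring⟩
    · exact ⟨(m, v), ⟨ham, hmv, hvb, h0, hle⟩, hum, le_refl v, by simp [hm]; ring⟩
  choose! g hgP hgl hgr hgw using step
  set c : ℕ → ℝ × ℝ := fun n => g^[n] (a, b) with hc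
  have hcs : ∀ n, c (n + 1) = g (c n) := fun n => Function.iterate_succ_apply' g n (a, b)
  have hPc : ∀ n, P (c n) := by
    intro n
    induction n with
    | zero => exact hPab
    | succ n ih => rw [hcs]; exact hgP _ ih
  set u : ℕ → ℝ := fun n => (c n).1 with hu
  set v : ℕ → ℝ := fun n => (c n).2 with hv
  have humono : Monotone u := monotone_nat_of_le_succ fun n => by
    rw [hu]; simp only [hcs]; exact hgl _ (hPc n)
  have hvanti : Antitone v := antitone_nat_of_succ_le fun n => by
    rw [hv]; simp only [hcs]; exact hgr _ (hPc n)
  have huv : ∀ n, u n ≤ v n := fun n => (hPc n).2.1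
  have hau : ∀ n, a ≤ u n := fun n => (hPc n).1
  have hvb : ∀ n, v n ≤ b := fun n => (hPc n).2.2.1
  have hwidth : ∀ n, v n - u n = (b - a) / 2 ^ n := by
    intro n
    induction n with
    | zero => simp [hu, hv, hc]
    | succ n ih =>
      have := hgw _ (hPc n)
      rw [hu, hv] at *
      simp only [hcs]
      rw [this, ih]
      ring
  have hbdd : BddAbove (Set.range u) := ⟨b, by rintro x ⟨n, rfl⟩; exact (huv n).trans (hvb n)⟩
  set τ : ℝ := ⨆ n, u n with hτ
  have huτ : ∀ n, u n ≤ τ := fun n => le_ciSup hbdd n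
  have hτv : ∀ n, τ ≤ v n := by
    intro n
    refine ciSup_le fun m => ?_
    calc u m ≤ u (max m n) := humono (le_max_left _ _)
    _ ≤ v (max m n) := huv _
    _ ≤ v n := hvanti (le_max_right _ _)
  have hτmem : τ ∈ Set.Icc a b := ⟨(hau 0).trans (huτ 0), (hτv 0).trans (hvb 0)⟩
  have hutend : Tendsto u atTop (𝓝 τ) := tendsto_atTop_ciSup humono hbdd
  have hwid0 : Tendsto (fun n => (b - a) / 2 ^ n) atTop (𝓝 0) := by
    have : Tendsto (fun n : ℕ => ((1:ℝ)/2) ^ n) atTop (𝓝 0) :=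
      tendsto_pow_atTop_nhds_zero_of_lt_one (by norm_num) (by norm_num)
    have := this.const_mul (b - a)
    simpa [div_eq_mul_inv, mul_pow, mul_comm] using this
  have hvtend : Tendsto v atTop (𝓝 τ) := by
    have : Tendsto (fun n => u n + (b - a) / 2 ^ n) atTop (𝓝 (τ + 0)) :=
      hutend.add hwid0
    simp only [add_zero] at this
    refine this.congr fun n => ?_
    have := hwidth n
    linarith
  have hqmem : ∀ t, a ≤ t → t ≤ b → t ∈ Set.Icc a b := fun t h1 h2 => ⟨h1, h2⟩
  have hqτ : Tendsto (fun n => q (u n)) atTop (𝓝 (q τ)) := by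
    refine (hq τ hτmem).tendsto.comp ?_
    exact tendsto_nhdsWithin_of_tendsto_nhds_of_eventually_within u hutend
      (Eventually.of_forall fun n => ⟨hau n, (huv n).trans (hvb n)⟩)
  have hqτ' : Tendsto (fun n => q (v n)) atTop (𝓝 (q τ)) := by
    refine (hq τ hτmem).tendsto.comp ?_
    exact tendsto_nhdsWithin_of_tendsto_nhds_of_eventually_within v hvtend
      (Eventually.of_forall fun n => ⟨(hau n).trans (huv n), hvb n⟩)
  -- choose witnesses z n near q τ with large difference quotient
  have hzex : ∀ n, ∃ z : X, (z = q (u n) ∨ z = q (v n)) ∧ edist z (q τ) ≠ 0 ∧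
      K * edist z (q τ) ≤ edist (f z) (f (q τ)) := by
    intro n
    obtain ⟨hau', huv', hvb', hvar0, hvarle⟩ := hPc n
    have huτn : u n ≤ τ := huτ n
    have hτvn : τ ≤ v n := hτv n
    have hA1 : edist (q (u n)) (q τ) ≤ eVariationOn q (Set.Icc (u n) τ) :=
      eVariationOn.edist_le q ⟨le_refl _, huτn⟩ ⟨huτn, le_refl _⟩
    have hA2 : edist (q τ) (q (v n)) ≤ eVariationOn q (Set.Icc τ (v n)) :=
      eVariationOn.edist_le q ⟨le_refl _, hτvn⟩ ⟨hτvn, le_refl _⟩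
    have hadd := var_add q huτn hτvn
    have hAsum : edist (q (u n)) (q τ) + edist (q τ) (q (v n))
        ≤ eVariationOn q (Set.Icc (u n) (v n)) := by
      rw [← hadd]; exact add_le_add hA1 hA2
    have hsum : K * (edist (q (u n)) (q τ) + edist (q τ) (q (v n)))
        ≤ edist (f (q (u n))) (f (q τ)) + edist (f (q τ)) (f (q (v n))) := by
      calc K * (edist (q (u n)) (q τ) + edist (q τ) (q (v n)))
          ≤ K * eVariationOn q (Set.Icc (u n) (v n)) := mul_le_mul_right hAsum K
        _ ≤ edist (f (q (u n))) (f (q (v n))) := hvarle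
        _ ≤ _ := edist_triangle _ _ _
    have hz1 : edist (q (u n)) (q τ) = 0 → edist (f (q (u n))) (f (q τ)) = 0 := by
      intro h0; rw [edist_eq_zero] at h0 ⊢; rw [h0]
    have hz2 : edist (q τ) (q (v n)) = 0 → edist (f (q τ)) (f (q (v n))) = 0 := by
      intro h0; rw [edist_eq_zero] at h0 ⊢; rw [h0]
    have hpos : edist (q (u n)) (q τ) + edist (q τ) (q (v n)) ≠ 0 := by
      intro h0
      rw [add_eq_zero] at h0
      have hb1 := hz1 h0.1
      have hb2 := hz2 h0.2
      have : K * eVariationOn q (Set.Icc (u n) (v n)) = 0 :=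
        le_antisymm (by
          calc K * eVariationOn q (Set.Icc (u n) (v n))
              ≤ edist (f (q (u n))) (f (q (v n))) := hvarle
            _ ≤ edist (f (q (u n))) (f (q τ)) + edist (f (q τ)) (f (q (v n))) :=
                edist_triangle _ _ _
            _ = 0 := by rw [hb1, hb2, add_zero]) zero_le
      rcases mul_eq_zero.1 this with h | h
      · exact hK0 h
      · exact hvar0 h
    rcases choose_half (ENNReal.mul_ne_top hKtop (edist_ne_top _ _))
        (ENNReal.mul_ne_top hKtop (edist_ne_top _ _)) hsum hz1 hz2 hpos with
      ⟨h0, hle⟩ | ⟨h0, hle⟩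
    · exact ⟨q (u n), Or.inl rfl, h0, hle⟩
    · refine ⟨q (v n), Or.inr rfl, ?_, ?_⟩
      · rwa [edist_comm]
      · rw [edist_comm (q (v n)), edist_comm (f (q (v n)))]
        exact hle
  choose z hzmem hzne hzle using hzex
  have hztend : Tendsto z atTop (𝓝[≠] (q τ)) := by
    have hd : Tendsto z atTop (𝓝 (q τ)) := by
      rw [tendsto_iff_dist_tendsto_zero]
      have hb : ∀ n, dist (z n) (q τ) ≤
          dist (q (u n)) (q τ) + dist (q (v n)) (q τ) := by
        intro n
        rcases hzmem n with h | h <;> rw [h]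
        · have : (0:ℝ) ≤ dist (q (v n)) (q τ) := dist_nonneg
          linarith
        · have : (0:ℝ) ≤ dist (q (u n)) (q τ) := dist_nonneg
          linarith
      have hlim : Tendsto (fun n => dist (q (u n)) (q τ) + dist (q (v n)) (q τ))
          atTop (𝓝 0) := by
        have h1 := tendsto_iff_dist_tendsto_zero.1 hqτ
        have h2 := tendsto_iff_dist_tendsto_zero.1 hqτ'
        simpa using h1.add h2
      exact squeeze_zero (fun n => dist_nonneg) hb hlim
    refine tendsto_nhdsWithin_of_tendsto_nhds_of_eventually_within z hd ?_
    refine Eventually.of_forall fun n => ?_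
    simp only [Set.mem_compl_iff, Set.mem_singleton_iff]
    intro h
    exact hzne n (by rw [h, edist_self])
  have hfreq : ∃ᶠ w in 𝓝[≠] (q τ), K ≤ edist (f w) (f (q τ)) / edist w (q τ) := by
    refine hztend.frequently (Frequently.of_forall fun n => ?_)
    rw [ENNReal.le_div_iff_mul_le (Or.inl (hzne n)) (Or.inl (edist_ne_top _ _))]
    exact hzle n
  have hKD : K ≤ upperDeriv f (q τ) := le_limsup_of_frequently_le' hfreq
  refine ⟨τ, hτmem, ?_⟩
  calc E = K * L := hKL.symm
    _ ≤ upperDeriv f (q τ) * L := mul_le_mul_left hKD L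
end

section
/- Let f : X → Y be a continuous map between metric spaces and q : [a,b] → X a rectifiable path; set p = f ∘ q. Then ℓ(p) ≤ (sup_{x ∈ Im q} D⁺_x f) · ℓ(q). -/
open Filter Topology Set

/-- Key connectedness lemma: if `f` satisfies a local Lipschitz-type bound with constant `C`
at every point `q t`, then `edist (f (q t)) (f (q s)) ≤ C * ℓ(q|[s,t])`. -/
lemma key_lemma_stmt6 {X Y : Type*} [MetricSpace X] [MetricSpace Y]
    (f : X → Y) (C : ENNReal) (a b : ℝ) (q : ℝ → X)
    (hq : ContinuousOn q (Set.Icc a b))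
    (hP : ∀ t ∈ Set.Icc a b, ∀ᶠ z in 𝓝 (q t), edist (f z) (f (q t)) ≤ C * edist z (q t)) :
    ∀ s ∈ Set.Icc a b, ∀ t ∈ Set.Icc a b, s ≤ t →
      edist (f (q t)) (f (q s)) ≤ C * eVariationOn q (Set.Icc a b ∩ Set.Icc s t) := by
  intro s hs t ht hst
  set S : Set ℝ := {r | r ∈ Set.Icc s t ∧
    edist (f (q r)) (f (q s)) ≤ C * eVariationOn q (Set.Icc a b ∩ Set.Icc s r)} with hS
  have hsS : s ∈ S := ⟨⟨le_rfl, hst⟩, by simp⟩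
  have hne : S.Nonempty := ⟨s, hsS⟩
  have hbdd : BddAbove S := ⟨t, fun r hr => hr.1.2⟩
  set u := sSup S with hu
  have hsu : s ≤ u := le_csSup hbdd hsS
  have hut : u ≤ t := csSup_le hne fun r hr => hr.1.2
  have huab : u ∈ Set.Icc a b := ⟨hs.1.trans hsu, hut.trans ht.2⟩
  -- local bound near u
  have hev : ∀ᶠ r in 𝓝[Set.Icc a b] u,
      edist (f (q r)) (f (q u)) ≤ C * edist (q r) (q u) :=
    (hq u huab).eventually (hP u huab)
  rw [eventually_nhdsWithin_iff] at hev
  obtain ⟨δ, hδ, hball⟩ := Metric.eventually_nhds_iff.mp hev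
  -- step 1 : u ∈ S
  have huS : u ∈ S := by
    refine ⟨⟨hsu, hut⟩, ?_⟩
    obtain ⟨r, hrS, hru⟩ := exists_lt_of_lt_csSup hne (show u - δ < u by linarith)
    have hrle : r ≤ u := le_csSup hbdd hrS
    have hrab : r ∈ Set.Icc a b := ⟨hs.1.trans hrS.1.1, hrS.1.2.trans ht.2⟩
    have hdist : dist r u < δ := by rw [Real.dist_eq, abs_lt]; constructor <;> linarith
    have h1 : edist (f (q r)) (f (q u)) ≤ C * edist (q r) (q u) := hball hdist hrab
    calc edist (f (q u)) (f (q s))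
        ≤ edist (f (q u)) (f (q r)) + edist (f (q r)) (f (q s)) := edist_triangle _ _ _
      _ ≤ C * edist (q r) (q u) + C * eVariationOn q (Set.Icc a b ∩ Set.Icc s r) := by
          rw [edist_comm]; exact add_le_add h1 hrS.2
      _ ≤ C * eVariationOn q (Set.Icc a b ∩ Set.Icc r u)
            + C * eVariationOn q (Set.Icc a b ∩ Set.Icc s r) := by
          gcongr
          exact eVariationOn.edist_le q ⟨hrab, le_rfl, hrle⟩ ⟨huab, hrle, le_rfl⟩
      _ = C * eVariationOn q (Set.Icc a b ∩ Set.Icc s u) := by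
          rw [add_comm, ← mul_add, eVariationOn.Icc_add_Icc q hrS.1.1 hrle hrab]
  -- step 2 : u = t
  rcases eq_or_lt_of_le hut with h | h
  · rw [← h]; exact huS.2
  · exfalso
    set r := min t (u + δ / 2) with hr
    have hur : u < r := lt_min h (by linarith)
    have hrt : r ≤ t := min_le_left _ _
    have hrab : r ∈ Set.Icc a b := ⟨hs.1.trans (hsu.trans hur.le), hrt.trans ht.2⟩
    have hdist : dist r u < δ := by
      rw [Real.dist_eq, abs_lt]
      constructor
      · linarith
      · have : r ≤ u + δ / 2 := min_le_right _ _
        linarith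
    have h1 : edist (f (q r)) (f (q u)) ≤ C * edist (q r) (q u) := hball hdist hrab
    have hrS : r ∈ S := by
      refine ⟨⟨hsu.trans hur.le, hrt⟩, ?_⟩
      calc edist (f (q r)) (f (q s))
          ≤ edist (f (q r)) (f (q u)) + edist (f (q u)) (f (q s)) := edist_triangle _ _ _
        _ ≤ C * edist (q r) (q u) + C * eVariationOn q (Set.Icc a b ∩ Set.Icc s u) :=
            add_le_add h1 huS.2
        _ ≤ C * eVariationOn q (Set.Icc a b ∩ Set.Icc u r)
              + C * eVariationOn q (Set.Icc a b ∩ Set.Icc s u) := by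
            gcongr
            exact eVariationOn.edist_le q ⟨hrab, hur.le, le_rfl⟩ ⟨huab, le_rfl, hur.le⟩
        _ = C * eVariationOn q (Set.Icc a b ∩ Set.Icc s r) := by
            rw [add_comm, ← mul_add, eVariationOn.Icc_add_Icc q hsu hur.le huab]
    exact absurd (le_csSup hbdd hrS) (not_le.mpr hur)

/-- for continuous `f : X → Y` and a rectifiable path
`q : [a,b] → X`, with `p = f ∘ q`: `ℓ(p) ≤ (sup_{x ∈ Im q} D⁺ₓ f) · ℓ(q)`. -/
theorem stmt6 {X Y : Type*} [MetricSpace X] [MetricSpace Y]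
    (f : X → Y) (hf : Continuous f) (a b : ℝ) (hab : a ≤ b)
    (q : ℝ → X) (hq : ContinuousOn q (Set.Icc a b))
    (hrect : eVariationOn q (Set.Icc a b) ≠ ⊤) :
    eVariationOn (f ∘ q) (Set.Icc a b) ≤
      (⨆ x ∈ q '' Set.Icc a b, upperDeriv f x) * eVariationOn q (Set.Icc a b) := by
  set M := ⨆ x ∈ q '' Set.Icc a b, upperDeriv f x with hM
  set V := eVariationOn q (Set.Icc a b) with hV
  by_cases hV0 : V = 0
  · have hconst := (eVariationOn.eq_zero_iff q).mp hV0
    have : eVariationOn (f ∘ q) (Set.Icc a b) = 0 := by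
      rw [eVariationOn.eq_zero_iff]
      intro x hx y hy
      have : q x = q y := edist_eq_zero.mp (hconst x hx y hy)
      simp [Function.comp, this]
    simp [this]
  -- main claim: for any C > M, LHS ≤ C * V
  have claim : ∀ C : ENNReal, M < C → eVariationOn (f ∘ q) (Set.Icc a b) ≤ C * V := by
    intro C hC
    have hP : ∀ t ∈ Set.Icc a b, ∀ᶠ z in 𝓝 (q t),
        edist (f z) (f (q t)) ≤ C * edist z (q t) := by
      intro t ht
      have hMx : upperDeriv f (q t) ≤ M := by
        apply le_iSup₂ (f := fun x (_ : x ∈ q '' Set.Icc a b) => upperDeriv f x)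
        exact Set.mem_image_of_mem q ht
      have hls : Filter.limsup (fun z => edist (f z) (f (q t)) / edist z (q t))
          (𝓝[≠] (q t)) < C := lt_of_le_of_lt hMx hC
      have h1 : ∀ᶠ z in 𝓝[≠] (q t),
          edist (f z) (f (q t)) / edist z (q t) < C :=
        Filter.eventually_lt_of_limsup_lt hls
      have h2 : ∀ᶠ z in 𝓝[≠] (q t), z ≠ q t := eventually_mem_nhdsWithin
      have h3 : ∀ᶠ z in 𝓝[≠] (q t), edist (f z) (f (q t)) ≤ C * edist z (q t) := by
        filter_upwards [h1, h2] with z hz hzne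
        have hd0 : edist z (q t) ≠ 0 := by simpa [edist_eq_zero] using hzne
        have hdT : edist z (q t) ≠ ⊤ := edist_ne_top _ _
        calc edist (f z) (f (q t)) = edist (f z) (f (q t)) / edist z (q t) * edist z (q t) := by
              rw [ENNReal.div_mul_cancel hd0 hdT]
          _ ≤ C * edist z (q t) := mul_le_mul_left hz.le _
      rw [eventually_nhdsWithin_iff] at h3
      filter_upwards [h3] with z hz
      by_cases hzq : z = q t
      · simp [hzq]
      · exact hz hzq
    have hkey := key_lemma_stmt6 f C a b q hq hP
    -- bound the variation of f ∘ q
    refine iSup_le ?_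
    rintro ⟨n, u, hu, us⟩
    have hsum : ∀ m : ℕ, ∑ i ∈ Finset.range m, edist ((f ∘ q) (u (i + 1))) ((f ∘ q) (u i)) ≤
        C * eVariationOn q (Set.Icc a b ∩ Set.Icc (u 0) (u m)) := by
      intro m
      induction m with
      | zero => simp
      | succ m ih =>
        rw [Finset.sum_range_succ]
        calc _ ≤ C * eVariationOn q (Set.Icc a b ∩ Set.Icc (u 0) (u m))
              + edist ((f ∘ q) (u (m + 1))) ((f ∘ q) (u m)) := by gcongr
          _ ≤ C * eVariationOn q (Set.Icc a b ∩ Set.Icc (u 0) (u m))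
              + C * eVariationOn q (Set.Icc a b ∩ Set.Icc (u m) (u (m + 1))) := by
              gcongr
              exact hkey (u m) (us m) (u (m + 1)) (us (m + 1)) (hu (Nat.le_succ m))
          _ = _ := by
              rw [← mul_add,
                eVariationOn.Icc_add_Icc q (hu (Nat.zero_le m)) (hu (Nat.le_succ m)) (us m)]
    calc ∑ i ∈ Finset.range n, edist ((f ∘ q) (u (i + 1))) ((f ∘ q) (u i))
        ≤ C * eVariationOn q (Set.Icc a b ∩ Set.Icc (u 0) (u n)) := hsum n
      _ ≤ C * V := by gcongr; exact eVariationOn.mono q Set.inter_subset_left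
  by_cases hMtop : M = ⊤
  · rw [hMtop, ENNReal.top_mul hV0]; exact le_top
  · apply ENNReal.le_of_forall_pos_le_add
    intro ε hε _
    have hεV : (ε : ENNReal) / V ≠ 0 := by
      simp [ENNReal.div_eq_zero_iff, hε.ne', hrect]
    have hlt : M < M + (ε : ENNReal) / V := ENNReal.lt_add_right hMtop hεV
    calc eVariationOn (f ∘ q) (Set.Icc a b) ≤ (M + (ε : ENNReal) / V) * V := claim _ hlt
      _ = M * V + (ε : ENNReal) / V * V := by rw [add_mul]
      _ = M * V + ε := by rw [ENNReal.div_mul_cancel hV0 hrect]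
end

section
/- Let f : X → Y be a continuous map between metric spaces and q : [a,b] → X a path with q(a) ≠ q(b) such that p = f ∘ q is rectifiable. Then there exists τ ∈ [a,b] such that ℓ(p) ≥ D⁻_{q(τ)} f · d(q(a),q(b)). -/
open Filter Topology Set

/-- for continuous `f : X → Y` and a path `q : [a,b] → X` with
`q a ≠ q b` such that `p = f ∘ q` is rectifiable, there exists `τ ∈ [a,b]`
with `ℓ(p) ≥ D⁻_{q τ} f · d(q a, q b)`. -/
theorem stmt7 {X Y : Type*} [MetricSpace X] [MetricSpace Y]
    (f : X → Y) (hf : Continuous f) (a b : ℝ) (hab : a ≤ b)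
    (q : ℝ → X) (hq : ContinuousOn q (Set.Icc a b))
    (hne : q a ≠ q b)
    (hrect : eVariationOn (f ∘ q) (Set.Icc a b) ≠ ⊤) :
    ∃ τ ∈ Set.Icc a b,
      lowerDeriv f (q τ) * edist (q a) (q b) ≤ eVariationOn (f ∘ q) (Set.Icc a b) := by
  by_contra hcon
  push_neg at hcon
  set L := eVariationOn (f ∘ q) (Set.Icc a b) with hLdef
  set D := edist (q a) (q b) with hDdef
  have hD0 : D ≠ 0 := (edist_pos.mpr hne).ne'
  have hDtop : D ≠ ⊤ := edist_ne_top _ _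
  set r₀ := L / D with hr₀def
  have hr₀top : r₀ ≠ ⊤ := (ENNReal.div_lt_top hrect hD0).ne
  -- the local window property at each point of [a,b]
  have key : ∀ c ∈ Set.Icc a b, ∃ r, r₀ < r ∧ r ≠ ⊤ ∧ ∃ η > (0:ℝ),
      ∀ t ∈ Set.Icc a b, |t - c| < η →
        r * edist (q t) (q c) ≤ edist (f (q t)) (f (q c)) := by
    intro c hc
    have hlow : r₀ < lowerDeriv f (q c) :=
      (ENNReal.div_lt_iff (Or.inl hD0) (Or.inl hDtop)).mpr (hcon c hc)
    obtain ⟨r, hr1, hr2⟩ := exists_between hlow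
    have hrtop : r ≠ ⊤ := (lt_of_lt_of_le hr2 le_top).ne
    have hev : ∀ᶠ z in 𝓝[≠] (q c), r < edist (f z) (f (q c)) / edist z (q c) :=
      Filter.eventually_lt_of_lt_liminf hr2
    rw [Filter.eventually_iff, Metric.mem_nhdsWithin_iff] at hev
    obtain ⟨ε, hε, hsub⟩ := hev
    have hcont : Tendsto q (𝓝[Set.Icc a b] c) (𝓝 (q c)) := hq c hc
    have hmem : q ⁻¹' (Metric.ball (q c) ε) ∈ 𝓝[Set.Icc a b] c :=
      hcont (Metric.ball_mem_nhds _ hε)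
    rw [Metric.mem_nhdsWithin_iff] at hmem
    obtain ⟨η, hη, hηsub⟩ := hmem
    refine ⟨r, hr1, hrtop, η, hη, fun t ht hdist => ?_⟩
    have hqt : q t ∈ Metric.ball (q c) ε := by
      apply hηsub
      exact ⟨by rwa [Metric.mem_ball, Real.dist_eq], ht⟩
    by_cases hqtc : q t = q c
    · simp [hqtc]
    · have hz := hsub ⟨hqt, hqtc⟩
      have h0 : edist (q t) (q c) ≠ 0 := (edist_pos.mpr hqtc).ne'
      have htop : edist (q t) (q c) ≠ ⊤ := edist_ne_top _ _
      exact (ENNReal.le_div_iff_mul_le (Or.inl h0) (Or.inl htop)).mp hz.le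
  -- setup
  set V : ℝ → ENNReal := fun t => eVariationOn (f ∘ q) (Set.Icc a t) with hVdef
  set E : ℝ → ENNReal := fun t => edist (q a) (q t) with hEdef
  have hVsplit : ∀ s t : ℝ, a ≤ s → s ≤ t → t ≤ b →
      V s + eVariationOn (f ∘ q) (Set.Icc s t) = V t := by
    intro s t has hst htb
    have h := eVariationOn.Icc_add_Icc (f ∘ q) (s := Set.Icc a b) has hst
      ⟨has, le_trans hst htb⟩
    rwa [Set.inter_eq_self_of_subset_right (Set.Icc_subset_Icc le_rfl (le_trans hst htb)),
      Set.inter_eq_self_of_subset_right (Set.Icc_subset_Icc has htb),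
      Set.inter_eq_self_of_subset_right
        (Set.Icc_subset_Icc le_rfl htb)] at h
  have hVle : ∀ t, t ≤ b → V t ≤ L :=
    fun t ht => eVariationOn.mono _ (Set.Icc_subset_Icc le_rfl ht)
  have hVtop : ∀ t, t ≤ b → V t ≠ ⊤ := fun t ht => ((hVle t ht).trans_lt hrect.lt_top).ne
  set S : Set ℝ := {t | t ∈ Set.Icc a b ∧ r₀ * E t ≤ V t ∧ (q t ≠ q a → r₀ * E t < V t)}
    with hSdef
  have haS : a ∈ S := by
    refine ⟨⟨le_rfl, hab⟩, ?_, fun h => absurd rfl h⟩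
    simp [hEdef, hVdef]
  have hSb : ∀ t ∈ S, t ≤ b := fun t ht => ht.1.2
  have hbdd : BddAbove S := ⟨b, hSb⟩
  have hSne : S.Nonempty := ⟨a, haS⟩
  set c := sSup S with hcdef
  have hac : a ≤ c := le_csSup hbdd haS
  have hcb : c ≤ b := csSup_le hSne hSb
  have hcI : c ∈ Set.Icc a b := ⟨hac, hcb⟩
  obtain ⟨r, hr₀r, hrtop, η, hη, hwin⟩ := key c hcI
  -- Step A : c ∈ S
  have hcS : c ∈ S := by
    obtain ⟨t, htS, htgt⟩ := exists_lt_of_lt_csSup hSne (by linarith : c - η < sSup S)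
    have htc : t ≤ c := le_csSup hbdd htS
    have hdist : |t - c| < η := abs_sub_lt_iff.mpr ⟨by linarith, by linarith⟩
    have hwt := hwin t htS.1 hdist
    by_cases hqtc : q t = q c
    · refine ⟨hcI, ?_, ?_⟩
      · have : E c = E t := by simp [hEdef, hqtc]
        rw [this]
        exact htS.2.1.trans (eVariationOn.mono _ (Set.Icc_subset_Icc le_rfl htc))
      · intro hqc
        have : E c = E t := by simp [hEdef, hqtc]
        rw [this]
        exact (htS.2.2 (by rwa [hqtc])).trans_le
          (eVariationOn.mono _ (Set.Icc_subset_Icc le_rfl htc))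
    · have h0 : edist (q t) (q c) ≠ 0 := (edist_pos.mpr hqtc).ne'
      have htop : edist (q t) (q c) ≠ ⊤ := edist_ne_top _ _
      have hedist : edist (f (q t)) (f (q c)) ≤ eVariationOn (f ∘ q) (Set.Icc t c) :=
        eVariationOn.edist_le (f ∘ q) ⟨le_rfl, htc⟩ ⟨htc, le_rfl⟩
      have hsplit := hVsplit t c htS.1.1 htc hcb
      have hstrict : r₀ * E c < V c := by
        calc r₀ * E c ≤ r₀ * E t + r₀ * edist (q t) (q c) := by
              rw [← mul_add]
              exact mul_le_mul_right (edist_triangle _ _ _) r₀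
          _ < r₀ * E t + r * edist (q t) (q c) := by
              refine ENNReal.add_lt_add_left ?_ ?_
              · exact (htS.2.1.trans_lt (hVtop t (le_trans htc hcb)).lt_top).ne
              · exact ENNReal.mul_lt_mul_left h0 htop hr₀r
          _ ≤ V t + edist (f (q t)) (f (q c)) := add_le_add htS.2.1 hwt
          _ ≤ V t + eVariationOn (f ∘ q) (Set.Icc t c) := add_le_add_right hedist _
          _ = V c := hsplit
      exact ⟨hcI, hstrict.le, fun _ => hstrict⟩
  -- Step B : c = b
  have hcb' : c = b := by
    by_contra hne'
    have hcltb : c < b := lt_of_le_of_ne hcb hne'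
    set t := min b (c + η / 2) with htdef
    have hct : c < t := lt_min hcltb (by linarith)
    have htb : t ≤ b := min_le_left _ _
    have hta : a ≤ t := le_trans hac hct.le
    have hdist : |t - c| < η := by
      have h1 : t ≤ c + η / 2 := min_le_right _ _
      exact abs_sub_lt_iff.mpr ⟨by linarith, by linarith⟩
    have hwt := hwin t ⟨hta, htb⟩ hdist
    have hedist : edist (f (q c)) (f (q t)) ≤ eVariationOn (f ∘ q) (Set.Icc c t) :=
      eVariationOn.edist_le (f ∘ q) ⟨le_rfl, hct.le⟩ ⟨hct.le, le_rfl⟩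
    have hsplit := hVsplit c t hac hct.le htb
    have hVt : V c + r * edist (q c) (q t) ≤ V t := by
      calc V c + r * edist (q c) (q t)
          = V c + r * edist (q t) (q c) := by rw [edist_comm]
        _ ≤ V c + edist (f (q t)) (f (q c)) := add_le_add_right hwt _
        _ = V c + edist (f (q c)) (f (q t)) := by rw [edist_comm]
        _ ≤ V c + eVariationOn (f ∘ q) (Set.Icc c t) := add_le_add_right hedist _
        _ = V t := hsplit
    have hEt : E t ≤ E c + edist (q c) (q t) := edist_triangle _ _ _
    have htS : t ∈ S := by
      refine ⟨⟨hta, htb⟩, ?_, ?_⟩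
      · calc r₀ * E t ≤ r₀ * E c + r₀ * edist (q c) (q t) := by
              rw [← mul_add]; exact mul_le_mul_right hEt r₀
          _ ≤ V c + r * edist (q c) (q t) :=
              add_le_add hcS.2.1 (mul_le_mul_left hr₀r.le _)
          _ ≤ V t := hVt
      · intro hqt
        by_cases hqc : q c = q a
        · have hE : E t = edist (q c) (q t) := by rw [hEdef]; simp [hqc]
          have h0 : E t ≠ 0 := by
            simp only [hEdef]
            exact (edist_pos.mpr (Ne.symm hqt)).ne'
          have hEtop : E t ≠ ⊤ := edist_ne_top _ _
          calc r₀ * E t < r * E t := ENNReal.mul_lt_mul_left h0 hEtop hr₀r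
            _ = r * edist (q c) (q t) := by rw [hE]
            _ ≤ V c + r * edist (q c) (q t) := le_add_self
            _ ≤ V t := hVt
        · have hc3 := hcS.2.2 hqc
          have hfin : r * edist (q c) (q t) ≠ ⊤ :=
            ENNReal.mul_ne_top hrtop (edist_ne_top _ _)
          calc r₀ * E t ≤ r₀ * E c + r₀ * edist (q c) (q t) := by
                rw [← mul_add]; exact mul_le_mul_right hEt r₀
            _ ≤ r₀ * E c + r * edist (q c) (q t) :=
                add_le_add_right (mul_le_mul_left hr₀r.le _) _
            _ < V c + r * edist (q c) (q t) := ENNReal.add_lt_add_right hfin hc3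
            _ ≤ V t := hVt
    exact absurd (le_csSup hbdd htS) (not_le.mpr hct)
  -- conclusion
  have hbS : b ∈ S := hcb' ▸ hcS
  have hstrict := hbS.2.2 (Ne.symm hne)
  have hVb : V b = L := rfl
  rw [hVb] at hstrict
  have : r₀ * E b = L := by
    rw [hEdef, hr₀def]
    exact ENNReal.div_mul_cancel hD0 hDtop
  rw [this] at hstrict
  exact lt_irrefl _ hstrict
end

section
/- Let f : X → Y be a continuous map between metric spaces and q : [a,b] → X a path such that p = f ∘ q is rectifiable. If 0 < inf_{x ∈ Im q} D⁻_x f < ∞, then ℓ(p) ≥ (inf_{x ∈ Im q} D⁻_x f) · ℓ(q). -/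
open Filter Topology Set


open scoped ENNReal

lemma key {X Y : Type*} [MetricSpace X] [MetricSpace Y]
    (f : X → Y) (q : ℝ → X) {a b : ℝ} (hq : ContinuousOn q (Set.Icc a b))
    {c : ℝ≥0∞} (hct : c ≠ ⊤)
    (H : ∀ x ∈ q '' Set.Icc a b, ∃ r : ℝ, 0 < r ∧ ∀ z, edist z x < ENNReal.ofReal r →
      c * edist z x ≤ edist (f z) (f x))
    {s t : ℝ} (has : a ≤ s) (hst : s ≤ t) (htb : t ≤ b) :
    c * edist (q s) (q t) ≤ eVariationOn (f ∘ q) (Set.Icc s t) := by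
  set p := f ∘ q
  set A : Set ℝ := {u | u ∈ Set.Icc s t ∧ c * edist (q s) (q u) ≤ eVariationOn p (Set.Icc s u)}
    with hA
  have hsA : s ∈ A := by
    refine ⟨⟨le_rfl, hst⟩, ?_⟩
    simp
  have hAne : A.Nonempty := ⟨s, hsA⟩
  have hbdd : BddAbove A := ⟨t, fun u hu => hu.1.2⟩
  set T := sSup A with hT
  have hsT : s ≤ T := le_csSup hbdd hsA
  have hTt : T ≤ t := csSup_le hAne fun u hu => hu.1.2
  have hTab : T ∈ Set.Icc a b := ⟨has.trans hsT, hTt.trans htb⟩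
  -- T ∈ A
  have hTA : c * edist (q s) (q T) ≤ eVariationOn p (Set.Icc s T) := by
    apply ENNReal.le_of_forall_pos_le_add
    intro ε hε _
    have hεc : (0:ℝ≥0∞) < ε / c := ENNReal.div_pos (by exact_mod_cast hε.ne') hct
    have hcont : ContinuousWithinAt q (Set.Icc a b) T := hq T hTab
    have hev : ∀ᶠ u in 𝓝[Set.Icc a b] T, edist (q u) (q T) < ε / c := by
      have := hcont (EMetric.ball_mem_nhds (q T) hεc)
      filter_upwards [this] with u hu using hu
    rw [eventually_nhdsWithin_iff] at hev
    obtain ⟨δ, hδ, hball⟩ := Metric.eventually_nhds_iff.1 hev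
    -- find u ∈ A with T - δ < u
    obtain ⟨u, huA, hu⟩ : ∃ u ∈ A, T - δ/2 < u := by
      rcases lt_or_ge (T - δ/2) s with h | h
      · exact ⟨s, hsA, h⟩
      · exact exists_lt_of_lt_csSup hAne (by linarith)
    have huT : u ≤ T := le_csSup hbdd huA
    have hud : dist u T < δ := by
      rw [Real.dist_eq, abs_lt]; constructor <;> [linarith; linarith]
    have huab : u ∈ Set.Icc a b := ⟨has.trans huA.1.1, huA.1.2.trans htb⟩
    have hqu : edist (q u) (q T) < ε / c := hball hud huab
    calc c * edist (q s) (q T) ≤ c * (edist (q s) (q u) + edist (q u) (q T)) := by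
          gcongr; exact edist_triangle _ _ _
      _ = c * edist (q s) (q u) + c * edist (q u) (q T) := mul_add _ _ _
      _ ≤ eVariationOn p (Set.Icc s u) + c * (ε / c) :=
          add_le_add huA.2 (mul_le_mul_right hqu.le c)
      _ ≤ eVariationOn p (Set.Icc s T) + ε :=
          add_le_add (eVariationOn.mono p (Set.Icc_subset_Icc le_rfl huT)) ENNReal.mul_div_le
  -- T = t
  rcases eq_or_lt_of_le hTt with heq | hTlt
  · exact heq ▸ hTA
  · exfalso
    obtain ⟨r, hr, hrprop⟩ := H (q T) ⟨T, hTab, rfl⟩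
    have hcont : ContinuousWithinAt q (Set.Icc a b) T := hq T hTab
    have hev : ∀ᶠ u in 𝓝[Set.Icc a b] T, edist (q u) (q T) < ENNReal.ofReal r := by
      have := hcont (EMetric.ball_mem_nhds (q T) (ENNReal.ofReal_pos.2 hr))
      filter_upwards [this] with u hu using hu
    rw [eventually_nhdsWithin_iff] at hev
    obtain ⟨δ, hδ, hball⟩ := Metric.eventually_nhds_iff.1 hev
    set u := min t (T + δ/2) with hu
    have hTu : T < u := lt_min hTlt (by linarith)
    have hut : u ≤ t := min_le_left _ _
    have hud : dist u T < δ := by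
      rw [Real.dist_eq, abs_lt]
      constructor
      · linarith
      · have : u ≤ T + δ/2 := min_le_right _ _
        linarith
    have huab : u ∈ Set.Icc a b := ⟨has.trans (hsT.trans hTu.le), hut.trans htb⟩
    have hqu : edist (q u) (q T) < ENNReal.ofReal r := hball hud huab
    have huA : u ∈ A := by
      refine ⟨⟨hsT.trans hTu.le, hut⟩, ?_⟩
      have step : c * edist (q T) (q u) ≤ edist (p T) (p u) := by
        have := hrprop (q u) hqu
        rwa [edist_comm (q T) (q u), edist_comm (p T) (p u)]
      have add : eVariationOn p (Set.Icc s T) + eVariationOn p (Set.Icc T u)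
          = eVariationOn p (Set.Icc s u) := by
        have := eVariationOn.Icc_add_Icc p (s := Set.univ) hsT hTu.le (Set.mem_univ T)
        simpa using this
      calc c * edist (q s) (q u) ≤ c * (edist (q s) (q T) + edist (q T) (q u)) := by
            gcongr; exact edist_triangle _ _ _
        _ = c * edist (q s) (q T) + c * edist (q T) (q u) := mul_add _ _ _
        _ ≤ eVariationOn p (Set.Icc s T) + edist (p T) (p u) := add_le_add hTA step
        _ ≤ eVariationOn p (Set.Icc s T) + eVariationOn p (Set.Icc T u) :=
            add_le_add le_rfl (eVariationOn.edist_le p (Set.left_mem_Icc.2 hTu.le)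
              (Set.right_mem_Icc.2 hTu.le))
        _ = eVariationOn p (Set.Icc s u) := add
    exact absurd (le_csSup hbdd huA) (not_le.2 hTu)

lemma sum_Icc_le {Y : Type*} [MetricSpace Y] (p : ℝ → Y) (u : ℕ → ℝ) (hu : Monotone u) (n : ℕ) :
    ∑ i ∈ Finset.range n, eVariationOn p (Set.Icc (u i) (u (i+1)))
      ≤ eVariationOn p (Set.Icc (u 0) (u n)) := by
  induction n with
  | zero => simp
  | succ n ih =>
    rw [Finset.sum_range_succ]
    have add : eVariationOn p (Set.Icc (u 0) (u n)) + eVariationOn p (Set.Icc (u n) (u (n+1)))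
        = eVariationOn p (Set.Icc (u 0) (u (n+1))) := by
      have := eVariationOn.Icc_add_Icc p (s := Set.univ) (hu (Nat.zero_le n))
        (hu (Nat.le_succ n)) (Set.mem_univ (u n))
      simpa using this
    calc _ ≤ eVariationOn p (Set.Icc (u 0) (u n)) + eVariationOn p (Set.Icc (u n) (u (n+1))) := by
          gcongr
      _ = _ := add


/-- for continuous `f : X → Y` and a path `q : [a,b] → X` such that
`p = f ∘ q` is rectifiable, if `0 < inf_{x ∈ Im q} D⁻ₓ f < ∞` then
`ℓ(p) ≥ (inf_{x ∈ Im q} D⁻ₓ f) · ℓ(q)`. -/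
theorem stmt8 {X Y : Type*} [MetricSpace X] [MetricSpace Y]
    (f : X → Y) (hf : Continuous f) (a b : ℝ) (hab : a ≤ b)
    (q : ℝ → X) (hq : ContinuousOn q (Set.Icc a b))
    (hrect : eVariationOn (f ∘ q) (Set.Icc a b) ≠ ⊤)
    (hinf0 : 0 < ⨅ x ∈ q '' Set.Icc a b, lowerDeriv f x)
    (hinftop : (⨅ x ∈ q '' Set.Icc a b, lowerDeriv f x) < ⊤) :
    (⨅ x ∈ q '' Set.Icc a b, lowerDeriv f x) * eVariationOn q (Set.Icc a b) ≤
      eVariationOn (f ∘ q) (Set.Icc a b) := by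
  set m := ⨅ x ∈ q '' Set.Icc a b, lowerDeriv f x with hm
  have main : ∀ c : ℝ≥0∞, c ≠ ⊤ → c < m →
      c * eVariationOn q (Set.Icc a b) ≤ eVariationOn (f ∘ q) (Set.Icc a b) := by
    intro c hct hcm
    have H : ∀ x ∈ q '' Set.Icc a b, ∃ r : ℝ, 0 < r ∧ ∀ z, edist z x < ENNReal.ofReal r →
        c * edist z x ≤ edist (f z) (f x) := by
      intro x hx
      have hle : m ≤ lowerDeriv f x := by
        rw [hm]; exact biInf_le _ hx
      have hev : ∀ᶠ z in 𝓝[≠] x, c < edist (f z) (f x) / edist z x :=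
        Filter.eventually_lt_of_lt_liminf (hcm.trans_le hle)
      rw [eventually_nhdsWithin_iff] at hev
      obtain ⟨r, hr, hball⟩ := Metric.eventually_nhds_iff.1 hev
      refine ⟨r, hr, fun z hz => ?_⟩
      rcases eq_or_ne z x with rfl | hzx
      · simp
      · exact (ENNReal.mul_lt_of_lt_div (hball (edist_lt_ofReal.1 hz) hzx)).le
    have hVdef : eVariationOn q (Set.Icc a b) =
        ⨆ P : ℕ × {u : ℕ → ℝ // Monotone u ∧ ∀ i, u i ∈ Set.Icc a b},
          ∑ i ∈ Finset.range P.1, edist (q (P.2.1 (i+1))) (q (P.2.1 i)) := rfl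
    rw [hVdef, ENNReal.mul_iSup]
    apply iSup_le
    rintro ⟨n, u, hu, hus⟩
    rw [Finset.mul_sum]
    calc ∑ i ∈ Finset.range n, c * edist (q (u (i+1))) (q (u i))
        ≤ ∑ i ∈ Finset.range n, eVariationOn (f ∘ q) (Set.Icc (u i) (u (i+1))) := by
          apply Finset.sum_le_sum
          intro i _
          rw [edist_comm]
          exact key f q hq hct H (hus i).1 (hu (Nat.le_succ i)) (hus (i+1)).2
      _ ≤ eVariationOn (f ∘ q) (Set.Icc (u 0) (u n)) := sum_Icc_le _ u hu n
      _ ≤ eVariationOn (f ∘ q) (Set.Icc a b) :=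
          eVariationOn.mono _ (Set.Icc_subset_Icc (hus 0).1 (hus n).2)
  obtain ⟨c0, hc0pos, hc0m⟩ := exists_between hinf0
  have hc0t : c0 ≠ ⊤ := (hc0m.trans hinftop).ne
  have hVne : eVariationOn q (Set.Icc a b) ≠ ⊤ := by
    intro hV
    have h := main c0 hc0t hc0m
    rw [hV, ENNReal.mul_top hc0pos.ne'] at h
    exact hrect (top_le_iff.1 h)
  rcases eq_or_ne (eVariationOn q (Set.Icc a b)) 0 with hV0 | hV0
  · rw [hV0, mul_zero]; exact zero_le
  · rw [← ENNReal.le_div_iff_mul_le (Or.inl hV0) (Or.inl hVne)]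
    apply le_of_forall_lt_imp_le_of_dense
    intro c hc
    have hct : c ≠ ⊤ := (hc.trans hinftop).ne
    rw [ENNReal.le_div_iff_mul_le (Or.inl hV0) (Or.inl hVne)]
    exact main c hct hc
end

section
/- Let f : X → Y be a continuous map between metric spaces with X complete. Suppose that for every rectifiable path p : [0,1] → Y, every b ∈ (0,1], and every continuous q : [0,b) → X with f ∘ q = p on [0,b), there exists α > 0 with inf{ D⁻_x f : x ∈ Im q } ≥ α. Then f has the continuation property for every rectifiable path p: for every b ∈ (0,1] and every continuous q : [0,b) → X with f ∘ q = p on [0,b), there is a sequence t_n → b in [0,b) such that (q(t_n)) converges in X. -/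
open Filter Topology Set

/-- Additivity of `eVariationOn` over adjacent intervals (on full `Icc`s). -/
lemma my_Icc_add_Icc {E : Type*} [PseudoEMetricSpace E] (f : ℝ → E) {a b c : ℝ}
    (hab : a ≤ b) (hbc : b ≤ c) :
    eVariationOn f (Icc a b) + eVariationOn f (Icc b c) = eVariationOn f (Icc a c) := by
  have := eVariationOn.Icc_add_Icc f (s := (univ : Set ℝ)) hab hbc trivial
  simpa using this

/-- Key estimate: if along the lift `q` the map `f` locally expands distances by a
factor `c`, then the distance between two points of the lift is controlled by the
variation of `p` between the corresponding times. -/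
lemma my_key {X Y : Type*} [MetricSpace X] [MetricSpace Y]
    (f : X → Y) (p : ℝ → Y) (b : ℝ) (q : ℝ → X)
    (hq : ContinuousOn q (Set.Ico 0 b))
    (hq' : ∀ t ∈ Set.Ico 0 b, f (q t) = p t)
    (c : ENNReal) (hcT : c ≠ ⊤)
    (hloc : ∀ t ∈ Set.Ico 0 b, ∀ᶠ z in 𝓝[≠] (q t), c * edist z (q t) ≤ edist (f z) (f (q t)))
    {s t : ℝ} (hs0 : 0 ≤ s) (hst : s ≤ t) (htb : t < b) :
    c * edist (q t) (q s) ≤ eVariationOn p (Set.Icc s t) := by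
  -- local estimate in the time variable
  have hIcc_sub : Set.Icc s t ⊆ Set.Ico 0 b := fun u hu =>
    ⟨hs0.trans hu.1, lt_of_le_of_lt hu.2 htb⟩
  have hEst : ∀ T ∈ Set.Ico 0 b,
      ∀ᶠ u in 𝓝[Set.Ico 0 b] T, c * edist (q u) (q T) ≤ edist (p u) (p T) := by
    intro T hT
    have h1 : ∀ᶠ z in 𝓝 (q T), c * edist z (q T) ≤ edist (f z) (f (q T)) := by
      have h2 := (eventually_nhdsWithin_iff.mp (hloc T hT))
      filter_upwards [h2] with z hz
      rcases eq_or_ne z (q T) with rfl | hne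
      · simp
      · exact hz hne
    have h3 : Filter.Tendsto q (𝓝[Set.Ico 0 b] T) (𝓝 (q T)) := hq T hT
    have h4 := h3.eventually h1
    filter_upwards [h4, self_mem_nhdsWithin] with u hu huT
    calc c * edist (q u) (q T) ≤ edist (f (q u)) (f (q T)) := hu
    _ = edist (p u) (p T) := by rw [hq' u huT, hq' T hT]
  set S : Set ℝ := {u | u ∈ Set.Icc s t ∧
      c * edist (q u) (q s) ≤ eVariationOn p (Set.Icc s u)} with hS
  have hsS : s ∈ S := by
    refine ⟨⟨le_rfl, hst⟩, ?_⟩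
    simp
  have hSne : S.Nonempty := ⟨s, hsS⟩
  have hSbdd : BddAbove S := ⟨t, fun u hu => hu.1.2⟩
  set T := sSup S with hT
  have hsT : s ≤ T := le_csSup hSbdd hsS
  have hTt : T ≤ t := csSup_le hSne (fun u hu => hu.1.2)
  have hTmem : T ∈ Set.Icc s t := ⟨hsT, hTt⟩
  have hTb : T ∈ Set.Ico 0 b := hIcc_sub hTmem
  -- T ∈ S
  have hTS : T ∈ S := by
    obtain ⟨u, hu_mono, hu_tend, hu_mem⟩ := exists_seq_tendsto_sSup hSne hSbdd
    refine ⟨hTmem, ?_⟩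
    have hqtend : Filter.Tendsto (fun n => q (u n)) atTop (𝓝 (q T)) := by
      refine (hq T hTb).tendsto.comp ?_
      refine tendsto_nhdsWithin_of_tendsto_nhds_of_eventually_within _ hu_tend ?_
      exact Eventually.of_forall fun n => hIcc_sub (hu_mem n).1
    have htend : Filter.Tendsto (fun n => c * edist (q (u n)) (q s)) atTop
        (𝓝 (c * edist (q T) (q s))) :=
      ENNReal.Tendsto.const_mul (hqtend.edist tendsto_const_nhds) (Or.inr hcT)
    have hbnd : ∀ n, c * edist (q (u n)) (q s) ≤ eVariationOn p (Set.Icc s T) := fun n =>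
      le_trans (hu_mem n).2 (eVariationOn.mono p
        (Icc_subset_Icc le_rfl (le_csSup hSbdd (hu_mem n))))
    exact le_of_tendsto htend (Eventually.of_forall hbnd)
  -- T = t, else contradiction
  rcases eq_or_lt_of_le hTt with hTeq | hTlt
  · exact hTeq ▸ hTS.2
  · exfalso
    have hEventually := eventually_nhdsWithin_iff.mp (hEst T hTb)
    have hFne : (𝓝[Set.Ioi T] T).NeBot := nhdsGT_neBot T
    have h5 : ∀ᶠ u in 𝓝[Set.Ioi T] T,
        (u ∈ Set.Ico 0 b → c * edist (q u) (q T) ≤ edist (p u) (p T)) ∧ u < t ∧ T < u := by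
      have ha : ∀ᶠ u in 𝓝[Set.Ioi T] T,
          u ∈ Set.Ico 0 b → c * edist (q u) (q T) ≤ edist (p u) (p T) :=
        nhdsWithin_le_nhds hEventually
      have hb' : ∀ᶠ u in 𝓝[Set.Ioi T] T, u < t := by
        refine nhdsWithin_le_nhds ?_
        exact Filter.Tendsto.eventually_lt_const hTlt tendsto_id
      have hc' : ∀ᶠ u in 𝓝[Set.Ioi T] T, T < u := self_mem_nhdsWithin
      filter_upwards [ha, hb', hc'] with u h1 h2 h3 using ⟨h1, h2, h3⟩
    obtain ⟨u, hu1, hu2, hu3⟩ := h5.exists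
    have huIcc : u ∈ Set.Icc s t := ⟨hsT.trans hu3.le, hu2.le⟩
    have huIco : u ∈ Set.Ico 0 b := hIcc_sub huIcc
    have huS : u ∈ S := by
      refine ⟨huIcc, ?_⟩
      calc c * edist (q u) (q s) ≤ c * (edist (q u) (q T) + edist (q T) (q s)) := by
            exact mul_le_mul_right (edist_triangle _ _ _) c
      _ = c * edist (q u) (q T) + c * edist (q T) (q s) := by ring
      _ ≤ edist (p u) (p T) + eVariationOn p (Set.Icc s T) :=
            add_le_add (hu1 huIco) hTS.2
      _ ≤ eVariationOn p (Set.Icc T u) + eVariationOn p (Set.Icc s T) := by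
            refine add_le_add_left ?_ _
            exact eVariationOn.edist_le p (Set.right_mem_Icc.2 hu3.le)
              (Set.left_mem_Icc.2 hu3.le)
      _ = eVariationOn p (Set.Icc s u) := by
            rw [add_comm]; exact my_Icc_add_Icc p hsT hu3.le
    exact absurd (le_csSup hSbdd huS) (not_le.2 hu3)

/-- if `X` is complete and `f : X → Y` is continuous with the bounded
path-lifting property for rectifiable paths (every partial lifting of a rectifiable
path has `D⁻ f` bounded below by a positive constant along its image), then `f` has
the continuation property for every rectifiable path. -/
theorem stmt11 {X Y : Type*} [MetricSpace X] [MetricSpace Y] [CompleteSpace X]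
    (f : X → Y) (hf : Continuous f)
    (hbpl : ∀ p : ℝ → Y, ContinuousOn p (Set.Icc 0 1) →
      eVariationOn p (Set.Icc 0 1) ≠ ⊤ →
      ∀ b ∈ Set.Ioc (0:ℝ) 1, ∀ q : ℝ → X, ContinuousOn q (Set.Ico 0 b) →
        (∀ t ∈ Set.Ico 0 b, f (q t) = p t) →
        ∃ α : ℝ, 0 < α ∧ ∀ t ∈ Set.Ico 0 b, ENNReal.ofReal α ≤ lowerDeriv f (q t)) :
    ∀ p : ℝ → Y, ContinuousOn p (Set.Icc 0 1) →
      eVariationOn p (Set.Icc 0 1) ≠ ⊤ →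
      ∀ b ∈ Set.Ioc (0:ℝ) 1, ∀ q : ℝ → X, ContinuousOn q (Set.Ico 0 b) →
        (∀ t ∈ Set.Ico 0 b, f (q t) = p t) →
        ∃ tn : ℕ → ℝ, (∀ n, tn n ∈ Set.Ico 0 b) ∧
          Filter.Tendsto tn Filter.atTop (𝓝 b) ∧
          ∃ x : X, Filter.Tendsto (fun n => q (tn n)) Filter.atTop (𝓝 x) := by
  intro p hp hpvar b hb q hq hq'
  obtain ⟨α, hα, hαq⟩ := hbpl p hp hpvar b hb q hq hq'
  obtain ⟨hb0, hb1⟩ := hb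
  set c : ENNReal := ENNReal.ofReal (α / 2) with hc
  have hc0 : c ≠ 0 := by
    simp [hc, ENNReal.ofReal_eq_zero]
    linarith
  have hcT : c ≠ ⊤ := ENNReal.ofReal_ne_top
  -- the local expansion property
  have hloc : ∀ t ∈ Set.Ico 0 b,
      ∀ᶠ z in 𝓝[≠] (q t), c * edist z (q t) ≤ edist (f z) (f (q t)) := by
    intro t ht
    have h1 : c < lowerDeriv f (q t) := by
      refine lt_of_lt_of_le ?_ (hαq t ht)
      exact ENNReal.ofReal_lt_ofReal_iff hα |>.2 (by linarith)
    have h2 : ∀ᶠ z in 𝓝[≠] (q t),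
        c < edist (f z) (f (q t)) / edist z (q t) :=
      eventually_lt_of_lt_liminf h1
    filter_upwards [h2, self_mem_nhdsWithin] with z hz hzne
    have hzne' : edist z (q t) ≠ 0 := by
      simpa [edist_eq_zero] using hzne
    have := (ENNReal.lt_div_iff_mul_lt (Or.inl hzne') (Or.inl (edist_ne_top _ _))).1 hz
    exact this.le
  -- the sequence of times
  set tn : ℕ → ℝ := fun n => b - b / (n + 2) with htn
  have htn_mem : ∀ n, tn n ∈ Set.Ico 0 b := by
    intro n
    constructor
    · have : b / (n + 2) ≤ b := by
        rw [div_le_iff₀ (by positivity)]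
        nlinarith [hb0.le]
      simp [htn]; linarith
    · have : 0 < b / (n + 2) := by positivity
      simp [htn]; linarith
  have htn_mono : Monotone tn := by
    intro m n hmn
    have h2 : (0:ℝ) < m + 2 := by positivity
    have h3 : (m:ℝ) + 2 ≤ (n:ℝ) + 2 := by
      have := (Nat.cast_le (α := ℝ)).2 hmn; linarith
    have : b / (n + 2) ≤ b / (m + 2) := by
      apply div_le_div_of_nonneg_left hb0.le h2 h3
    simp only [htn]; linarith
  have htn_tend : Filter.Tendsto tn Filter.atTop (𝓝 b) := by
    have h1 : Filter.Tendsto (fun n : ℕ => b / (n + 2)) Filter.atTop (𝓝 0) := by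
      apply Filter.Tendsto.div_atTop tendsto_const_nhds
      exact tendsto_atTop_add_const_right atTop 2 (tendsto_natCast_atTop_atTop (R := ℝ))
    have := tendsto_const_nhds.sub h1 (α := ℕ) (f := fun _ => b)
    simpa using this
  refine ⟨tn, htn_mem, htn_tend, ?_⟩
  -- Cauchy sequence via summability of variations
  set d : ℕ → ENNReal := fun n => eVariationOn p (Set.Icc (tn n) (tn (n + 1))) / c with hd
  have hkey : ∀ n, edist (q (tn n)) (q (tn (n + 1))) ≤ d n := by
    intro n
    have h1 := my_key f p b q hq hq' c hcT hloc (htn_mem n).1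
      (htn_mono (Nat.le_succ n)) (htn_mem (n + 1)).2
    rw [ENNReal.le_div_iff_mul_le (Or.inl hc0) (Or.inl hcT)]
    calc edist (q (tn n)) (q (tn (n + 1))) * c
        = c * edist (q (tn (n + 1))) (q (tn n)) := by rw [edist_comm, mul_comm]
    _ ≤ _ := h1
  have hsum : (∑' n, eVariationOn p (Set.Icc (tn n) (tn (n + 1))))
      ≤ eVariationOn p (Set.Icc 0 1) := by
    rw [ENNReal.tsum_eq_iSup_nat]
    refine iSup_le fun N => ?_
    have htel : ∀ N : ℕ, (∑ i ∈ Finset.range N, eVariationOn p (Set.Icc (tn i) (tn (i + 1))))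
        = eVariationOn p (Set.Icc (tn 0) (tn N)) := by
      intro N
      induction N with
      | zero => simp [eVariationOn.subsingleton p (Set.subsingleton_Icc_of_ge le_rfl)]
      | succ N ih =>
        rw [Finset.sum_range_succ, ih,
          my_Icc_add_Icc p (htn_mono (Nat.zero_le N)) (htn_mono (Nat.le_succ N))]
    rw [htel]
    refine eVariationOn.mono p ?_
    exact Icc_subset_Icc (htn_mem 0).1 ((htn_mem N).2.le.trans hb1)
  have htsum : (∑' n, d n) ≠ ⊤ := by
    have h1 : (∑' n, d n) = (∑' n, eVariationOn p (Set.Icc (tn n) (tn (n + 1)))) / c := by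
      simp only [hd, ENNReal.div_eq_inv_mul]
      exact ENNReal.tsum_mul_left
    rw [h1]
    refine ne_of_lt (lt_of_le_of_lt (ENNReal.div_le_div_right hsum c) ?_)
    exact ENNReal.div_lt_top hpvar hc0
  have hcauchy : CauchySeq (fun n => q (tn n)) :=
    cauchySeq_of_edist_le_of_tsum_ne_top d hkey htsum
  obtain ⟨x, hx⟩ := cauchySeq_tendsto_of_complete hcauchy
  exact ⟨x, hx⟩
end

section
/- Let f : X → Y be a local homeomorphism between metric spaces, where X is complete and Y is path-connected and locally contractible via rectifiable paths. If there exists α > 0 such that D⁻_x f ≥ α for all x ∈ X, then f is a covering projection (covering map). -/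
open Filter Topology Set

/-- `Y` is locally contractible via rectifiable paths: every point `y₀` has an open
neighborhood `U` together with a continuous homotopy `H : U × [0,1] → U` with
`H y₀ t = y₀`, `H y 0 = y₀`, `H y 1 = y`, and each path `t ↦ H y t` rectifiable. -/
def LocallyRContractible (Y : Type*) [MetricSpace Y] : Prop :=
  ∀ y₀ : Y, ∃ U : Set Y, IsOpen U ∧ y₀ ∈ U ∧
    ∃ H : Y → ℝ → Y,
      ContinuousOn (fun p : Y × ℝ => H p.1 p.2) (U ×ˢ Set.Icc (0:ℝ) 1) ∧
      (∀ y ∈ U, ∀ t ∈ Set.Icc (0:ℝ) 1, H y t ∈ U) ∧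
      (∀ t ∈ Set.Icc (0:ℝ) 1, H y₀ t = y₀) ∧
      (∀ y ∈ U, H y 0 = y₀ ∧ H y 1 = y) ∧
      (∀ y ∈ U, eVariationOn (H y) (Set.Icc (0:ℝ) 1) ≠ ⊤)

section AuxLemmas

/-- Continuous induction on a real interval. -/
lemma real_induction {a b : ℝ} (hab : a ≤ b) (S : Set ℝ)
    (hmem : ∀ t ∈ Icc a b, Ico a t ⊆ S → t ∈ S)
    (hext : ∀ t ∈ Ico a b, Icc a t ⊆ S → ∃ δ > 0, Icc a (min (t + δ) b) ⊆ S) :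
    Icc a b ⊆ S := by
  set A : Set ℝ := {t ∈ Icc a b | Icc a t ⊆ S} with hA
  have h0A : a ∈ A := by
    refine ⟨⟨le_refl a, hab⟩, ?_⟩
    intro u hu
    have hua : u = a := le_antisymm hu.2 hu.1
    rw [hua]
    exact hmem a ⟨le_refl a, hab⟩ (by simp)
  have hbdd : BddAbove A := ⟨b, fun t ht => ht.1.2⟩
  have hne : A.Nonempty := ⟨a, h0A⟩
  set c := sSup A with hc
  have hcab : c ∈ Icc a b := ⟨le_csSup hbdd h0A, csSup_le hne fun t ht => ht.1.2⟩
  have hIco : Ico a c ⊆ S := by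
    intro u hu
    obtain ⟨t, htA, hut⟩ := exists_lt_of_lt_csSup hne hu.2
    exact htA.2 ⟨hu.1, le_of_lt hut⟩
  have hcS : c ∈ S := hmem c hcab hIco
  have hcA : c ∈ A := by
    refine ⟨hcab, ?_⟩
    intro u hu
    rcases lt_or_eq_of_le hu.2 with h | h
    · exact hIco ⟨hu.1, h⟩
    · rwa [h]
  have hcb : c = b := by
    by_contra hne'
    have hcb' : c < b := lt_of_le_of_ne hcab.2 hne'
    obtain ⟨δ, hδ, hsub⟩ := hext c ⟨hcab.1, hcb'⟩ hcA.2
    have hmemA : min (c + δ) b ∈ A := by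
      refine ⟨⟨le_min (by linarith [hcab.1, hδ]) hab, min_le_right _ _⟩, hsub⟩
    · have : min (c + δ) b ≤ c := le_csSup hbdd hmemA
      have h1 : c < min (c + δ) b := lt_min (by linarith) hcb'
      linarith
  intro t ht
  rcases lt_or_eq_of_le ht.2 with h | h
  · exact hIco (hcb ▸ ⟨ht.1, h⟩)
  · rw [h, ← hcb]; exact hcS

/-- From "eventually in S near t within Icc a b" (plus `[a,t] ⊆ S`) to an interval extension. -/
lemma extend_of_eventually {a b t : ℝ} (hab : t ∈ Ico a b) {S : Set ℝ}
    (hIcc : Icc a t ⊆ S) (h : ∀ᶠ u in 𝓝[Icc a b] t, u ∈ S) :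
    ∃ δ > 0, Icc a (min (t + δ) b) ⊆ S := by
  rw [eventually_nhdsWithin_iff] at h
  rw [Metric.eventually_nhds_iff] at h
  obtain ⟨δ, hδ, hball⟩ := h
  refine ⟨δ / 2, by linarith, ?_⟩
  intro u hu
  rcases le_or_gt u t with h1 | h1
  · exact hIcc ⟨hu.1, h1⟩
  · have hub : u ≤ b := le_trans hu.2 (min_le_right _ _)
    have hut : u ≤ t + δ / 2 := le_trans hu.2 (min_le_left _ _)
    have : dist u t < δ := by
      rw [Real.dist_eq, abs_of_pos (by linarith)]
      linarith
    exact hball this ⟨le_trans hab.1 (le_of_lt h1), hub⟩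

/-- Gluing continuous functions on adjacent intervals. -/
lemma glue_continuousOn {Z : Type*} [TopologicalSpace Z] {g h : ℝ → Z} {a b c : ℝ}
    (hab : a ≤ b) (hbc : b ≤ c) (hg : ContinuousOn g (Icc a b))
    (hh : ContinuousOn h (Icc b c)) (heq : g b = h b) :
    ContinuousOn (fun u => if u ≤ b then g u else h u) (Icc a c) := by
  intro t ht
  rcases lt_trichotomy t b with h1 | h1 | h1
  · have : ContinuousWithinAt g (Icc a c) t := by
      apply (hg t ⟨ht.1, le_of_lt h1⟩).mono_of_mem_nhdsWithin
      have : Icc a c ∩ Iio b ∈ 𝓝[Icc a c] t :=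
        inter_mem_nhdsWithin _ (Iio_mem_nhds h1)
      filter_upwards [this] with u hu using ⟨hu.1.1, le_of_lt hu.2⟩
    apply this.congr_of_eventuallyEq
    · filter_upwards [inter_mem_nhdsWithin (Icc a c) (Iio_mem_nhds h1)] with u hu
      have h2 : u < b := hu.2
      simp [h2.le]
    · simp [le_of_lt h1]
  · subst h1
    have c1 : ContinuousWithinAt (fun u => if u ≤ t then g u else h u) (Icc a t) t := by
      apply (hg t ⟨ht.1, le_refl t⟩).congr_of_eventuallyEq
      · filter_upwards [self_mem_nhdsWithin] with u hu
        simp [hu.2]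
      · simp
    have c2 : ContinuousWithinAt (fun u => if u ≤ t then g u else h u) (Icc t c) t := by
      apply (hh t ⟨le_refl t, ht.2⟩).congr_of_eventuallyEq
      · filter_upwards [self_mem_nhdsWithin] with u hu
        rcases eq_or_lt_of_le hu.1 with h2 | h2
        · simp [← h2, heq]
        · simp [not_le.mpr h2]
      · simp [heq]
    exact (c1.union c2).mono Icc_subset_Icc_union_Icc
  · have : ContinuousWithinAt h (Icc a c) t := by
      apply (hh t ⟨le_of_lt h1, ht.2⟩).mono_of_mem_nhdsWithin
      have : Icc a c ∩ Ioi b ∈ 𝓝[Icc a c] t :=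
        inter_mem_nhdsWithin _ (Ioi_mem_nhds h1)
      filter_upwards [this] with u hu using ⟨le_of_lt hu.2, hu.1.2⟩
    apply this.congr_of_eventuallyEq
    · filter_upwards [inter_mem_nhdsWithin (Icc a c) (Ioi_mem_nhds h1)] with u hu
      simp [not_le.mpr (mem_Ioi.mp hu.2)]
    · simp [not_le.mpr h1]


/-- The local expansion bound coming from the lower derivative bound. -/
lemma locBound {X Y : Type*} [MetricSpace X] [MetricSpace Y] {f : X → Y} {α : ℝ}
    (hα : 0 < α) (hbd : ∀ x : X, ENNReal.ofReal α ≤ lowerDeriv f x) (x : X) :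
    ∀ᶠ z in 𝓝 x, ENNReal.ofReal (α / 2) * edist z x ≤ edist (f z) (f x) := by
  have hbd' := hbd x
  unfold lowerDeriv at hbd'
  have hlt : ENNReal.ofReal (α / 2) < ENNReal.ofReal α := by
    rw [ENNReal.ofReal_lt_ofReal_iff hα]; linarith
  have h := Filter.eventually_lt_of_lt_liminf (lt_of_lt_of_le hlt hbd')
  rw [eventually_nhdsWithin_iff] at h
  filter_upwards [h] with z hz
  rcases eq_or_ne z x with h1 | h1
  · subst h1; simp
  · have h2 := le_of_lt (hz h1)
    rw [ENNReal.le_div_iff_mul_le (Or.inl (edist_pos.mpr h1).ne')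
      (Or.inl (edist_ne_top _ _))] at h2
    exact h2

section MS
variable {X Y : Type*} [MetricSpace X] [MetricSpace Y] {f : X → Y}

/-- Uniqueness of lifts through a local homeomorphism, on a real interval. -/
lemma lift_unique (hf : IsLocalHomeomorph f) {g₁ g₂ : ℝ → X} {a b : ℝ} (hab : a ≤ b)
    (h₁ : ContinuousOn g₁ (Icc a b)) (h₂ : ContinuousOn g₂ (Icc a b))
    (hl : ∀ t ∈ Icc a b, f (g₁ t) = f (g₂ t)) (ha : g₁ a = g₂ a) :
    ∀ t ∈ Icc a b, g₁ t = g₂ t := by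
  have key : Icc a b ⊆ {t | g₁ t = g₂ t} := by
    apply real_induction hab
    · -- closedness
      intro t ht hIco
      rcases eq_or_lt_of_le ht.1 with h1 | h1
      · rw [← h1]; exact ha
      · have hne : (𝓝[Ico a t] t).NeBot := by
          rw [nhdsWithin_Ico_eq_nhdsLT h1]
          infer_instance
        have hle : 𝓝[Ico a t] t ≤ 𝓝[Icc a b] t :=
          nhdsWithin_mono t (fun u hu => ⟨hu.1, le_trans (le_of_lt hu.2) ht.2⟩)
        have t1 : Tendsto g₁ (𝓝[Ico a t] t) (𝓝 (g₁ t)) := (h₁ t ht).mono_left hle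
        have t2 : Tendsto g₂ (𝓝[Ico a t] t) (𝓝 (g₂ t)) := (h₂ t ht).mono_left hle
        have : Tendsto g₁ (𝓝[Ico a t] t) (𝓝 (g₂ t)) := by
          apply t2.congr'
          filter_upwards [self_mem_nhdsWithin] with u hu
          exact (hIco hu).symm
        exact tendsto_nhds_unique this t1 |>.symm
    · -- extension
      intro t ht hIcc
      have heq : g₁ t = g₂ t := hIcc ⟨ht.1, le_refl t⟩
      obtain ⟨e, hmem, hfe⟩ := hf (g₁ t)
      apply extend_of_eventually ht hIcc
      have hev1 : ∀ᶠ u in 𝓝[Icc a b] t, g₁ u ∈ e.source := by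
        apply (h₁ t ⟨ht.1, le_of_lt ht.2⟩).eventually_mem
        exact e.open_source.mem_nhds hmem
      have hev2 : ∀ᶠ u in 𝓝[Icc a b] t, g₂ u ∈ e.source := by
        apply (h₂ t ⟨ht.1, le_of_lt ht.2⟩).eventually_mem
        exact e.open_source.mem_nhds (heq ▸ hmem)
      filter_upwards [hev1, hev2, self_mem_nhdsWithin] with u hu1 hu2 hu3
      have : f (g₁ u) = f (g₂ u) := hl u hu3
      rw [hfe] at this
      exact e.injOn hu1 hu2 this
  exact fun t ht => key ht

/-- The expansion estimate: for a continuous `g`, `β·d(g a, g b) ≤ Var(f∘g)` on `[a,b]`. -/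
lemma expand_bound {β : ENNReal} (hβT : β ≠ ⊤)
    (hloc : ∀ x : X, ∀ᶠ z in 𝓝 x, β * edist z x ≤ edist (f z) (f x))
    {g : ℝ → X} {a b : ℝ} (hab : a ≤ b) (hg : ContinuousOn g (Icc a b)) :
    β * edist (g a) (g b) ≤ eVariationOn (f ∘ g) (Icc a b) := by
  have key : Icc a b ⊆ {t | β * edist (g a) (g t) ≤ eVariationOn (f ∘ g) (Icc a t)} := by
    apply real_induction hab
    · intro t ht hIco
      rcases eq_or_lt_of_le ht.1 with h1 | h1
      · rw [← h1]; simp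
      · have hne : (𝓝[Ico a t] t).NeBot := by
          rw [nhdsWithin_Ico_eq_nhdsLT h1]; infer_instance
        have hle : 𝓝[Ico a t] t ≤ 𝓝[Icc a b] t :=
          nhdsWithin_mono t (fun u hu => ⟨hu.1, le_trans (le_of_lt hu.2) ht.2⟩)
        have tg : Tendsto g (𝓝[Ico a t] t) (𝓝 (g t)) := (hg t ht).mono_left hle
        have tends : Tendsto (fun u => β * edist (g a) (g u)) (𝓝[Ico a t] t)
            (𝓝 (β * edist (g a) (g t))) := by
          apply ENNReal.Tendsto.const_mul
          · exact (continuous_edist.tendsto _).comp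
              ((tendsto_const_nhds (x := g a)).prodMk_nhds tg)
          · exact Or.inr hβT
        apply le_of_tendsto tends
        filter_upwards [self_mem_nhdsWithin] with u hu
        calc β * edist (g a) (g u) ≤ eVariationOn (f ∘ g) (Icc a u) := hIco hu
          _ ≤ eVariationOn (f ∘ g) (Icc a t) :=
            eVariationOn.mono _ (Icc_subset_Icc_right (le_of_lt hu.2))
    · intro t ht hIcc
      apply extend_of_eventually ht hIcc
      have hloct := hloc (g t)
      have hg' : Tendsto g (𝓝[Icc a b] t) (𝓝 (g t)) := hg t ⟨ht.1, le_of_lt ht.2⟩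
      filter_upwards [hg'.eventually hloct, self_mem_nhdsWithin] with u hu1 hu2
      rcases le_or_gt u t with h1 | h1
      · exact hIcc ⟨hu2.1, h1⟩
      · have base : β * edist (g a) (g t) ≤ eVariationOn (f ∘ g) (Icc a t) :=
          hIcc ⟨ht.1, le_refl t⟩
        have step : β * edist (g t) (g u) ≤ edist (f (g u)) (f (g t)) := by
          rw [edist_comm]; exact hu1
        calc β * edist (g a) (g u)
            ≤ β * (edist (g a) (g t) + edist (g t) (g u)) := by
              apply mul_le_mul_right (edist_triangle _ _ _)
          _ = β * edist (g a) (g t) + β * edist (g t) (g u) := by rw [mul_add]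
          _ ≤ eVariationOn (f ∘ g) (Icc a t) + edist (f (g u)) (f (g t)) :=
              add_le_add base step
          _ ≤ eVariationOn (f ∘ g) (Icc a t) + eVariationOn (f ∘ g) (Icc t u) := by
              apply add_le_add_right
              rw [edist_comm]
              exact eVariationOn.edist_le _ (left_mem_Icc.mpr (le_of_lt h1))
                (right_mem_Icc.mpr (le_of_lt h1))
          _ = eVariationOn (f ∘ g) (Icc a u) := by
              have h3 := eVariationOn.Icc_add_Icc (f ∘ g) (s := Icc a u) ht.1 h1.le
                (⟨ht.1, h1.le⟩ : t ∈ Icc a u)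
              rw [inter_eq_self_of_subset_right (Icc_subset_Icc_right h1.le),
                inter_eq_self_of_subset_right (Icc_subset_Icc_left ht.1),
                inter_self] at h3
              exact h3
  exact key (right_mem_Icc.mpr hab)

/-- Existence of lifts of rectifiable paths. -/
lemma lift_exists [CompleteSpace X] (hf : IsLocalHomeomorph f) {β : ENNReal}
    (hβ0 : β ≠ 0) (hβT : β ≠ ⊤)
    (hloc : ∀ x : X, ∀ᶠ z in 𝓝 x, β * edist z x ≤ edist (f z) (f x))
    {γ : ℝ → Y} {a b : ℝ} (hab : a ≤ b) (hγ : ContinuousOn γ (Icc a b))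
    (hvar : eVariationOn γ (Icc a b) ≠ ⊤) {x₀ : X} (h₀ : f x₀ = γ a) :
    ∃ g : ℝ → X, ContinuousOn g (Icc a b) ∧ g a = x₀ ∧ ∀ t ∈ Icc a b, f (g t) = γ t := by
  set S : Set ℝ :=
    {t | ∃ g : ℝ → X, ContinuousOn g (Icc a t) ∧ g a = x₀ ∧ ∀ u ∈ Icc a t, f (g u) = γ u}
    with hS
  have hSdc : ∀ v w : ℝ, v ≤ w → w ∈ S → v ∈ S := by
    rintro v w hvw ⟨g, hg1, hg2, hg3⟩
    exact ⟨g, hg1.mono (Icc_subset_Icc_right hvw), hg2,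
      fun u hu => hg3 u ⟨hu.1, le_trans hu.2 hvw⟩⟩
  have haS : a ∈ S := by
    refine ⟨fun _ => x₀, continuousOn_const, rfl, ?_⟩
    intro u hu
    have : u = a := le_antisymm hu.2 hu.1
    rw [this, h₀]
  suffices hsuff : Icc a b ⊆ S by
    obtain ⟨g, hg1, hg2, hg3⟩ := hsuff (right_mem_Icc.mpr hab)
    exact ⟨g, hg1, hg2, hg3⟩
  apply real_induction hab
  · -- limit step
    intro t ht hIco
    rcases eq_or_lt_of_le ht.1 with h1 | h1
    · rw [← h1]; exact haS
    -- choose lifts below t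
    have hch : ∀ s : ℝ, ∃ g : ℝ → X, s ∈ Ico a t →
        ContinuousOn g (Icc a s) ∧ g a = x₀ ∧ ∀ u ∈ Icc a s, f (g u) = γ u := by
      intro s
      by_cases hs : s ∈ Ico a t
      · exact (hIco hs).imp fun g hg _ => hg
      · exact ⟨fun _ => x₀, fun h => absurd h hs⟩
    choose g hgall using hch
    have hg1 : ∀ s ∈ Ico a t, ContinuousOn (g s) (Icc a s) := fun s hs => (hgall s hs).1
    have hg2 : ∀ s ∈ Ico a t, g s a = x₀ := fun s hs => (hgall s hs).2.1
    have hg3 : ∀ s ∈ Ico a t, ∀ u ∈ Icc a s, f (g s u) = γ u :=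
      fun s hs => (hgall s hs).2.2
    have hcoh : ∀ s ∈ Ico a t, ∀ s' ∈ Ico a t, ∀ u, u ∈ Icc a s → u ≤ s' →
        g s u = g s' u := by
      intro s hs s' hs' u hu hus'
      have hmin : a ≤ min s s' := le_min hs.1 hs'.1
      refine lift_unique hf hmin (hg1 s hs |>.mono (Icc_subset_Icc_right (min_le_left _ _)))
        (hg1 s' hs' |>.mono (Icc_subset_Icc_right (min_le_right _ _))) ?_ ?_ u
        ⟨hu.1, le_min hu.2 hus'⟩
      · intro v hv
        rw [hg3 s hs v ⟨hv.1, le_trans hv.2 (min_le_left _ _)⟩,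
          hg3 s' hs' v ⟨hv.1, le_trans hv.2 (min_le_right _ _)⟩]
      · rw [hg2 s hs, hg2 s' hs']
    set G : ℝ → X := fun u => g ((u + t) / 2) u with hG
    have hmId : ∀ u ∈ Ico a t, (u + t) / 2 ∈ Ico a t ∧ u ≤ (u + t) / 2 := by
      intro u hu
      constructor
      · constructor <;> [linarith [hu.1, hu.2.le]; linarith [hu.2]]
      · linarith [hu.2.le]
    have hGm : ∀ s ∈ Ico a t, ∀ u ∈ Icc a s, G u = g s u := by
      intro s hs u hu
      have hu' : u ∈ Ico a t := ⟨hu.1, lt_of_le_of_lt hu.2 hs.2⟩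
      obtain ⟨hm1, hm2⟩ := hmId u hu'
      exact hcoh _ hm1 s hs u ⟨hu.1, hm2⟩ hu.2
    have hGf : ∀ u ∈ Ico a t, f (G u) = γ u := by
      intro u hu
      obtain ⟨hm1, hm2⟩ := hmId u hu
      rw [hG]
      exact hg3 _ hm1 u ⟨hu.1, hm2⟩
    have hGa : G a = x₀ := by
      have haIco : a ∈ Ico a t := ⟨le_refl a, h1⟩
      obtain ⟨hm1, _⟩ := hmId a haIco
      rw [hG]
      exact hg2 _ hm1
    have hGc : ∀ u ∈ Ico a t, ContinuousWithinAt G (Ico a t) u := by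
      intro u hu
      set s := (u + t) / 2 with hs
      obtain ⟨hm1, hm2⟩ := hmId u hu
      have hus : u < s := by rw [hs]; linarith [hu.2]
      have hmem : Icc a s ∈ 𝓝[Ico a t] u := by
        apply Filter.mem_of_superset (inter_mem_nhdsWithin _ (Iio_mem_nhds hus))
        exact fun v hv => ⟨hv.1.1, le_of_lt hv.2⟩
      have hc : ContinuousWithinAt (g s) (Icc a s) u := hg1 s hm1 u ⟨hu.1, hm2⟩
      apply (hc.mono_of_mem_nhdsWithin hmem).congr_of_eventuallyEq
      · filter_upwards [hmem] with v hv
        exact hGm s hm1 v hv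
      · exact hGm s hm1 u ⟨hu.1, hm2⟩
    -- the variation function
    have hfin : ∀ u v : ℝ, a ≤ u → v ≤ b → eVariationOn γ (Icc u v) ≠ ⊤ := by
      intro u v hu hv htop
      exact hvar (top_le_iff.mp (htop ▸ eVariationOn.mono γ (Icc_subset_Icc hu hv)))
    set V : ℝ → ℝ := fun u => (eVariationOn γ (Icc a u)).toReal with hV
    have hVmono : ∀ u v : ℝ, u ≤ v → v ≤ b → V u ≤ V v := by
      intro u v huv hvb
      exact ENNReal.toReal_mono (hfin a v le_rfl hvb)
        (eVariationOn.mono γ (Icc_subset_Icc_right huv))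
    have hsplit : ∀ u v : ℝ, a ≤ u → u ≤ v → v ≤ b →
        (eVariationOn γ (Icc u v)).toReal = V v - V u := by
      intro u v hau huv hvb
      have h3 := eVariationOn.Icc_add_Icc γ (s := Icc a v) hau huv
        (⟨hau, huv⟩ : u ∈ Icc a v)
      rw [inter_eq_self_of_subset_right (Icc_subset_Icc_right huv),
        inter_eq_self_of_subset_right (Icc_subset_Icc_left hau), inter_self] at h3
      have h4 := congrArg ENNReal.toReal h3
      rw [ENNReal.toReal_add (hfin a u le_rfl (le_trans huv hvb)) (hfin u v hau hvb)] at h4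
      simp only [hV]
      linarith [h4]
    set βr : ℝ := β.toReal with hβr
    have hβrpos : 0 < βr := ENNReal.toReal_pos hβ0 hβT
    have hdistE : ∀ u v : ℝ, u ∈ Ico a t → v ∈ Ico a t → u ≤ v →
        β * edist (G u) (G v) ≤ eVariationOn γ (Icc u v) := by
      intro u v hu hv huv
      have hc : ContinuousOn (g v) (Icc u v) := (hg1 v hv).mono (Icc_subset_Icc_left hu.1)
      have hb2 := expand_bound hβT hloc huv hc
      rw [hGm v hv u ⟨hu.1, huv⟩, hGm v hv v ⟨hv.1, le_rfl⟩]
      refine le_trans hb2 (le_of_eq ?_)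
      apply eVariationOn.eq_of_eqOn
      intro w hw
      exact hg3 v hv w ⟨le_trans hu.1 hw.1, hw.2⟩
    have hdistR : ∀ u v : ℝ, u ∈ Ico a t → v ∈ Ico a t → u ≤ v →
        βr * dist (G u) (G v) ≤ V v - V u := by
      intro u v hu hv huv
      have hvb : v ≤ b := le_trans hv.2.le ht.2
      have h2 := hdistE u v hu hv huv
      have h3 := ENNReal.toReal_mono (hfin u v hu.1 hvb) h2
      rw [ENNReal.toReal_mul] at h3
      rw [← hsplit u v hu.1 huv hvb]
      calc βr * dist (G u) (G v) = β.toReal * (edist (G u) (G v)).toReal := by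
            rw [hβr, dist_edist]
        _ ≤ _ := h3
    have hbdd2 : BddAbove (V '' Ico a t) := by
      refine ⟨V b, ?_⟩
      rintro _ ⟨u, hu, rfl⟩
      exact hVmono u b (le_trans hu.2.le ht.2) le_rfl
    have hne2 : (V '' Ico a t).Nonempty := ⟨V a, a, ⟨le_rfl, h1⟩, rfl⟩
    set Ls := sSup (V '' Ico a t) with hLs
    have hcau : ∀ ε : ℝ, 0 < ε → ∃ s₀ ∈ Ico a t, ∀ u ∈ Ico a t, ∀ v ∈ Ico a t,
        s₀ ≤ u → s₀ ≤ v → dist (G u) (G v) < ε := by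
      intro ε hε
      have hlt : Ls - βr * ε / 2 < Ls := by nlinarith
      obtain ⟨w, hwmem, hw⟩ := exists_lt_of_lt_csSup hne2 hlt
      obtain ⟨s₀, hs₀, rfl⟩ := hwmem
      refine ⟨s₀, hs₀, ?_⟩
      have key : ∀ u v : ℝ, u ∈ Ico a t → v ∈ Ico a t → s₀ ≤ u → u ≤ v →
          dist (G u) (G v) < ε := by
        intro u v hu hv hsu huv
        have h2 := hdistR u v hu hv huv
        have h3 : V v ≤ Ls := le_csSup hbdd2 ⟨v, hv, rfl⟩
        have h4 : V s₀ ≤ V u := hVmono s₀ u hsu (le_trans hu.2.le ht.2)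
        nlinarith [dist_nonneg (x := G u) (y := G v)]
      intro u hu v hv hsu hsv
      rcases le_total u v with h5 | h5
      · exact key u v hu hv hsu h5
      · rw [dist_comm]; exact key v u hv hu hsv h5
    set u_ : ℕ → ℝ := fun n => t - (t - a) / (n + 1) with hu_
    have hu_mem : ∀ n : ℕ, u_ n ∈ Ico a t := by
      intro n
      have hta : 0 < t - a := by linarith
      have h2 : (t - a) / (n + 1) ≤ t - a := by
        apply div_le_self hta.le
        have : (0:ℝ) ≤ n := Nat.cast_nonneg n
        linarith
      have h3 : 0 < (t - a) / (n + 1) := by positivity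
      constructor
      · show a ≤ t - (t - a) / (↑n + 1)
        linarith
      · show t - (t - a) / (↑n + 1) < t
        linarith
    have hu_tend : Tendsto u_ atTop (𝓝 t) := by
      have h2 : Tendsto (fun n : ℕ => (t - a) * (1 / (n + 1))) atTop (𝓝 ((t - a) * 0)) :=
        tendsto_const_nhds.mul tendsto_one_div_add_atTop_nhds_zero_nat
      have h3 : Tendsto (fun n : ℕ => t - (t - a) * (1 / (n + 1))) atTop (𝓝 (t - (t - a) * 0)) :=
        tendsto_const_nhds.sub h2
      simp only [mul_zero, sub_zero] at h3
      convert h3 using 2 with n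
      rw [hu_]
      ring
    have hGcauchy : CauchySeq (fun n => G (u_ n)) := by
      rw [Metric.cauchySeq_iff]
      intro ε hε
      obtain ⟨s₀, hs₀, hkey⟩ := hcau ε hε
      obtain ⟨N, hN⟩ := eventually_atTop.mp (hu_tend.eventually (Ioi_mem_nhds hs₀.2))
      exact ⟨N, fun m hm n hn => hkey _ (hu_mem m) _ (hu_mem n)
        (le_of_lt (hN m hm)) (le_of_lt (hN n hn))⟩
    obtain ⟨xc, hxc⟩ := cauchySeq_tendsto_of_complete hGcauchy
    have hGlim : Tendsto G (𝓝[Ico a t] t) (𝓝 xc) := by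
      rw [Metric.tendsto_nhdsWithin_nhds]
      intro ε hε
      obtain ⟨s₀, hs₀, hkey⟩ := hcau (ε/2) (by linarith)
      refine ⟨t - s₀, by linarith [hs₀.2], ?_⟩
      intro u hu hudist
      have hus : s₀ ≤ u := by
        rw [Real.dist_eq] at hudist
        have h2 := abs_lt.mp hudist
        linarith [h2.1]
      have hev1 := eventually_atTop.mp (hu_tend.eventually (Ioi_mem_nhds hs₀.2))
      obtain ⟨N1, hN1⟩ := hev1
      obtain ⟨N2, hN2⟩ := Metric.tendsto_atTop.mp hxc (ε/2) (by linarith)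
      set n := max N1 N2
      have h6 : dist (G u) (G (u_ n)) < ε / 2 :=
        hkey u hu _ (hu_mem n) hus (le_of_lt (hN1 n (le_max_left _ _)))
      have h7 : dist (G (u_ n)) xc < ε / 2 := hN2 n (le_max_right _ _)
      calc dist (G u) xc ≤ dist (G u) (G (u_ n)) + dist (G (u_ n)) xc := dist_triangle _ _ _
        _ < ε / 2 + ε / 2 := add_lt_add h6 h7
        _ = ε := by ring
    have hfxc : f xc = γ t := by
      have h2 : Tendsto (fun n => f (G (u_ n))) atTop (𝓝 (f xc)) :=
        (hf.continuous.tendsto xc).comp hxc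
      have h3 : Tendsto (fun n => γ (u_ n)) atTop (𝓝 (γ t)) := by
        apply (hγ t ht).tendsto.comp
        apply tendsto_nhdsWithin_of_tendsto_nhds_of_eventually_within _ hu_tend
        filter_upwards with n using ⟨(hu_mem n).1, le_trans (hu_mem n).2.le ht.2⟩
      have h4 : (fun n => f (G (u_ n))) = fun n => γ (u_ n) :=
        funext fun n => hGf _ (hu_mem n)
      rw [h4] at h2
      exact tendsto_nhds_unique h2 h3
    refine ⟨fun u => if u < t then G u else xc, ?_, ?_, ?_⟩
    · intro u hu
      rcases lt_or_eq_of_le hu.2 with h2 | h2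
      · have hmem : Ico a t ∈ 𝓝[Icc a t] u :=
          mem_of_superset (inter_mem_nhdsWithin _ (Iio_mem_nhds h2))
            (fun v hv => ⟨hv.1.1, hv.2⟩)
        apply ((hGc u ⟨hu.1, h2⟩).mono_of_mem_nhdsWithin hmem).congr_of_eventuallyEq
        · filter_upwards [hmem] with v hv
          simp [hv.2]
        · simp [h2]
      · subst h2
        unfold ContinuousWithinAt
        show Tendsto (fun v => if v < u then G v else xc) (𝓝[Icc a u] u)
          (𝓝 (if u < u then G u else xc))
        rw [if_neg (lt_irrefl u)]
        have hdecomp : Icc a u = Ico a u ∪ {u} := (Ico_union_right hu.1).symm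
        rw [hdecomp, nhdsWithin_union, tendsto_sup]
        constructor
        · apply hGlim.congr'
          filter_upwards [self_mem_nhdsWithin] with v hv
          simp [hv.2]
        · rw [nhdsWithin_singleton]
          rw [tendsto_pure_left]
          intro s hs
          simpa using mem_of_mem_nhds hs
    · show (if a < t then G a else xc) = x₀
      rw [if_pos h1]
      exact hGa
    · intro u hu
      show f (if u < t then G u else xc) = γ u
      by_cases h2 : u < t
      · rw [if_pos h2]
        exact hGf u ⟨hu.1, h2⟩
      · rw [if_neg h2]
        have h3 : u = t := le_antisymm hu.2 (not_lt.mp h2)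
        rw [h3, hfxc]
  · -- extension step
    intro t ht hIcc
    obtain ⟨g, hg1, hg2, hg3⟩ := hIcc (right_mem_Icc.mpr ht.1)
    obtain ⟨e, hmem, hfe⟩ := hf (g t)
    have htIcc : t ∈ Icc a b := ⟨ht.1, ht.2.le⟩
    have hγt : γ t ∈ e.target := by
      have h2 : f (g t) = γ t := hg3 t (right_mem_Icc.mpr ht.1)
      rw [← h2, hfe]
      exact e.map_source hmem
    have hev : ∀ᶠ u in 𝓝[Icc a b] t, γ u ∈ e.target :=
      (hγ t htIcc).eventually_mem (e.open_target.mem_nhds hγt)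
    rw [eventually_nhdsWithin_iff, Metric.eventually_nhds_iff] at hev
    obtain ⟨δ, hδ, hball⟩ := hev
    refine ⟨δ / 2, by linarith, ?_⟩
    set b' := min (t + δ / 2) b with hb'
    have htb' : t ≤ b' := le_min (by linarith) ht.2.le
    have hb'b : b' ≤ b := min_le_right _ _
    have hint : ∀ u ∈ Icc t b', γ u ∈ e.target := by
      intro u hu
      rcases eq_or_lt_of_le hu.1 with h2 | h2
      · rw [← h2]; exact hγt
      · apply hball
        · rw [Real.dist_eq, abs_of_pos (by linarith)]
          have : u ≤ t + δ / 2 := le_trans hu.2 (min_le_left _ _)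
          linarith
        · exact ⟨le_trans ht.1 hu.1, le_trans hu.2 hb'b⟩
    have hb'S : b' ∈ S := by
      refine ⟨fun u => if u ≤ t then g u else e.symm (γ u), ?_, ?_, ?_⟩
      · apply glue_continuousOn ht.1 htb' hg1 ?_ ?_
        · apply e.continuousOn_symm.comp (hγ.mono ?_) ?_
          · exact Icc_subset_Icc (le_trans ht.1 le_rfl) hb'b |>.trans (subset_refl _)
          · exact fun u hu => hint u hu
        · have h2 : f (g t) = γ t := hg3 t (right_mem_Icc.mpr ht.1)
          rw [← h2, hfe]
          exact (e.left_inv hmem).symm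
      · show (if a ≤ t then g a else _) = x₀
        rw [if_pos ht.1]
        exact hg2
      · intro u hu
        show f (if u ≤ t then g u else e.symm (γ u)) = γ u
        by_cases h2 : u ≤ t
        · rw [if_pos h2]
          exact hg3 u ⟨hu.1, h2⟩
        · rw [if_neg h2]
          have h3 : γ u ∈ e.target := hint u ⟨le_of_not_ge h2, hu.2⟩
          rw [hfe]
          exact e.right_inv h3
    intro v hv
    exact hSdc v b' hv.2 hb'S

end MS
section MS2
variable {X Y : Type*} [MetricSpace X] [MetricSpace Y] {f : X → Y}

/-- The chain lemma: near any `y ∈ U`, the endpoint of the lift of `H y'` is given by a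
single chart. -/
lemma chain_lemma (hf : IsLocalHomeomorph f) {U : Set Y} (hUo : IsOpen U)
    {H : Y → ℝ → Y}
    (hHc : ContinuousOn (fun p : Y × ℝ => H p.1 p.2) (U ×ˢ Icc (0:ℝ) 1))
    {x : X} (hfx : ∀ y' ∈ U, f x = H y' 0)
    {L : Y → ℝ → X}
    (hLc : ∀ y ∈ U, ContinuousOn (L y) (Icc 0 1))
    (hL0 : ∀ y ∈ U, L y 0 = x)
    (hLf : ∀ y ∈ U, ∀ t ∈ Icc (0:ℝ) 1, f (L y t) = H y t)
    {y : Y} (hy : y ∈ U) :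
    ∃ N : Set Y, IsOpen N ∧ y ∈ N ∧ N ⊆ U ∧ ∃ e : OpenPartialHomeomorph X Y, f = e ∧
      ∀ y' ∈ N, H y' 1 ∈ e.target ∧ L y' 1 = e.symm (H y' 1) := by
  set Q : Set ℝ := {t | ∃ N : Set Y, IsOpen N ∧ y ∈ N ∧ N ⊆ U ∧
    ∃ e : OpenPartialHomeomorph X Y, f = e ∧ L y t ∈ e.source ∧
      ∀ y' ∈ N, H y' t ∈ e.target ∧ L y' t = e.symm (H y' t)} with hQ
  -- auxiliary: continuity of H at (y, t) relative to a chart target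
  have hH2 : ∀ t ∈ Icc (0:ℝ) 1, ∀ e : OpenPartialHomeomorph X Y, H y t ∈ e.target →
      ∃ N₂ : Set Y, ∃ δ₂ : ℝ, IsOpen N₂ ∧ y ∈ N₂ ∧ 0 < δ₂ ∧
        ∀ y' ∈ N₂ ∩ U, ∀ u ∈ Icc (0:ℝ) 1, |u - t| < δ₂ → H y' u ∈ e.target := by
    intro t ht e het
    have hcw : ContinuousWithinAt (fun p : Y × ℝ => H p.1 p.2) (U ×ˢ Icc (0:ℝ) 1) (y, t) :=
      hHc (y, t) ⟨hy, ht⟩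
    have h2 : ∀ᶠ p in 𝓝[U ×ˢ Icc (0:ℝ) 1] (y, t), H p.1 p.2 ∈ e.target :=
      hcw.eventually_mem (e.open_target.mem_nhds het)
    rw [eventually_nhdsWithin_iff, Metric.eventually_nhds_iff] at h2
    obtain ⟨ε, hε, hball⟩ := h2
    refine ⟨Metric.ball y ε, ε, Metric.isOpen_ball, Metric.mem_ball_self hε, hε, ?_⟩
    intro y' hy' u hu hut
    have hd : dist (y', u) (y, t) < ε := by
      rw [Prod.dist_eq]
      apply max_lt hy'.1
      rwa [Real.dist_eq]
    exact hball hd ⟨hy'.2, hu⟩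
  -- continuity of H y' in the first variable at time t₀
  have hHcy : ∀ t₀ ∈ Icc (0:ℝ) 1, ContinuousWithinAt (fun y' => H y' t₀) U y := by
    intro t₀ ht₀
    have h2 : ContinuousWithinAt (fun p : Y × ℝ => H p.1 p.2) (U ×ˢ Icc (0:ℝ) 1) (y, t₀) :=
      hHc _ ⟨hy, ht₀⟩
    have hmap : Tendsto (fun y' : Y => (y', t₀)) (𝓝[U] y) (𝓝[U ×ˢ Icc (0:ℝ) 1] (y, t₀)) :=
      ((Continuous.prodMk continuous_id continuous_const :
        Continuous fun y' : Y => (y', t₀)).continuousWithinAt).tendsto_nhdsWithin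
        (fun y' hy' => ⟨hy', ht₀⟩)
    exact Filter.Tendsto.comp h2 hmap
  have hHyc : ∀ y' ∈ U, ContinuousOn (fun u => H y' u) (Icc (0:ℝ) 1) := by
    intro y' hy'
    intro u hu
    have h2 := hHc (y', u) ⟨hy', hu⟩
    have hmap : Tendsto (fun v : ℝ => (y', v)) (𝓝[Icc (0:ℝ) 1] u) (𝓝[U ×ˢ Icc (0:ℝ) 1] (y', u)) :=
      ((Continuous.prodMk continuous_const continuous_id :
        Continuous fun v : ℝ => (y', v)).continuousWithinAt).tendsto_nhdsWithin
        (fun v hv => ⟨hy', hv⟩)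
    show Tendsto ((fun p : Y × ℝ => H p.1 p.2) ∘ (fun v : ℝ => (y', v))) (𝓝[Icc (0:ℝ) 1] u)
      (𝓝 (H y' u))
    exact Filter.Tendsto.comp h2 hmap
  have hQ0 : (0:ℝ) ∈ Q := by
    obtain ⟨e, hmem, hfe⟩ := hf x
    refine ⟨U, hUo, hy, subset_refl U, e, hfe, ?_, ?_⟩
    · rw [hL0 y hy]; exact hmem
    · intro y' hy'
      have h2 : H y' 0 = e x := by rw [← hfx y' hy', hfe]
      constructor
      · rw [h2]; exact e.map_source hmem
      · rw [hL0 y' hy', h2, e.left_inv hmem]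
  have key : Icc (0:ℝ) 1 ⊆ Q := by
    apply real_induction zero_le_one
    · -- limit step
      intro t ht hIco
      rcases eq_or_lt_of_le ht.1 with h1 | h1
      · rw [← h1]; exact hQ0
      obtain ⟨estar, hsrc, hfe⟩ := hf (L y t)
      have hHyt : H y t ∈ estar.target := by
        rw [← hLf y hy t ht, hfe]
        exact estar.map_source hsrc
      obtain ⟨N₂, δ₂, hN₂o, hyN₂, hδ₂, hN₂⟩ := hH2 t ht estar hHyt
      -- find t₀ < t close, with L y t₀ ∈ estar.source and Q t₀
      have hne : (𝓝[Ico 0 t] t).NeBot := by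
        rw [nhdsWithin_Ico_eq_nhdsLT h1]; infer_instance
      have hle : 𝓝[Ico 0 t] t ≤ 𝓝[Icc 0 1] t :=
        nhdsWithin_mono t (fun u hu => ⟨hu.1, le_trans hu.2.le ht.2⟩)
      have hev1 : ∀ᶠ u in 𝓝[Ico 0 t] t, L y u ∈ estar.source :=
        ((hLc y hy t ht).eventually_mem (estar.open_source.mem_nhds hsrc)).filter_mono hle
      have hev2 : ∀ᶠ u in 𝓝[Ico 0 t] t, t - δ₂ < u :=
        eventually_nhdsWithin_of_eventually_nhds (eventually_gt_nhds (by linarith))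
      obtain ⟨t₀, ⟨ht₀src, ht₀δ⟩, ht₀mem⟩ := ((hev1.and hev2).and self_mem_nhdsWithin).exists
      have ht₀Icc : t₀ ∈ Icc (0:ℝ) 1 := ⟨ht₀mem.1, le_trans ht₀mem.2.le ht.2⟩
      obtain ⟨N₀, hN₀o, hyN₀, hN₀U, e₀, hfe₀, hLsrc₀, hprop₀⟩ := hIco ht₀mem
      -- the map y' ↦ e₀.symm (H y' t₀) is continuous at y within U
      have hmcont : ContinuousWithinAt (fun y' => e₀.symm (H y' t₀)) U y := by
        apply ContinuousAt.comp_continuousWithinAt _ (hHcy t₀ ht₀Icc)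
        apply e₀.symm.continuousAt
        rw [OpenPartialHomeomorph.symm_source]
        exact (hprop₀ y hyN₀).1
      have hmy : e₀.symm (H y t₀) = L y t₀ := ((hprop₀ y hyN₀).2).symm
      have hev3 : ∀ᶠ y' in 𝓝[U] y, e₀.symm (H y' t₀) ∈ estar.source := by
        apply hmcont.eventually_mem
        apply estar.open_source.mem_nhds
        show e₀.symm (H y t₀) ∈ estar.source
        rw [hmy]; exact ht₀src
      rw [eventually_nhdsWithin_iff, eventually_nhds_iff] at hev3
      obtain ⟨O, hO, hOo, hyO⟩ := hev3
      refine ⟨N₀ ∩ N₂ ∩ O ∩ U, ((hN₀o.inter hN₂o).inter hOo).inter hUo,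
        ⟨⟨⟨hyN₀, hyN₂⟩, hyO⟩, hy⟩, inter_subset_right, estar, hfe, hsrc, ?_⟩
      intro y' hy'
      obtain ⟨⟨⟨hy'N₀, hy'N₂⟩, hy'O⟩, hy'U⟩ := hy'
      have htarget : ∀ u ∈ Icc t₀ t, H y' u ∈ estar.target := by
        intro u hu
        apply hN₂ y' ⟨hy'N₂, hy'U⟩ u ⟨le_trans ht₀mem.1 hu.1, le_trans hu.2 ht.2⟩
        rw [abs_of_nonpos (by linarith [hu.2])]
        linarith [hu.1]
      have hρc : ContinuousOn (fun u => estar.symm (H y' u)) (Icc t₀ t) := by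
        apply estar.continuousOn_symm.comp ((hHyc y' hy'U).mono ?_) htarget
        exact Icc_subset_Icc ht₀mem.1 ht.2
      have hLy'c : ContinuousOn (L y') (Icc t₀ t) :=
        (hLc y' hy'U).mono (Icc_subset_Icc ht₀mem.1 ht.2)
      have hlifteq : ∀ u ∈ Icc t₀ t, f (L y' u) = f (estar.symm (H y' u)) := by
        intro u hu
        have huIcc : u ∈ Icc (0:ℝ) 1 := ⟨le_trans ht₀mem.1 hu.1, le_trans hu.2 ht.2⟩
        rw [hLf y' hy'U u huIcc]
        rw [hfe]
        exact (estar.right_inv (htarget u hu)).symm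
      have heqt₀ : L y' t₀ = estar.symm (H y' t₀) := by
        have h2 : L y' t₀ = e₀.symm (H y' t₀) := (hprop₀ y' hy'N₀).2
        have h3 : e₀.symm (H y' t₀) ∈ estar.source := hO y' hy'O hy'U
        have h4 : f (L y' t₀) = H y' t₀ := hLf y' hy'U t₀ ht₀Icc
        have h5 : estar (e₀.symm (H y' t₀)) = H y' t₀ := by
          rw [← hfe, ← h2, h4]
        have h6 : estar.symm (H y' t₀) = e₀.symm (H y' t₀) := by
          conv_lhs => rw [← h5]
          exact estar.left_inv h3
        rw [h2, h6]
      have := lift_unique hf ht₀mem.2.le hLy'c hρc hlifteq heqt₀ t (right_mem_Icc.mpr ht₀mem.2.le)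
      exact ⟨htarget t (right_mem_Icc.mpr ht₀mem.2.le), this⟩
    · -- extension step
      intro t ht hIcc
      obtain ⟨N, hNo, hyN, hNU, e, hfe, hLsrc, hprop⟩ := hIcc (right_mem_Icc.mpr ht.1)
      have htIcc : t ∈ Icc (0:ℝ) 1 := ⟨ht.1, ht.2.le⟩
      obtain ⟨N₂, δ₂, hN₂o, hyN₂, hδ₂, hN₂⟩ := hH2 t htIcc e (hprop y hyN).1
      refine ⟨δ₂ / 2, by linarith, ?_⟩
      intro t' ht'
      rcases le_or_gt t' t with h2 | h2
      · exact hIcc ⟨ht'.1, h2⟩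
      have ht'1 : t' ≤ 1 := le_trans ht'.2 (min_le_right _ _)
      have ht'δ : t' ≤ t + δ₂ / 2 := le_trans ht'.2 (min_le_left _ _)
      have hclaim : ∀ y' ∈ U, y' ∈ N → y' ∈ N₂ →
          H y' t' ∈ e.target ∧ L y' t' = e.symm (H y' t') := by
        intro y' hy'U hy'N hy'N₂
        have htarget : ∀ u ∈ Icc t t', H y' u ∈ e.target := by
          intro u hu
          apply hN₂ y' ⟨hy'N₂, hy'U⟩ u ⟨le_trans ht.1 hu.1, le_trans hu.2 ht'1⟩
          rw [abs_of_nonneg (by linarith [hu.1])]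
          linarith [hu.2]
        have hρc : ContinuousOn (fun u => e.symm (H y' u)) (Icc t t') :=
          e.continuousOn_symm.comp ((hHyc y' hy'U).mono (Icc_subset_Icc ht.1 ht'1)) htarget
        have hLy'c : ContinuousOn (L y') (Icc t t') :=
          (hLc y' hy'U).mono (Icc_subset_Icc ht.1 ht'1)
        have hlifteq : ∀ u ∈ Icc t t', f (L y' u) = f (e.symm (H y' u)) := by
          intro u hu
          rw [hLf y' hy'U u ⟨le_trans ht.1 hu.1, le_trans hu.2 ht'1⟩, hfe]
          exact (e.right_inv (htarget u hu)).symm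
        have heqt : L y' t = e.symm (H y' t) := (hprop y' hy'N).2
        have h3 := lift_unique hf h2.le hLy'c hρc hlifteq heqt t' (right_mem_Icc.mpr h2.le)
        exact ⟨htarget t' (right_mem_Icc.mpr h2.le), h3⟩
      refine ⟨N ∩ N₂ ∩ U, (hNo.inter hN₂o).inter hUo, ⟨⟨hyN, hyN₂⟩, hy⟩,
        inter_subset_right, e, hfe, ?_, ?_⟩
      · rw [(hclaim y hy hyN hyN₂).2]
        exact e.map_target (hclaim y hy hyN hyN₂).1
      · rintro y' ⟨⟨hy'N, hy'N₂⟩, hy'U⟩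
        exact hclaim y' hy'U hy'N hy'N₂
  obtain ⟨N, hNo, hyN, hNU, e, hfe, _, hprop⟩ := key (right_mem_Icc.mpr zero_le_one)
  exact ⟨N, hNo, hyN, hNU, e, hfe, hprop⟩

end MS2

end AuxLemmas

/-- a local homeomorphism `f : X → Y`, with `X` complete and `Y`
path-connected and locally contractible via rectifiable paths, such that
`D⁻ₓ f ≥ α > 0` for all `x`, is a covering projection. -/
theorem stmt12 {X Y : Type*} [MetricSpace X] [MetricSpace Y] [CompleteSpace X]
    [PathConnectedSpace Y]
    (f : X → Y) (hf : IsLocalHomeomorph f)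
    (hY : LocallyRContractible Y)
    (α : ℝ) (hα : 0 < α) (hbd : ∀ x : X, ENNReal.ofReal α ≤ lowerDeriv f x) :
    IsCoveringMap f := by

  classical
  set β : ENNReal := ENNReal.ofReal (α / 2) with hβ
  have hβ0 : β ≠ 0 := by
    rw [hβ, Ne, ENNReal.ofReal_eq_zero, not_le]
    linarith
  have hβT : β ≠ ⊤ := ENNReal.ofReal_ne_top
  have hloc : ∀ x : X, ∀ᶠ z in 𝓝 x, β * edist z x ≤ edist (f z) (f x) :=
    locBound hα hbd
  -- generic one-variable continuity of H
  have hHyc : ∀ (U : Set Y) (H : Y → ℝ → Y),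
      ContinuousOn (fun p : Y × ℝ => H p.1 p.2) (U ×ˢ Icc (0:ℝ) 1) →
      ∀ y' ∈ U, ContinuousOn (fun u => H y' u) (Icc (0:ℝ) 1) := by
    intro U H hHc y' hy' u hu
    have h2 := hHc (y', u) ⟨hy', hu⟩
    have hmap : Tendsto (fun v : ℝ => (y', v)) (𝓝[Icc (0:ℝ) 1] u)
        (𝓝[U ×ˢ Icc (0:ℝ) 1] (y', u)) :=
      ((Continuous.prodMk continuous_const continuous_id :
        Continuous fun v : ℝ => (y', v)).continuousWithinAt).tendsto_nhdsWithin
        (fun v hv => ⟨hy', hv⟩)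
    show Tendsto ((fun p : Y × ℝ => H p.1 p.2) ∘ (fun v : ℝ => (y', v))) (𝓝[Icc (0:ℝ) 1] u)
      (𝓝 (H y' u))
    exact Filter.Tendsto.comp h2 hmap
  -- reversal of paths
  have hrev : ∀ (γ : ℝ → Y), ContinuousOn γ (Icc (0:ℝ) 1) →
      ContinuousOn (fun t => γ (1 - t)) (Icc (0:ℝ) 1) := by
    intro γ hγ
    apply hγ.comp ((continuous_const.sub continuous_id).continuousOn)
    intro t ht
    simp only [id_eq, Pi.sub_apply, mem_Icc]
    constructor <;> [linarith [ht.2]; linarith [ht.1]]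
  have hrevvar : ∀ (γ : ℝ → Y), eVariationOn γ (Icc (0:ℝ) 1) ≠ ⊤ →
      eVariationOn (fun t => γ (1 - t)) (Icc (0:ℝ) 1) ≠ ⊤ := by
    intro γ hγ
    have hanti : AntitoneOn (fun t : ℝ => 1 - t) (Icc (0:ℝ) 1) :=
      fun u _ v _ huv => by simp only; linarith
    have h2 := eVariationOn.comp_eq_of_antitoneOn γ (fun t : ℝ => 1 - t) hanti
    have h3 : ((fun t : ℝ => 1 - t) '' Icc 0 1) = Icc (0:ℝ) 1 := by
      rw [Set.image_const_sub_Icc]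
      norm_num
    rw [h3] at h2
    show eVariationOn (γ ∘ fun t : ℝ => 1 - t) (Icc (0:ℝ) 1) ≠ ⊤
    rw [h2]
    exact hγ
  -- surjectivity given a point of X
  have hsurj : ∀ (_ : X) (y : Y), ∃ x, f x = y := by
    intro z₀ y
    have hne : (range f).Nonempty := ⟨f z₀, mem_range_self z₀⟩
    have hopen : IsOpen (range f) := hf.isOpenMap.isOpen_range
    have hclosed : IsClosed (range f) := by
      apply isClosed_of_closure_subset
      intro y₀ hy₀cl
      obtain ⟨U, hUo, hy₀U, H, hHc, hHmaps, hHy₀, hH01, hHvar⟩ := hY y₀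
      obtain ⟨y', hy'U, z, hz⟩ := mem_closure_iff_nhds.mp hy₀cl U (hUo.mem_nhds hy₀U)
      set γ : ℝ → Y := fun t => H y' (1 - t) with hγdef
      have hγc : ContinuousOn γ (Icc (0:ℝ) 1) := hrev _ (hHyc U H hHc y' hy'U)
      have hγv : eVariationOn γ (Icc (0:ℝ) 1) ≠ ⊤ := hrevvar _ (hHvar y' hy'U)
      have h₀ : f z = γ 0 := by
        show f z = H y' (1 - 0)
        rw [show (1:ℝ) - 0 = 1 by ring, (hH01 y' hy'U).2, hz]
      obtain ⟨g, hgc, hg0, hgf⟩ := lift_exists hf hβ0 hβT hloc zero_le_one hγc hγv h₀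
      refine ⟨g 1, ?_⟩
      rw [hgf 1 (right_mem_Icc.mpr zero_le_one)]
      show H y' (1 - 1) = y₀
      rw [show (1:ℝ) - 1 = 0 by ring, (hH01 y' hy'U).1]
    have huniv : range f = univ := IsClopen.eq_univ ⟨hclosed, hopen⟩ hne
    have : y ∈ range f := huniv ▸ mem_univ y
    exact this
  -- discreteness of fibers
  have hdisc : ∀ y₀ : Y, DiscreteTopology ↥(f ⁻¹' {y₀}) := by
    intro y₀
    rw [discreteTopology_iff_isOpen_singleton]
    rintro ⟨x, hx⟩
    obtain ⟨e, hmem, hfe⟩ := hf x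
    have hset : ({(⟨x, hx⟩ : ↥(f ⁻¹' {y₀}))} : Set ↥(f ⁻¹' {y₀}))
        = Subtype.val ⁻¹' e.source := by
      ext ⟨x', hx'⟩
      simp only [mem_singleton_iff, mem_preimage, Subtype.mk_eq_mk]
      constructor
      · rintro rfl; exact hmem
      · intro hx'src
        apply e.injOn hx'src hmem
        rw [← hfe]
        have h1 : f x' = y₀ := hx'
        have h2 : f x = y₀ := hx
        rw [h1, h2]
    rw [hset]
    exact e.open_source.preimage continuous_subtype_val
  -- main construction
  intro y₀
  obtain ⟨U, hUo, hy₀U, H, hHc, hHmaps, hHy₀, hH01, hHvar⟩ := hY y₀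
  haveI hD : DiscreteTopology ↥(f ⁻¹' {y₀}) := hdisc y₀
  have hHy'c := hHyc U H hHc
  -- existence of lifts of H y starting at any point of the fiber
  have hex : ∀ (x : X), f x = y₀ → ∀ y ∈ U, ∃ g : ℝ → X,
      ContinuousOn g (Icc 0 1) ∧ g 0 = x ∧ ∀ t ∈ Icc (0:ℝ) 1, f (g t) = H y t := by
    intro x hx y hy
    have h₀ : f x = H y 0 := by rw [hx, (hH01 y hy).1]
    exact lift_exists hf hβ0 hβT hloc zero_le_one (hHy'c y hy) (hHvar y hy) h₀
  have hch : ∀ (x : X) (y : Y), ∃ g : ℝ → X, f x = y₀ → y ∈ U →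
      ContinuousOn g (Icc 0 1) ∧ g 0 = x ∧ ∀ t ∈ Icc (0:ℝ) 1, f (g t) = H y t := by
    intro x y
    by_cases hc : f x = y₀ ∧ y ∈ U
    · obtain ⟨g, h⟩ := hex x hc.1 y hc.2
      exact ⟨g, fun _ _ => h⟩
    · exact ⟨fun _ => x, fun h1 h2 => absurd ⟨h1, h2⟩ hc⟩
  choose L hL using hch
  -- uniqueness wrapper
  have huniq : ∀ (x : X) (hx : f x = y₀) (y : Y) (hy : y ∈ U) (g : ℝ → X),
      ContinuousOn g (Icc 0 1) → g 0 = x → (∀ t ∈ Icc (0:ℝ) 1, f (g t) = H y t) →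
      ∀ t ∈ Icc (0:ℝ) 1, g t = L x y t := by
    intro x hx y hy g hgc hg0 hgf
    apply lift_unique hf zero_le_one hgc (hL x y hx hy).1
    · intro t ht
      rw [hgf t ht, (hL x y hx hy).2.2 t ht]
    · rw [hg0, (hL x y hx hy).2.1]
  have hsecf : ∀ (x : X) (hx : f x = y₀) (y : Y) (hy : y ∈ U), f (L x y 1) = y := by
    intro x hx y hy
    rw [(hL x y hx hy).2.2 1 (right_mem_Icc.mpr zero_le_one), (hH01 y hy).2]
  -- reverse lifting: every point of f ⁻¹' U is the endpoint of a lift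
  have hcover : ∀ z : X, f z ∈ U → ∃ x : X, f x = y₀ ∧ L x (f z) 1 = z := by
    intro z hz
    set γ : ℝ → Y := fun t => H (f z) (1 - t) with hγdef
    have hγc : ContinuousOn γ (Icc (0:ℝ) 1) := hrev _ (hHy'c (f z) hz)
    have hγv : eVariationOn γ (Icc (0:ℝ) 1) ≠ ⊤ := hrevvar _ (hHvar (f z) hz)
    have h₀ : f z = γ 0 := by
      show f z = H (f z) (1 - 0)
      rw [show (1:ℝ) - 0 = 1 by ring, (hH01 (f z) hz).2]
    obtain ⟨g, hgc, hg0, hgf⟩ := lift_exists hf hβ0 hβT hloc zero_le_one hγc hγv h₀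
    have hg1fib : f (g 1) = y₀ := by
      rw [hgf 1 (right_mem_Icc.mpr zero_le_one)]
      show H (f z) (1 - 1) = y₀
      rw [show (1:ℝ) - 1 = 0 by ring, (hH01 (f z) hz).1]
    refine ⟨g 1, hg1fib, ?_⟩
    have hrefc : ContinuousOn (fun t => g (1 - t)) (Icc (0:ℝ) 1) := by
      apply hgc.comp ((continuous_const.sub continuous_id).continuousOn)
      intro t ht
      simp only [id_eq, Pi.sub_apply, mem_Icc]
      constructor <;> [linarith [ht.2]; linarith [ht.1]]
    have hrefl : ∀ t ∈ Icc (0:ℝ) 1, f (g (1 - t)) = H (f z) t := by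
      intro t ht
      have h2 : (1:ℝ) - t ∈ Icc (0:ℝ) 1 := ⟨by linarith [ht.2], by linarith [ht.1]⟩
      rw [hgf (1 - t) h2]
      show H (f z) (1 - (1 - t)) = H (f z) t
      rw [show (1:ℝ) - (1 - t) = t by ring]
    have h3 := huniq (g 1) hg1fib (f z) hz (fun t => g (1 - t)) hrefc
      (by show g (1 - 0) = g 1; rw [show (1:ℝ) - 0 = 1 by ring]) hrefl
      1 (right_mem_Icc.mpr zero_le_one)
    show L (g 1) (f z) 1 = z
    rw [← h3]
    show g (1 - 1) = z
    rw [show (1:ℝ) - 1 = 0 by ring, hg0]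
  -- disjointness of sheets
  have hdisj : ∀ (x x' : X), f x = y₀ → f x' = y₀ → ∀ y ∈ U,
      L x y 1 = L x' y 1 → x = x' := by
    intro x x' hx hx' y hy hL1
    have hc1 : ContinuousOn (fun t => L x y (1 - t)) (Icc (0:ℝ) 1) := by
      apply (hL x y hx hy).1.comp ((continuous_const.sub continuous_id).continuousOn)
      intro t ht
      simp only [id_eq, Pi.sub_apply, mem_Icc]
      constructor <;> [linarith [ht.2]; linarith [ht.1]]
    have hc2 : ContinuousOn (fun t => L x' y (1 - t)) (Icc (0:ℝ) 1) := by
      apply (hL x' y hx' hy).1.comp ((continuous_const.sub continuous_id).continuousOn)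
      intro t ht
      simp only [id_eq, Pi.sub_apply, mem_Icc]
      constructor <;> [linarith [ht.2]; linarith [ht.1]]
    have hl : ∀ t ∈ Icc (0:ℝ) 1, f (L x y (1 - t)) = f (L x' y (1 - t)) := by
      intro t ht
      have h2 : (1:ℝ) - t ∈ Icc (0:ℝ) 1 := ⟨by linarith [ht.2], by linarith [ht.1]⟩
      rw [(hL x y hx hy).2.2 (1 - t) h2, (hL x' y hx' hy).2.2 (1 - t) h2]
    have h4 := lift_unique hf zero_le_one hc1 hc2 hl
      (by show L x y (1 - 0) = L x' y (1 - 0); rw [show (1:ℝ) - 0 = 1 by ring, hL1])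
      1 (right_mem_Icc.mpr zero_le_one)
    have h5 : L x y (1 - 1) = L x' y (1 - 1) := h4
    rw [show (1:ℝ) - 1 = 0 by ring, (hL x y hx hy).2.1, (hL x' y hx' hy).2.1] at h5
    exact h5
  -- the chain lemma, specialized
  have hchain : ∀ (x : X), f x = y₀ → ∀ y ∈ U, ∃ N : Set Y, IsOpen N ∧ y ∈ N ∧ N ⊆ U ∧
      ∃ e : OpenPartialHomeomorph X Y, f = e ∧
        ∀ y' ∈ N, y' ∈ e.target ∧ L x y' 1 = e.symm y' := by
    intro x hx y hy
    obtain ⟨N, hNo, hyN, hNU, e, hfe, hNe⟩ := chain_lemma hf hUo hHc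
      (fun y' hy' => by rw [hx, (hH01 y' hy').1])
      (fun y hy => (hL x y hx hy).1) (fun y hy => (hL x y hx hy).2.1)
      (fun y hy => (hL x y hx hy).2.2) hy
    refine ⟨N, hNo, hyN, hNU, e, hfe, ?_⟩
    intro y' hy'
    have h2 := hNe y' hy'
    rw [(hH01 y' (hNU hy')).2] at h2
    exact h2
  -- choose the sheet containing each point
  have hfibex : ∀ z : X, ∃ p : ↥(f ⁻¹' {y₀}), f z ∈ U → L (↑p) (f z) 1 = z := by
    intro z
    by_cases hz : f z ∈ U
    · obtain ⟨x, hx, hxz⟩ := hcover z hz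
      exact ⟨⟨x, hx⟩, fun _ => hxz⟩
    · obtain ⟨x, hx⟩ := hsurj z y₀
      exact ⟨⟨x, hx⟩, fun h => absurd h hz⟩
  choose fib hfib using hfibex
  have hFm : ∀ p : ↥(f ⁻¹' {y₀}), f ↑p = y₀ := fun p => p.2
  -- local constancy of fib
  have hfibloc : ∀ z : X, f z ∈ U → ∀ᶠ w in 𝓝 z, f w ∈ U → fib w = fib z := by
    intro z hz
    obtain ⟨N, hNo, hfzN, hNU, e, hfe, hNe⟩ := hchain ↑(fib z) (hFm (fib z)) (f z) hz
    have hz_src : z ∈ e.source := by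
      have h2 : L ↑(fib z) (f z) 1 = e.symm (f z) := (hNe (f z) hfzN).2
      rw [hfib z hz] at h2
      rw [h2]
      exact e.map_target (hNe (f z) hfzN).1
    filter_upwards [e.open_source.mem_nhds hz_src,
      (hNo.preimage hf.continuous).mem_nhds (show f z ∈ N from hfzN)] with w hw1 hw2 hwU
    have h4 : L ↑(fib z) (f w) 1 = e.symm (f w) := (hNe (f w) hw2).2
    have h6 : e.symm (f w) = w := by
      have h7 : f w = e w := by rw [hfe]
      rw [h7]
      exact e.left_inv hw1
    rw [h6] at h4
    apply Subtype.ext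
    exact hdisj ↑(fib w) ↑(fib z) (hFm (fib w)) (hFm (fib z)) (f w) hwU
      (by rw [hfib w hwU, h4])
  -- continuity of toFun
  have hcont1 : ContinuousOn (fun z => (f z, fib z)) (f ⁻¹' U) := by
    intro z hz
    apply ContinuousAt.continuousWithinAt
    apply ContinuousAt.prodMk
    · exact hf.continuous.continuousAt
    · have hev : ∀ᶠ w in 𝓝 z, fib w = fib z := by
        filter_upwards [hfibloc z hz, (hUo.preimage hf.continuous).mem_nhds hz] with w h1 h2
        exact h1 h2
      exact Tendsto.congr' (hev.mono fun w hw => hw.symm) tendsto_const_nhds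
  -- continuity of invFun
  have hcont2 : ContinuousOn (fun p : Y × ↥(f ⁻¹' {y₀}) => L (↑p.2) p.1 1)
      (U ×ˢ (univ : Set ↥(f ⁻¹' {y₀}))) := by
    rintro ⟨y₁, x₁⟩ ⟨hy₁, -⟩
    obtain ⟨N, hNo, hy₁N, hNU, e, hfe, hNe⟩ := hchain ↑x₁ (hFm x₁) y₁ hy₁
    have hopenNx : (N ×ˢ ({x₁} : Set ↥(f ⁻¹' {y₀}))) ∈ 𝓝 ((y₁, x₁) : Y × ↥(f ⁻¹' {y₀})) :=
      prod_mem_nhds (hNo.mem_nhds hy₁N) ((isOpen_discrete {x₁}).mem_nhds rfl)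
    have hca : ContinuousAt (fun p : Y × ↥(f ⁻¹' {y₀}) => e.symm p.1) (y₁, x₁) := by
      have hy₁tgt : y₁ ∈ e.target := (hNe y₁ hy₁N).1
      have h2 : ContinuousAt (e.symm) y₁ :=
        e.symm.continuousAt (by rw [OpenPartialHomeomorph.symm_source]; exact hy₁tgt)
      exact h2.comp continuousAt_fst
    apply (hca.continuousWithinAt).congr_of_eventuallyEq
    · filter_upwards [mem_nhdsWithin_of_mem_nhds hopenNx] with p hp
      obtain ⟨hpN, hpx⟩ := hp
      have h3 : p.2 = x₁ := hpx
      rw [h3]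
      exact (hNe p.1 hpN).2
    · exact (hNe y₁ hy₁N).2
  -- assemble the trivialization
  have hmapt : ∀ p : Y × ↥(f ⁻¹' {y₀}), p ∈ U ×ˢ (univ : Set ↥(f ⁻¹' {y₀})) →
      L (↑p.2) p.1 1 ∈ f ⁻¹' U := by
    rintro ⟨y₁, x₁⟩ ⟨hy₁, -⟩
    show f (L (↑x₁) y₁ 1) ∈ U
    rw [hsecf ↑x₁ (hFm x₁) y₁ hy₁]
    exact hy₁
  have hrinv : ∀ p : Y × ↥(f ⁻¹' {y₀}), p ∈ U ×ˢ (univ : Set ↥(f ⁻¹' {y₀})) →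
      ((f (L (↑p.2) p.1 1), fib (L (↑p.2) p.1 1)) : Y × ↥(f ⁻¹' {y₀})) = p := by
    rintro ⟨y₁, x₁⟩ ⟨hy₁, -⟩
    have h2 : f (L (↑x₁) y₁ 1) = y₁ := hsecf ↑x₁ (hFm x₁) y₁ hy₁
    have h3 : fib (L (↑x₁) y₁ 1) = x₁ := by
      apply Subtype.ext
      apply hdisj _ _ (hFm _) (hFm x₁) y₁ hy₁
      have h4 := hfib (L (↑x₁) y₁ 1) (by rw [h2]; exact hy₁)
      rw [h2] at h4
      exact h4
    show ((f (L (↑x₁) y₁ 1), fib (L (↑x₁) y₁ 1)) : Y × ↥(f ⁻¹' {y₀})) = (y₁, x₁)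
    rw [h2, h3]
  exact IsEvenlyCovered.of_trivialization (t :=
     { toFun := fun z => (f z, fib z)
       invFun := fun p => L (↑p.2) p.1 1
       source := f ⁻¹' U
       target := U ×ˢ (univ : Set ↥(f ⁻¹' {y₀}))
       map_source' := fun z hz => ⟨hz, mem_univ _⟩
       map_target' := fun {p} hp => hmapt p hp
       left_inv' := fun {z} hz => hfib z hz
       right_inv' := fun {p} hp => hrinv p hp
       open_source := hUo.preimage hf.continuous
       open_target := hUo.prod isOpen_univ
       continuousOn_toFun := hcont1
       continuousOn_invFun := hcont2
       baseSet := U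
       open_baseSet := hUo
       source_eq := rfl
       target_eq := rfl
       proj_toFun := fun z _ => rfl }) hy₀U
end

section
/- Let f : X → Y be a local homeomorphism between metric spaces, where Y is P-connected and locally P-contractible for some family P of continuous paths. Then f is a covering projection if and only if f has the continuation property for every path in P. -/
open Filter Topology Set

/-- `Y` is `P`-connected for a family `P` of continuous paths `[0,1] → Y`:
the family consists of continuous paths, is closed under reversal, and joins
every pair of points. -/
def PConnected {Y : Type*} [MetricSpace Y] (P : Set (ℝ → Y)) : Prop :=
  (∀ p ∈ P, ContinuousOn p (Set.Icc (0:ℝ) 1)) ∧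
  (∀ p ∈ P, (fun t => p (1 - t)) ∈ P) ∧
  (∀ y y' : Y, ∃ p ∈ P, p 0 = y ∧ p 1 = y')

/-- `Y` is locally `P`-contractible: every `y₀` has an open neighborhood `U`
with a continuous homotopy `H : U × [0,1] → U` fixing `y₀`, contracting `U`
to `y₀`, whose paths `t ↦ H y t` all belong to `P`. -/
def LocallyPContractible {Y : Type*} [MetricSpace Y] (P : Set (ℝ → Y)) : Prop :=
  ∀ y₀ : Y, ∃ U : Set Y, IsOpen U ∧ y₀ ∈ U ∧
    ∃ H : Y → ℝ → Y,
      ContinuousOn (fun p : Y × ℝ => H p.1 p.2) (U ×ˢ Set.Icc (0:ℝ) 1) ∧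
      (∀ y ∈ U, ∀ t ∈ Set.Icc (0:ℝ) 1, H y t ∈ U) ∧
      (∀ t ∈ Set.Icc (0:ℝ) 1, H y₀ t = y₀) ∧
      (∀ y ∈ U, H y 0 = y₀ ∧ H y 1 = y) ∧
      (∀ y ∈ U, (fun t => H y t) ∈ P)

/-- `f` has the continuation property for the path `p : [0,1] → Y`: every partial
lifting `q : [0,b) → X` of `p` admits a sequence `t_n → b` with `q (t_n)` convergent. -/
def ContinuationProperty {X Y : Type*} [MetricSpace X] [MetricSpace Y]
    (f : X → Y) (p : ℝ → Y) : Prop :=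
  ∀ b ∈ Set.Ioc (0:ℝ) 1, ∀ q : ℝ → X, ContinuousOn q (Set.Ico 0 b) →
    (∀ t ∈ Set.Ico 0 b, f (q t) = p t) →
    ∃ tn : ℕ → ℝ, (∀ n, tn n ∈ Set.Ico 0 b) ∧
      Filter.Tendsto tn Filter.atTop (𝓝 b) ∧
      ∃ x : X, Filter.Tendsto (fun n => q (tn n)) Filter.atTop (𝓝 x)

section helpers
variable {X Y : Type*} [MetricSpace X] [MetricSpace Y] {f : X → Y}

lemma lift_unique_s13 (hf : IsLocalHomeomorph f) {s : Set ℝ} (hs : IsPreconnected s)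
    {q₁ q₂ : ℝ → X} (h₁ : ContinuousOn q₁ s) (h₂ : ContinuousOn q₂ s)
    (he : ∀ t ∈ s, f (q₁ t) = f (q₂ t)) {a : ℝ} (ha : a ∈ s) (hq : q₁ a = q₂ a) :
    EqOn q₁ q₂ s :=
  (T2Space.isSeparatedMap f).eqOn_of_comp_eqOn hf.isLocallyInjective hs h₁ h₂
    (fun t ht => he t ht) ha hq

lemma glue_cont {a m b : ℝ} {w₁ w₂ : ℝ → X}
    (h₁ : ContinuousOn w₁ (Icc a m)) (h₂ : ContinuousOn w₂ (Icc m b))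
    (hm : w₁ m = w₂ m) :
    ContinuousOn (fun t => if t ≤ m then w₁ t else w₂ t) (Icc a b) := by
  intro t ht
  rcases lt_trichotomy t m with h | h | h
  · have hmem : Icc a b ∩ Iio m ∈ 𝓝[Icc a b] t :=
      inter_mem_nhdsWithin _ (Iio_mem_nhds h)
    refine ContinuousWithinAt.mono_of_mem_nhdsWithin ?_ hmem
    have hc : ContinuousWithinAt w₁ (Icc a b ∩ Iio m) t :=
      (h₁ t ⟨ht.1, h.le⟩).mono (fun s hs => ⟨hs.1.1, hs.2.le⟩)
    exact hc.congr (fun s hs => if_pos hs.2.le) (if_pos h.le)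
  · have hptval : (if t ≤ m then w₁ t else w₂ t) = w₁ t := if_pos h.le
    have hc1 : ContinuousWithinAt (fun s => if s ≤ m then w₁ s else w₂ s) (Icc a m) t :=
      (h₁ t ⟨ht.1, h.le⟩).congr (fun s hs => if_pos hs.2) hptval
    have hc2 : ContinuousWithinAt (fun s => if s ≤ m then w₁ s else w₂ s) (Icc m b) t := by
      refine (h₂ t ⟨h.ge, ht.2⟩).congr (fun s hs => ?_) (by rw [hptval, h, hm])
      rcases eq_or_lt_of_le hs.1 with he | hl
      · simp [← he, hm]
      · exact if_neg (not_le.mpr hl)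
    exact (hc1.union hc2).mono Icc_subset_Icc_union_Icc
  · have hmem : Icc a b ∩ Ioi m ∈ 𝓝[Icc a b] t :=
      inter_mem_nhdsWithin _ (Ioi_mem_nhds h)
    refine ContinuousWithinAt.mono_of_mem_nhdsWithin ?_ hmem
    have hc : ContinuousWithinAt w₂ (Icc a b ∩ Ioi m) t :=
      (h₂ t ⟨h.le, ht.2⟩).mono (fun s hs => ⟨hs.2.le, hs.1.2⟩)
    exact hc.congr (fun s hs => if_neg (not_le.mpr hs.2)) (if_neg (not_le.mpr h))


lemma fiber_discrete (hf : IsLocalHomeomorph f) (y₀ : Y) :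
    DiscreteTopology (f ⁻¹' {y₀} : Set X) := by
  rw [discreteTopology_iff_isOpen_singleton]
  rintro ⟨z, hz⟩
  obtain ⟨e, hes, hef⟩ := hf z
  have : {(⟨z, hz⟩ : (f ⁻¹' {y₀} : Set X))} = Subtype.val ⁻¹' e.source := by
    ext ⟨z', hz'⟩
    simp only [mem_singleton_iff, Subtype.ext_iff, mem_preimage]
    constructor
    · rintro rfl; exact hes
    · intro hz'e
      refine e.injOn hz'e hes ?_
      rw [← hef]
      rw [mem_preimage, mem_singleton_iff] at hz hz'
      rw [hz, hz']
  rw [this]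
  exact e.open_source.preimage continuous_subtype_val

lemma forward_dir (hcov : IsCoveringMap f) {p : ℝ → Y}
    (hp : ContinuousOn p (Icc 0 1)) : ContinuationProperty f p := by
  intro b hb q hqc hqf
  have hbI : b ∈ Icc (0:ℝ) 1 := ⟨hb.1.le, hb.2⟩
  have hec := hcov (p b)
  have hne : Nonempty (f ⁻¹' {p b}) := by
    by_contra hne
    rw [not_nonempty_iff] at hne
    obtain ⟨U, hxU, hU, _, H, _⟩ := hec.2
    obtain ⟨δ, hδ, hball⟩ := Metric.mem_nhdsWithin_iff.mp (hp b hbI (hU.mem_nhds hxU))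
    have hs : max 0 (b - δ/2) ∈ Ico 0 b := ⟨le_max_left _ _, max_lt hb.1 (by linarith)⟩
    have hd : max 0 (b - δ/2) ∈ Metric.ball b δ := by
      rw [Metric.mem_ball, Real.dist_eq, abs_lt]
      have := le_max_right 0 (b - δ/2)
      constructor <;> linarith [hs.2]
    have hsU : p (max 0 (b - δ/2)) ∈ U := hball ⟨hd, hs.1, le_trans hs.2.le hb.2⟩
    have hqU : q (max 0 (b - δ/2)) ∈ f ⁻¹' U := by rw [mem_preimage, hqf _ hs]; exact hsU
    exact hne.elim (H ⟨_, hqU⟩).2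
  set t := hec.toTrivialization with ht
  have hmemb : p b ∈ t.baseSet := hec.mem_toTrivialization_baseSet
  obtain ⟨δ, hδ, hball⟩ := Metric.mem_nhdsWithin_iff.mp
    ((hp b hbI) (t.open_baseSet.mem_nhds hmemb))
  set a := max 0 (b - δ/2) with hadef
  have ha0 : 0 ≤ a := le_max_left _ _
  have hab : a < b := max_lt hb.1 (by linarith)
  have hmem : ∀ s, a ≤ s → s ≤ b → p s ∈ t.baseSet := by
    intro s h1 h2
    refine hball ⟨?_, le_trans ha0 h1, le_trans h2 hb.2⟩
    rw [Metric.mem_ball, Real.dist_eq, abs_lt]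
    have : b - δ/2 ≤ s := le_trans (le_max_right _ _) h1
    constructor <;> linarith
  have hqa : q a ∈ t.source := by
    rw [t.mem_source, hqf a ⟨ha0, hab⟩]
    exact hmem a le_rfl hab.le
  set i := (t (q a)).2 with hi
  set g : ℝ → X := fun s => t.toOpenPartialHomeomorph.symm (p s, i) with hg
  have hgf : ∀ s, a ≤ s → s ≤ b → f (g s) = p s := by
    intro s h1 h2
    exact t.proj_symm_apply (t.mem_target.mpr (hmem s h1 h2))
  have hgc : ContinuousOn g (Icc a b) := by
    refine (t.toOpenPartialHomeomorph.continuousOn_symm.comp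
      ((hp.mono (Icc_subset_Icc ha0 hb.2)).prodMk continuousOn_const) ?_)
    intro s hs
    rw [t.target_eq]
    exact ⟨hmem s hs.1 hs.2, trivial⟩
  have hga : g a = q a := by
    have h1 : t (q a) = (p a, i) := by
      refine Prod.ext ?_ rfl
      rw [t.coe_fst hqa, hqf a ⟨ha0, hab⟩]
    show t.toOpenPartialHomeomorph.symm (p a, i) = q a
    rw [← h1]
    exact t.toOpenPartialHomeomorph.left_inv hqa
  have heqOn : EqOn q g (Ico a b) := by
    refine lift_unique_s13 hcov.isLocalHomeomorph isPreconnected_Ico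
      (hqc.mono ?_) (hgc.mono Ico_subset_Icc_self) ?_
      (left_mem_Ico.mpr hab) hga.symm
    · exact fun s hs => ⟨le_trans ha0 hs.1, hs.2⟩
    · intro s hs
      rw [hqf s ⟨le_trans ha0 hs.1, hs.2⟩, hgf s hs.1 hs.2.le]
  set tn : ℕ → ℝ := fun n => b - (b - a) * (1 / (n + 1)) with htn
  have htnmem : ∀ n, tn n ∈ Ico a b := by
    intro n
    have hpos : (0:ℝ) < (n:ℝ) + 1 := by positivity
    have h1 : (0:ℝ) < 1 / ((n:ℝ) + 1) := by positivity
    have h2 : 1 / ((n:ℝ) + 1) ≤ 1 := by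
      rw [div_le_one hpos]; linarith
    constructor
    · have : (b - a) * (1 / (n + 1)) ≤ (b - a) * 1 :=
        mul_le_mul_of_nonneg_left h2 (by linarith)
      simp only [htn]; nlinarith
    · simp only [htn]; nlinarith [mul_pos (sub_pos.mpr hab) h1]
  have htnb : Tendsto tn atTop (𝓝 b) := by
    have h0 : Tendsto (fun n : ℕ => (b - a) * (1 / ((n:ℝ) + 1))) atTop (𝓝 0) := by
      have := tendsto_one_div_add_atTop_nhds_zero_nat (𝕜 := ℝ)
      have h := this.const_mul (b - a)
      simpa using h
    have h2 := tendsto_const_nhds.sub h0 (f := fun _ : ℕ => b)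
    rw [sub_zero] at h2
    exact h2
  refine ⟨tn, fun n => ⟨le_trans ha0 (htnmem n).1, (htnmem n).2⟩, htnb, g b, ?_⟩
  have hgb : ContinuousWithinAt g (Icc a b) b := hgc b ⟨hab.le, le_rfl⟩
  have htnin : Tendsto tn atTop (𝓝[Icc a b] b) := by
    refine tendsto_nhdsWithin_iff.mpr ⟨htnb, Eventually.of_forall (fun n => ?_)⟩
    exact ⟨(htnmem n).1, (htnmem n).2.le⟩
  have : Tendsto (fun n => g (tn n)) atTop (𝓝 (g b)) := hgb.tendsto.comp htnin
  refine this.congr (fun n => ?_)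
  exact (heqOn (htnmem n)).symm


lemma lift_exists_s13 (hf : IsLocalHomeomorph f) {p : ℝ → Y}
    (hp : ContinuousOn p (Icc 0 1)) (hcp : ContinuationProperty f p)
    {x₀ : X} (hx₀ : f x₀ = p 0) :
    ∃ q : ℝ → X, ContinuousOn q (Icc 0 1) ∧ q 0 = x₀ ∧ ∀ t ∈ Icc 0 1, f (q t) = p t := by
  classical
  set A : Set ℝ := {b | b ∈ Icc (0:ℝ) 1 ∧
    ∃ q : ℝ → X, ContinuousOn q (Icc 0 b) ∧ q 0 = x₀ ∧ ∀ t ∈ Icc 0 b, f (q t) = p t} with hA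
  have hbdd : BddAbove A := ⟨1, fun b hb => hb.1.2⟩
  have h0A : (0:ℝ) ∈ A := by
    refine ⟨⟨le_refl 0, zero_le_one⟩, fun _ => x₀, continuousOn_const, rfl, ?_⟩
    intro t ht
    have : t = 0 := le_antisymm ht.2 ht.1
    rw [this, hx₀]
  -- a small positive element of A
  obtain ⟨e₀, he₀s, he₀f⟩ := hf x₀
  have hp0t : p 0 ∈ e₀.target := by rw [← hx₀, he₀f]; exact e₀.map_source he₀s
  have hp0 : ContinuousWithinAt p (Icc 0 1) 0 := hp 0 ⟨le_refl 0, zero_le_one⟩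
  obtain ⟨δ₀, hδ₀, hball₀⟩ := Metric.mem_nhdsWithin_iff.mp
    (hp0 (e₀.open_target.mem_nhds hp0t))
  have hb₁A : min 1 (δ₀/2) ∈ A := by
    set b₁ := min 1 (δ₀/2) with hb₁
    have hb₁0 : 0 < b₁ := lt_min one_pos (by linarith)
    have hmem : ∀ t ∈ Icc (0:ℝ) b₁, p t ∈ e₀.target := by
      intro t ht
      refine hball₀ ⟨?_, ht.1, le_trans ht.2 (min_le_left _ _)⟩
      simp only [Metric.mem_ball, Real.dist_eq, sub_zero, abs_of_nonneg ht.1]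
      exact lt_of_le_of_lt (le_trans ht.2 (min_le_right _ _)) (by linarith)
    refine ⟨⟨hb₁0.le, min_le_left _ _⟩, fun t => e₀.symm (p t), ?_, ?_, ?_⟩
    · exact e₀.continuousOn_symm.comp
        (hp.mono (Icc_subset_Icc le_rfl (min_le_left _ _))) hmem
    · show e₀.symm (p 0) = x₀
      rw [← hx₀, he₀f, e₀.left_inv he₀s]
    · intro t ht
      show f (e₀.symm (p t)) = p t
      rw [he₀f]
      exact e₀.right_inv (hmem t ht)
  set c := sSup A with hc
  have hc1 : c ≤ 1 := csSup_le ⟨0, h0A⟩ (fun b hb => hb.1.2)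
  have hc0 : 0 < c := lt_of_lt_of_le (lt_min one_pos (by linarith)) (le_csSup hbdd hb₁A)
  -- choice of lifts
  have hqf : ∀ b ∈ A, ∃ q : ℝ → X, ContinuousOn q (Icc 0 b) ∧ q 0 = x₀ ∧
      ∀ t ∈ Icc 0 b, f (q t) = p t := fun b hb => hb.2
  have hneX : Nonempty X := ⟨x₀⟩
  choose! qf hqfc hqf0 hqff using hqf
  have hagree : ∀ b ∈ A, ∀ b' ∈ A, b ≤ b' → EqOn (qf b) (qf b') (Icc 0 b) := by
    intro b hb b' hb' hbb'
    refine lift_unique_s13 hf isPreconnected_Icc (hqfc b hb)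
      ((hqfc b' hb').mono (Icc_subset_Icc le_rfl hbb')) ?_
      (left_mem_Icc.mpr hb.1.1) (by rw [hqf0 b hb, hqf0 b' hb'])
    intro t ht
    rw [hqff b hb t ht, hqff b' hb' t (Icc_subset_Icc le_rfl hbb' ht)]
  have key : ∀ t, t ∈ Ico (0:ℝ) c → ∃ b, b ∈ A ∧ t < b := by
    intro t ht
    obtain ⟨b, hbA, htb⟩ := exists_lt_of_lt_csSup ⟨0, h0A⟩ ht.2
    exact ⟨b, hbA, htb⟩
  choose! B hBA hBt using key
  set Q : ℝ → X := fun t => qf (B t) t with hQ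
  have hQlift : ∀ t ∈ Ico (0:ℝ) c, f (Q t) = p t := by
    intro t ht
    exact hqff (B t) (hBA t ht) t ⟨ht.1, (hBt t ht).le⟩
  have hQeq : ∀ b ∈ A, ∀ s ∈ Ico (0:ℝ) c ∩ Iio b, Q s = qf b s := by
    intro b hb s hs
    rcases le_total (B s) b with h | h
    · exact hagree (B s) (hBA s hs.1) b hb h ⟨hs.1.1, (hBt s hs.1).le⟩
    · exact (hagree b hb (B s) (hBA s hs.1) h ⟨hs.1.1, hs.2.le⟩).symm
  have hQcont : ContinuousOn Q (Ico 0 c) := by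
    intro t ht
    have hmem : Ico (0:ℝ) c ∩ Iio (B t) ∈ 𝓝[Ico 0 c] t :=
      inter_mem_nhdsWithin _ (Iio_mem_nhds (hBt t ht))
    refine ContinuousWithinAt.mono_of_mem_nhdsWithin ?_ hmem
    refine ContinuousWithinAt.congr ?_ (fun s hs => hQeq (B t) (hBA t ht) s hs) rfl
    exact ((hqfc (B t) (hBA t ht)) t ⟨ht.1, (hBt t ht).le⟩).mono
      (fun s hs => ⟨hs.1.1, hs.2.le⟩)
  obtain ⟨tn, htn, htnc, x, hx⟩ := hcp c ⟨hc0, hc1⟩ Q hQcont hQlift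
  have htnIcc : ∀ n, tn n ∈ Icc (0:ℝ) 1 :=
    fun n => ⟨(htn n).1, le_trans (htn n).2.le hc1⟩
  have hfx : f x = p c := by
    have h₁ : Tendsto (fun n => f (Q (tn n))) atTop (𝓝 (f x)) :=
      (hf.continuous.tendsto x).comp hx
    have h₂ : Tendsto (fun n => p (tn n)) atTop (𝓝 (p c)) := by
      refine ((hp c ⟨hc0.le, hc1⟩).tendsto).comp ?_
      refine tendsto_nhdsWithin_iff.mpr ⟨htnc, Eventually.of_forall (fun n => htnIcc n)⟩
    have heq : (fun n => f (Q (tn n))) = fun n => p (tn n) :=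
      funext (fun n => hQlift (tn n) (htn n))
    rw [heq] at h₁
    exact tendsto_nhds_unique h₁ h₂
  obtain ⟨e, hes, hef⟩ := hf x
  have hpct : p c ∈ e.target := by rw [← hfx, hef]; exact e.map_source hes
  obtain ⟨δ, hδ, hball⟩ := Metric.mem_nhdsWithin_iff.mp
    ((hp c ⟨hc0.le, hc1⟩) (e.open_target.mem_nhds hpct))
  -- pick a good index
  have hev : ∀ᶠ n in atTop, Q (tn n) ∈ e.source ∧ c - δ < tn n := by
    refine (hx.eventually (e.open_source.mem_nhds hes)).and ?_
    have : Ioi (c - δ) ∈ 𝓝 c := Ioi_mem_nhds (by linarith)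
    exact htnc.eventually this
  obtain ⟨n₀, hQn₀, htn₀⟩ := hev.exists
  set t₁ := tn n₀ with ht₁
  have ht₁Ico : t₁ ∈ Ico (0:ℝ) c := htn n₀
  set d := min 1 (c + δ/2) with hd
  have hcd : c ≤ d := le_min hc1 (by linarith)
  have hmemt : ∀ s ∈ Icc t₁ d, p s ∈ e.target := by
    intro s hs
    refine hball ⟨?_, le_trans ht₁Ico.1 hs.1, le_trans hs.2 (min_le_left _ _)⟩
    rw [Metric.mem_ball, Real.dist_eq, abs_lt]
    constructor
    · have : c - δ < s := lt_of_lt_of_le htn₀ hs.1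
      linarith
    · have : s ≤ c + δ/2 := le_trans hs.2 (min_le_right _ _)
      linarith
  have hQt₁ : Q t₁ = e.symm (p t₁) := by
    rw [← hQlift t₁ ht₁Ico, hef, e.left_inv hQn₀]
  -- Q agrees with e.symm ∘ p on [t₁, c)
  have hagree2 : EqOn Q (fun s => e.symm (p s)) (Ico t₁ c) := by
    refine lift_unique_s13 hf isPreconnected_Ico (hQcont.mono ?_) ?_ ?_
      (left_mem_Ico.mpr ht₁Ico.2) hQt₁
    · exact fun s hs => ⟨le_trans ht₁Ico.1 hs.1, hs.2⟩
    · refine e.continuousOn_symm.comp (hp.mono ?_) ?_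
      · exact fun s hs => ⟨le_trans ht₁Ico.1 hs.1, le_trans hs.2.le hc1⟩
      · exact fun s hs => hmemt s ⟨hs.1, le_trans hs.2.le hcd⟩
    · intro s hs
      show f (Q s) = f (e.symm (p s))
      rw [hQlift s ⟨le_trans ht₁Ico.1 hs.1, hs.2⟩, hef]
      exact (e.right_inv (hmemt s ⟨hs.1, le_trans hs.2.le hcd⟩)).symm
  have hdA : d ∈ A := by
    have h0d : (0:ℝ) ≤ d := le_min zero_le_one (by linarith)
    refine ⟨⟨h0d, min_le_left _ _⟩,
      fun s => if s ≤ t₁ then Q s else e.symm (p s), ?_, ?_, ?_⟩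
    · refine glue_cont (hQcont.mono ?_) ?_ hQt₁
      · exact fun s hs => ⟨hs.1, lt_of_le_of_lt hs.2 ht₁Ico.2⟩
      · refine e.continuousOn_symm.comp (hp.mono ?_) (fun s hs => hmemt s hs)
        exact fun s hs => ⟨le_trans ht₁Ico.1 hs.1, le_trans hs.2 (min_le_left _ _)⟩
    · show (if (0:ℝ) ≤ t₁ then Q 0 else e.symm (p 0)) = x₀
      rw [if_pos ht₁Ico.1]
      exact hqf0 (B 0) (hBA 0 ⟨le_refl 0, hc0⟩)
    · intro s hs
      show f (if s ≤ t₁ then Q s else e.symm (p s)) = p s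
      by_cases h : s ≤ t₁
      · rw [if_pos h]
        exact hQlift s ⟨hs.1, lt_of_le_of_lt h ht₁Ico.2⟩
      · rw [if_neg h, hef]
        exact e.right_inv (hmemt s ⟨(not_le.mp h).le, hs.2⟩)
  have hc1' : (1:ℝ) ≤ c := by
    by_contra h
    push_neg at h
    have hdc : c < d := lt_min h (by linarith)
    exact absurd (le_csSup hbdd hdA) (not_le.mpr hdc)
  have hceq : c = 1 := le_antisymm hc1 hc1'
  have hd1 : d = 1 := by rw [hd, hceq]; exact min_eq_left (by linarith)
  rw [hd1] at hdA
  exact hdA.2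


lemma lift_param (hf : IsLocalHomeomorph f) {A : Set Y} (hA : IsOpen A)
    {G : Y → ℝ → Y}
    (hG : ContinuousOn (fun q : Y × ℝ => G q.1 q.2) (A ×ˢ Icc 0 1))
    {y₁ : Y} (hy₁ : y₁ ∈ A) {ℓ : ℝ → X} (hℓc : ContinuousOn ℓ (Icc 0 1))
    (hℓf : ∀ t ∈ Icc (0:ℝ) 1, f (ℓ t) = G y₁ t) :
    ∃ N, IsOpen N ∧ y₁ ∈ N ∧ N ⊆ A ∧ ∃ e₀ ek : OpenPartialHomeomorph X Y,
      f = e₀ ∧ f = ek ∧ ℓ 0 ∈ e₀.source ∧ ℓ 1 ∈ ek.source ∧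
      ∀ y ∈ N, G y 1 ∈ ek.target ∧ ∃ w : ℝ → X,
        ContinuousOn w (Icc 0 1) ∧ (∀ t ∈ Icc 0 1, f (w t) = G y t) ∧
        w 0 = e₀.symm (G y 0) ∧ w 1 = ek.symm (G y 1) := by
  classical
  -- clamped version of G, jointly continuous on the open set A ×ˢ univ
  set Gc : Y → ℝ → Y := fun y t => G y (max 0 (min 1 t)) with hGcdef
  have hclamp : ∀ t ∈ Icc (0:ℝ) 1, max 0 (min 1 t) = t := by
    intro t ht
    rw [min_eq_right ht.2, max_eq_right ht.1]
  have hGceq : ∀ (y : Y), ∀ t ∈ Icc (0:ℝ) 1, Gc y t = G y t := by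
    intro y t ht
    rw [hGcdef]
    simp only [hclamp t ht]
  have hGc : ContinuousOn (fun q : Y × ℝ => Gc q.1 q.2) (A ×ˢ (univ : Set ℝ)) := by
    have hcont : Continuous (fun q : Y × ℝ => (q.1, max 0 (min 1 q.2))) :=
      continuous_fst.prodMk (continuous_const.max (continuous_const.min continuous_snd))
    refine hG.comp hcont.continuousOn ?_
    intro q hq
    refine ⟨hq.1, le_max_left _ _, max_le zero_le_one (min_le_left _ _)⟩
  have hGA : ∀ y ∈ A, ∀ t : ℝ, ContinuousAt (fun q : Y × ℝ => Gc q.1 q.2) (y, t) := by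
    intro y hy t
    exact hGc.continuousAt ((hA.prod isOpen_univ).mem_nhds ⟨hy, trivial⟩)
  have hGy : ∀ y ∈ A, ∀ a : ℝ, ContinuousAt (fun y' => Gc y' a) y := by
    intro y hy a
    have h1 : Tendsto (fun y' : Y => (y', a)) (𝓝 y) (𝓝 (y, a)) :=
      (continuous_id.prodMk continuous_const).continuousAt
    exact Filter.Tendsto.comp (hGA y hy a) h1
  -- tube lemma
  have htube : ∀ a b : ℝ, ∀ V : Set Y, IsOpen V → (∀ t ∈ Icc a b, Gc y₁ t ∈ V) →
      ∃ N, IsOpen N ∧ y₁ ∈ N ∧ N ⊆ A ∧ ∀ y ∈ N, ∀ t ∈ Icc a b, Gc y t ∈ V := by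
    intro a b V hV hmem
    have hT : IsOpen ((A ×ˢ (univ : Set ℝ)) ∩ (fun q : Y × ℝ => Gc q.1 q.2) ⁻¹' V) :=
      hGc.isOpen_inter_preimage (hA.prod isOpen_univ) hV
    have hsub : ({y₁} : Set Y) ×ˢ Icc a b ⊆
        (A ×ˢ (univ : Set ℝ)) ∩ (fun q : Y × ℝ => Gc q.1 q.2) ⁻¹' V := by
      rintro ⟨y, t⟩ ⟨hy, ht⟩
      rcases hy with rfl
      exact ⟨⟨hy₁, trivial⟩, hmem t ht⟩
    obtain ⟨u, v, hu, hv, hyu, hIv, huv⟩ :=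
      generalized_tube_lemma isCompact_singleton isCompact_Icc hT hsub
    refine ⟨u ∩ A, hu.inter hA, ⟨hyu rfl, hy₁⟩, inter_subset_right, ?_⟩
    intro y hy t ht
    have hmem2 : (y, t) ∈ u ×ˢ v := ⟨hy.1, hIv ht⟩
    exact (huv hmem2).2
  -- the chart at the start point
  obtain ⟨e₀, he₀s, he₀f⟩ := hf (ℓ 0)
  -- the inductive set
  set S : Set ℝ := {b | b ∈ Icc (0:ℝ) 1 ∧ ∃ N, IsOpen N ∧ y₁ ∈ N ∧ N ⊆ A ∧
    ∃ ek : OpenPartialHomeomorph X Y, f = ek ∧ ℓ b ∈ ek.source ∧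
      ∀ y ∈ N, Gc y b ∈ ek.target ∧ ∃ w : ℝ → X,
        ContinuousOn w (Icc 0 b) ∧ (∀ t ∈ Icc 0 b, f (w t) = Gc y t) ∧
        w 0 = e₀.symm (Gc y 0) ∧ w b = ek.symm (Gc y b)} with hS
  have h0S : (0:ℝ) ∈ S := by
    have h0mem : ∀ t ∈ Icc (0:ℝ) 0, Gc y₁ t ∈ e₀.target := by
      intro t ht
      have ht0 : t = 0 := le_antisymm ht.2 ht.1
      rw [ht0, hGceq y₁ 0 ⟨le_rfl, zero_le_one⟩, ← hℓf 0 ⟨le_rfl, zero_le_one⟩, he₀f]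
      exact e₀.map_source he₀s
    obtain ⟨N, hNo, hNy, hNA, hNall⟩ := htube 0 0 e₀.target e₀.open_target h0mem
    refine ⟨⟨le_rfl, zero_le_one⟩, N, hNo, hNy, hNA, e₀, he₀f, he₀s, ?_⟩
    intro y hy
    refine ⟨hNall y hy 0 ⟨le_rfl, le_rfl⟩, fun _ => e₀.symm (Gc y 0), continuousOn_const, ?_, rfl, rfl⟩
    intro t ht
    have ht0 : t = 0 := le_antisymm ht.2 ht.1
    rw [ht0, he₀f]
    exact e₀.right_inv (hNall y hy 0 ⟨le_rfl, le_rfl⟩)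
  have hbdd : BddAbove S := ⟨1, fun b hb => hb.1.2⟩
  set c := sSup S with hc
  have hc0 : 0 ≤ c := le_csSup hbdd h0S
  have hc1 : c ≤ 1 := csSup_le ⟨0, h0S⟩ (fun b hb => hb.1.2)
  -- chart at ℓ c and a margin ε
  obtain ⟨e, hes, hef2⟩ := hf (ℓ c)
  obtain ⟨ε, hε, hball⟩ := Metric.mem_nhdsWithin_iff.mp
    ((hℓc c ⟨hc0, hc1⟩) (e.open_source.mem_nhds hes))
  obtain ⟨a, haS, hca⟩ := exists_lt_of_lt_csSup ⟨0, h0S⟩ (show c - ε < c by linarith)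
  have hac : a ≤ c := le_csSup hbdd haS
  set b' := min 1 (c + ε/2) with hb'def
  have hcb' : c ≤ b' := le_min hc1 (by linarith)
  have hb'1 : b' ≤ 1 := min_le_left _ _
  have hab' : a ≤ b' := le_trans hac hcb'
  have h0a : 0 ≤ a := haS.1.1
  have ha1 : a ≤ 1 := haS.1.2
  have hballmem : ∀ t, a ≤ t → t ≤ b' → ℓ t ∈ e.source := by
    intro t h1 h2
    refine hball ⟨?_, le_trans h0a h1, le_trans h2 hb'1⟩
    rw [Metric.mem_ball, Real.dist_eq, abs_lt]
    constructor
    · have := lt_of_lt_of_le hca h1; linarith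
    · have := le_trans h2 (min_le_right _ _); linarith
  have hb'S : b' ∈ S := by
    rcases le_or_gt b' a with hba | hba
    · have : b' = a := le_antisymm hba hab'
      rw [this]; exact haS
    -- main extension step
    obtain ⟨_, N, hNo, hNy, hNA, ek, hekf, hekl, hN⟩ := haS
    have hmemV : ∀ t ∈ Icc a b', Gc y₁ t ∈ e.target := by
      intro t ht
      rw [hGceq y₁ t ⟨le_trans h0a ht.1, le_trans ht.2 hb'1⟩,
        ← hℓf t ⟨le_trans h0a ht.1, le_trans ht.2 hb'1⟩, hef2]
      exact e.map_source (hballmem t ht.1 ht.2)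
    obtain ⟨N₂, hN₂o, hN₂y, hN₂A, hN₂⟩ := htube a b' e.target e.open_target hmemV
    -- the matching-point open condition
    have hval : ek.symm (Gc y₁ a) = ℓ a := by
      rw [hGceq y₁ a ⟨h0a, ha1⟩, ← hℓf a ⟨h0a, ha1⟩, hekf]
      exact ek.left_inv hekl
    have hvalmem : ek.symm (Gc y₁ a) ∈ e.source := by
      rw [hval]; exact hballmem a le_rfl hab'
    have hcont : ContinuousAt (fun y => ek.symm (Gc y a)) y₁ := by
      refine ContinuousAt.comp ?_ (hGy y₁ hy₁ a)
      refine ek.symm.continuousAt ?_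
      rw [OpenPartialHomeomorph.symm_source]
      exact (hN y₁ hNy).1
    obtain ⟨O, hOsub, hOo, hOy⟩ := mem_nhds_iff.mp
      (hcont.preimage_mem_nhds (e.open_source.mem_nhds hvalmem))
    refine ⟨⟨le_trans h0a hab', hb'1⟩, N ∩ N₂ ∩ O, (hNo.inter hN₂o).inter hOo,
      ⟨⟨hNy, hN₂y⟩, hOy⟩, fun y hy => hNA hy.1.1, e, hef2, hballmem b' hab' le_rfl, ?_⟩
    rintro y ⟨⟨hyN, hyN₂⟩, hyO⟩
    have hyA : y ∈ A := hNA hyN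
    refine ⟨hN₂ y hyN₂ b' ⟨hab', le_rfl⟩, ?_⟩
    obtain ⟨hta, w, hwc, hwf, hw0, hwa⟩ := hN y hyN
    have hz₁ : ek.symm (Gc y a) ∈ e.source := hOsub hyO
    have hfz₁ : f (ek.symm (Gc y a)) = Gc y a := by
      rw [hekf]; exact ek.right_inv hta
    have hmatch : w a = e.symm (Gc y a) := by
      rw [hwa]
      have heq2 : e (ek.symm (Gc y a)) = Gc y a := by rw [← hef2]; exact hfz₁
      conv_rhs => rw [← heq2]
      rw [e.left_inv hz₁]
    have hvcont : ContinuousOn (fun t => e.symm (Gc y t)) (Icc a b') := by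
      intro t ht
      refine ContinuousAt.continuousWithinAt ?_
      refine ContinuousAt.comp ?_ ?_
      · refine e.symm.continuousAt ?_
        rw [OpenPartialHomeomorph.symm_source]
        exact hN₂ y hyN₂ t ht
      · have h1 : Tendsto (fun s : ℝ => (y, s)) (𝓝 t) (𝓝 (y, t)) :=
          (continuous_const.prodMk continuous_id).continuousAt
        show Tendsto ((fun q : Y × ℝ => Gc q.1 q.2) ∘ (fun s : ℝ => (y, s))) (𝓝 t) (𝓝 (Gc y t))
        exact Filter.Tendsto.comp (hGA y hyA t) h1
    refine ⟨fun t => if t ≤ a then w t else e.symm (Gc y t),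
      glue_cont hwc hvcont hmatch, ?_, ?_, ?_⟩
    · intro t ht
      show f (if t ≤ a then w t else e.symm (Gc y t)) = Gc y t
      by_cases h : t ≤ a
      · rw [if_pos h]; exact hwf t ⟨ht.1, h⟩
      · rw [if_neg h, hef2]
        exact e.right_inv (hN₂ y hyN₂ t ⟨(not_le.mp h).le, ht.2⟩)
    · show (if (0:ℝ) ≤ a then w 0 else e.symm (Gc y 0)) = e₀.symm (Gc y 0)
      rw [if_pos h0a]; exact hw0
    · show (if b' ≤ a then w b' else e.symm (Gc y b')) = e.symm (Gc y b')
      rw [if_neg (not_le.mpr hba)]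
  -- conclude c = 1 and 1 ∈ S
  have hb'c : b' ≤ c := le_csSup hbdd hb'S
  have hceq : c = 1 := by
    by_contra h
    have hlt : c < 1 := lt_of_le_of_ne hc1 h
    have : c < b' := lt_min hlt (by linarith)
    linarith
  have h1S : (1:ℝ) ∈ S := by
    have : b' = 1 := by rw [hb'def, hceq]; exact min_eq_left (by linarith)
    rwa [this] at hb'S
  obtain ⟨_, N, hNo, hNy, hNA, ek, hekf, hekl, hN⟩ := h1S
  refine ⟨N, hNo, hNy, hNA, e₀, ek, he₀f, hekf, he₀s, hekl, ?_⟩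
  intro y hy
  obtain ⟨ht1, w, hwc, hwf, hw0, hw1⟩ := hN y hy
  rw [hGceq y 1 ⟨zero_le_one, le_rfl⟩] at ht1 hw1
  rw [hGceq y 0 ⟨le_rfl, zero_le_one⟩] at hw0
  refine ⟨ht1, w, hwc, ?_, hw0, hw1⟩
  intro t ht
  rw [← hGceq y t ht]
  exact hwf t ht


lemma reverse_dir (hf : IsLocalHomeomorph f)
    {P : Set (ℝ → Y)} (hPc : PConnected P) (hPl : LocallyPContractible P)
    (hcont : ∀ p ∈ P, ContinuationProperty f p) : IsCoveringMap f := by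
  classical
  rcases isEmpty_or_nonempty X with hX | hX
  · -- degenerate case: X empty
    intro y₀
    haveI hFe : IsEmpty (f ⁻¹' {y₀} : Set X) := ⟨fun x => isEmptyElim x.1⟩
    haveI : Subsingleton (f ⁻¹' {y₀} : Set X) := ⟨fun a _ => isEmptyElim a⟩
    exact IsEvenlyCovered.of_preimage_eq_empty (I := (f ⁻¹' {y₀} : Set X)) (U := univ) univ_mem
      (Set.eq_empty_of_forall_notMem fun x _ => isEmptyElim x)
  · -- main case
    have hsurj : ∀ y : Y, ∃ x, f x = y := by
      intro y
      obtain ⟨x₀⟩ := hX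
      obtain ⟨p, hpP, hp0, hp1⟩ := hPc.2.2 (f x₀) y
      obtain ⟨q, hqc, hq0, hqf⟩ := lift_exists_s13 hf (hPc.1 p hpP) (hcont p hpP) hp0.symm
      exact ⟨q 1, by rw [hqf 1 ⟨zero_le_one, le_rfl⟩, hp1]⟩
    intro y₀
    haveI hdisc := fiber_discrete hf y₀
    obtain ⟨x₀, hx₀⟩ := hsurj y₀
    haveI hFI : Inhabited (f ⁻¹' {y₀} : Set X) :=
      ⟨⟨x₀, by rw [mem_preimage, mem_singleton_iff]; exact hx₀⟩⟩
    obtain ⟨U, hU, hy₀U, H, hH1, hH2, hH3, hH4, hH5⟩ := hPl y₀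
    have hHc : ∀ y ∈ U, ContinuousOn (fun t => H y t) (Icc 0 1) :=
      fun y hy => hPc.1 _ (hH5 y hy)
    have hRP : ∀ y ∈ U, (fun t => H y (1 - t)) ∈ P := fun y hy => hPc.2.1 _ (hH5 y hy)
    have hRc : ∀ y ∈ U, ContinuousOn (fun t => H y (1 - t)) (Icc 0 1) :=
      fun y hy => hPc.1 _ (hRP y hy)
    -- forward lifts
    have hSex : ∀ y, y ∈ U → ∀ x : X, f x = y₀ → ∃ q, ContinuousOn q (Icc 0 1) ∧
        q 0 = x ∧ ∀ t ∈ Icc 0 1, f (q t) = H y t := by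
      intro y hy x hx
      have h0 : f x = H y 0 := by rw [(hH4 y hy).1]; exact hx
      exact lift_exists_s13 hf (hHc y hy) (hcont _ (hH5 y hy)) h0
    choose! sq hsqc hsq0 hsqf using hSex
    -- reverse lifts
    have hRex : ∀ z : X, f z ∈ U → ∃ q, ContinuousOn q (Icc 0 1) ∧
        q 0 = z ∧ ∀ t ∈ Icc 0 1, f (q t) = H (f z) (1 - t) := by
      intro z hz
      have h0 : f z = H (f z) (1 - 0) := by
        rw [show (1:ℝ) - 0 = 1 by norm_num]
        exact ((hH4 (f z) hz).2).symm
      exact lift_exists_s13 hf (hRc (f z) hz) (hcont _ (hRP (f z) hz)) h0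
    choose! rq hrqc hrq0 hrqf using hRex
    have hfr1 : ∀ z, f z ∈ U → f (rq z 1) = y₀ := by
      intro z hz
      have h := hrqf z hz 1 ⟨zero_le_one, le_rfl⟩
      rw [show (1:ℝ) - 1 = 0 by norm_num] at h
      rw [h]; exact (hH4 (f z) hz).1
    have hfs1 : ∀ y, y ∈ U → ∀ x : X, f x = y₀ → f (sq y x 1) = y := by
      intro y hy x hx
      rw [hsqf y hy x hx 1 ⟨zero_le_one, le_rfl⟩]; exact (hH4 y hy).2
    -- left inverse
    have hleft : ∀ z, f z ∈ U → sq (f z) (rq z 1) 1 = z := by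
      intro z hz
      have hrc : ContinuousOn (fun t => rq z (1 - t)) (Icc 0 1) := by
        refine (hrqc z hz).comp (continuous_const.sub continuous_id).continuousOn ?_
        intro t ht; exact ⟨by linarith [ht.2], by linarith [ht.1]⟩
      have hrf : ∀ t ∈ Icc (0:ℝ) 1, f (rq z (1 - t)) = H (f z) t := by
        intro t ht
        have h := hrqf z hz (1 - t) ⟨by linarith [ht.2], by linarith [ht.1]⟩
        rw [show (1:ℝ) - (1 - t) = t by ring] at h
        exact h
      have h1 : EqOn (sq (f z) (rq z 1)) (fun t => rq z (1 - t)) (Icc 0 1) := by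
        refine lift_unique_s13 hf isPreconnected_Icc
          (hsqc (f z) hz (rq z 1) (hfr1 z hz)) hrc ?_
          (left_mem_Icc.mpr zero_le_one) ?_
        · intro t ht
          rw [hsqf (f z) hz (rq z 1) (hfr1 z hz) t ht, hrf t ht]
        · rw [hsq0 (f z) hz (rq z 1) (hfr1 z hz)]
          show rq z 1 = rq z (1 - 0)
          norm_num
      have h2 := h1 (right_mem_Icc.mpr zero_le_one)
      rw [h2]
      show rq z (1 - 1) = z
      rw [show (1:ℝ) - 1 = 0 by norm_num]
      exact hrq0 z hz
    -- right inverse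
    have hright : ∀ y, y ∈ U → ∀ x : X, f x = y₀ → rq (sq y x 1) 1 = x := by
      intro y hy x hx
      have hfs : f (sq y x 1) = y := hfs1 y hy x hx
      have hsU : f (sq y x 1) ∈ U := by rw [hfs]; exact hy
      have hrc : ContinuousOn (fun t => sq y x (1 - t)) (Icc 0 1) := by
        refine (hsqc y hy x hx).comp (continuous_const.sub continuous_id).continuousOn ?_
        intro t ht; exact ⟨by linarith [ht.2], by linarith [ht.1]⟩
      have h1 : EqOn (rq (sq y x 1)) (fun t => sq y x (1 - t)) (Icc 0 1) := by
        refine lift_unique_s13 hf isPreconnected_Icc (hrqc _ hsU) hrc ?_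
          (left_mem_Icc.mpr zero_le_one) ?_
        · intro t ht
          rw [hrqf _ hsU t ht, hsqf y hy x hx (1 - t)
            ⟨by linarith [ht.2], by linarith [ht.1]⟩, hfs]
        · rw [hrq0 _ hsU]
          show sq y x 1 = sq y x (1 - 0)
          norm_num
      have h2 := h1 (right_mem_Icc.mpr zero_le_one)
      rw [h2]
      show sq y x (1 - 1) = x
      rw [show (1:ℝ) - 1 = 0 by norm_num]
      exact hsq0 y hy x hx
    -- the fiber-valued retraction
    set ρfun : X → (f ⁻¹' {y₀} : Set X) := fun z =>
      if hz : f z ∈ U then ⟨rq z 1, by rw [mem_preimage, mem_singleton_iff]; exact hfr1 z hz⟩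
      else default with hρdef
    -- joint continuity of reversed homotopy
    have hGrev : ContinuousOn (fun q : Y × ℝ => H q.1 (1 - q.2)) (U ×ˢ Icc 0 1) := by
      refine hH1.comp (continuous_fst.prodMk (continuous_const.sub continuous_snd)).continuousOn ?_
      rintro ⟨y, s⟩ ⟨hy, hs⟩
      refine ⟨hy, ?_, ?_⟩
      · show (0:ℝ) ≤ 1 - s
        linarith [hs.2]
      · show 1 - s ≤ (1:ℝ)
        linarith [hs.1]
    -- continuity of ρfun on f ⁻¹' U
    have hρcont : ContinuousOn ρfun (f ⁻¹' U) := by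
      intro z hzmem
      have hz : f z ∈ U := hzmem
      obtain ⟨N, hNo, hNy, hNU, e₀, ek, he₀f, hekf, hl0, hl1, hNall⟩ :=
        lift_param hf hU (G := fun y t => H y (1 - t)) hGrev hz (hrqc z hz)
          (fun t ht => hrqf z hz t ht)
      have hzsrc : z ∈ e₀.source := by
        have h := hl0; rwa [hrq0 z hz] at h
      have hkey : ∀ z', z' ∈ e₀.source → f z' ∈ N → rq z' 1 = ek.symm y₀ := by
        intro z' hz'e hz'N
        have hz'U : f z' ∈ U := hNU hz'N
        obtain ⟨htgt, w, hwc, hwf, hw0, hw1⟩ := hNall (f z') hz'N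
        have hw0' : w 0 = z' := by
          rw [hw0, show (1:ℝ) - 0 = 1 by norm_num, (hH4 (f z') hz'U).2, he₀f]
          exact e₀.left_inv hz'e
        have heq : EqOn (rq z') w (Icc 0 1) := by
          refine lift_unique_s13 hf isPreconnected_Icc (hrqc z' hz'U) hwc ?_
            (left_mem_Icc.mpr zero_le_one) ?_
          · intro t ht
            rw [hrqf z' hz'U t ht, hwf t ht]
          · rw [hrq0 z' hz'U, hw0']
        have h2 := heq (right_mem_Icc.mpr zero_le_one)
        rw [h2, hw1, show (1:ℝ) - 1 = 0 by norm_num, (hH4 (f z') hz'U).1]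
      have hmemN : e₀.source ∩ f ⁻¹' N ∈ 𝓝[f ⁻¹' U] z :=
        mem_nhdsWithin_of_mem_nhds
          ((e₀.open_source.inter (hNo.preimage hf.continuous)).mem_nhds ⟨hzsrc, hNy⟩)
      have hconst : ∀ z' ∈ e₀.source ∩ f ⁻¹' N, ρfun z' = ρfun z := by
        intro z' hz'
        have hz'U : f z' ∈ U := hNU hz'.2
        have h1 : rq z' 1 = ek.symm y₀ := hkey z' hz'.1 hz'.2
        have h2 : rq z 1 = ek.symm y₀ := hkey z hzsrc hNy
        have e1 : ρfun z' = ⟨rq z' 1,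
            by rw [mem_preimage, mem_singleton_iff]; exact hfr1 z' hz'U⟩ := by
          rw [hρdef]; exact dif_pos hz'U
        have e2 : ρfun z = ⟨rq z 1,
            by rw [mem_preimage, mem_singleton_iff]; exact hfr1 z hz⟩ := by
          rw [hρdef]; exact dif_pos hz
        rw [e1, e2]
        exact Subtype.ext (h1.trans h2.symm)
      refine ContinuousWithinAt.congr_of_eventuallyEq continuousWithinAt_const ?_ rfl
      filter_upwards [hmemN] with z' hz' using hconst z' hz'
    -- continuity of the inverse
    have hinv : ContinuousOn (fun q : Y × (f ⁻¹' {y₀} : Set X) => sq q.1 ↑q.2 1)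
        (U ×ˢ univ) := by
      rintro ⟨y₁, x⟩ ⟨hy₁, -⟩
      have hx : f ↑x = y₀ := x.2
      obtain ⟨N, hNo, hNy, hNU, e₀, ek, he₀f, hekf, hl0, hl1, hNall⟩ :=
        lift_param hf hU (G := fun y t => H y t) hH1 hy₁ (hsqc y₁ hy₁ ↑x hx)
          (fun t ht => hsqf y₁ hy₁ ↑x hx t ht)
      have hxe : (↑x : X) ∈ e₀.source := by
        have h := hl0; rwa [hsq0 y₁ hy₁ ↑x hx] at h
      have hkey : ∀ y ∈ N, sq y ↑x 1 = ek.symm y := by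
        intro y hyN
        have hyU : y ∈ U := hNU hyN
        obtain ⟨htgt, w, hwc, hwf, hw0, hw1⟩ := hNall y hyN
        have hw0' : w 0 = ↑x := by
          have hfx0 : e₀ ↑x = y₀ := by rw [← he₀f]; exact hx
          have hs : e₀.symm y₀ = ↑x := by
            conv_lhs => rw [← hfx0]
            exact e₀.left_inv hxe
          rw [hw0, (hH4 y hyU).1]
          exact hs
        have heq : EqOn (sq y ↑x) w (Icc 0 1) := by
          refine lift_unique_s13 hf isPreconnected_Icc (hsqc y hyU ↑x hx) hwc ?_
            (left_mem_Icc.mpr zero_le_one) ?_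
          · intro t ht
            rw [hsqf y hyU ↑x hx t ht, hwf t ht]
          · rw [hsq0 y hyU ↑x hx, hw0']
        rw [heq (right_mem_Icc.mpr zero_le_one), hw1, (hH4 y hyU).2]
      have hy₁tgt : y₁ ∈ ek.target := by
        have h := (hNall y₁ hNy).1
        rwa [(hH4 y₁ hy₁).2] at h
      have hVmem : N ×ˢ ({x} : Set (f ⁻¹' {y₀} : Set X)) ∈ 𝓝[U ×ˢ univ] (y₁, x) :=
        mem_nhdsWithin_of_mem_nhds
          ((hNo.prod (isOpen_discrete {x})).mem_nhds ⟨hNy, rfl⟩)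
      refine ContinuousWithinAt.congr_of_eventuallyEq
        (f := fun q : Y × (f ⁻¹' {y₀} : Set X) => ek.symm q.1) ?_ ?_ ?_
      · refine ContinuousAt.continuousWithinAt ?_
        have h1 : ContinuousAt (ek.symm) y₁ := by
          refine ek.symm.continuousAt ?_
          rw [OpenPartialHomeomorph.symm_source]
          exact hy₁tgt
        exact h1.comp continuous_fst.continuousAt
      · filter_upwards [hVmem] with q hq
        have h2 : q.2 = x := hq.2
        show sq q.1 ↑q.2 1 = ek.symm q.1
        rw [h2]
        exact hkey q.1 hq.1
      · exact hkey y₁ hNy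
    -- assemble the trivialization
    refine IsEvenlyCovered.of_trivialization (I := (f ⁻¹' {y₀} : Set X)) (t := {
      toFun := fun z => (f z, ρfun z),
      invFun := fun q => sq q.1 ↑q.2 1,
      source := f ⁻¹' U,
      target := U ×ˢ univ,
      map_source' := fun z hz => ⟨hz, trivial⟩,
      map_target' := ?_,
      left_inv' := ?_,
      right_inv' := ?_,
      open_source := hU.preimage hf.continuous,
      open_target := hU.prod isOpen_univ,
      continuousOn_toFun := (hf.continuous.continuousOn).prodMk hρcont,
      continuousOn_invFun := hinv,
      baseSet := U,
      open_baseSet := hU,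
      source_eq := rfl,
      target_eq := rfl,
      proj_toFun := fun z _ => rfl }) hy₀U
    · rintro ⟨y, x⟩ ⟨hy, -⟩
      show sq y ↑x 1 ∈ f ⁻¹' U
      rw [mem_preimage, hfs1 y hy ↑x x.2]
      exact hy
    · intro z hzmem
      have hz : f z ∈ U := hzmem
      show sq (f z) ↑(ρfun z) 1 = z
      have h1 : ρfun z = ⟨rq z 1, by rw [mem_preimage, mem_singleton_iff]; exact hfr1 z hz⟩ := by
        rw [hρdef]; exact dif_pos hz
      rw [h1]
      exact hleft z hz
    · rintro ⟨y, x⟩ ⟨hy, -⟩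
      have hfs : f (sq y ↑x 1) = y := hfs1 y hy ↑x x.2
      have hUU : f (sq y ↑x 1) ∈ U := by rw [hfs]; exact hy
      show (f (sq y ↑x 1), ρfun (sq y ↑x 1)) = (y, x)
      refine Prod.ext hfs ?_
      have h1 : ρfun (sq y ↑x 1) = ⟨rq (sq y ↑x 1) 1,
          by rw [mem_preimage, mem_singleton_iff]; exact hfr1 _ hUU⟩ := by
        rw [hρdef]; exact dif_pos hUU
      rw [h1]
      exact Subtype.ext (hright y hy ↑x x.2)


end helpers

/-- a local homeomorphism `f : X → Y`, with `Y` `P`-connected and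
locally `P`-contractible, is a covering projection iff it has the continuation
property for every path in `P`. -/
theorem stmt13 {X Y : Type*} [MetricSpace X] [MetricSpace Y]
    (f : X → Y) (hf : IsLocalHomeomorph f)
    (P : Set (ℝ → Y)) (hPc : PConnected P) (hPl : LocallyPContractible P) :
    IsCoveringMap f ↔ ∀ p ∈ P, ContinuationProperty f p := by
  exact ⟨fun hcov p hp => forward_dir hcov (hPc.1 p hp),
    fun hcont => reverse_dir hf hPc hPl hcont⟩
end
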